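/- arXiv:1709.09626 — 7 statements merged into one kernel-verified Lean document; each statement's English description precedes it below -/
import Mathlib

section
/- Let 1 ≤ m₀ ≤ m and 1 ≤ n₀ ≤ n. Let M be an existentially closed K_{m,n}-free incidence structure, let c_1,…,c_{m−m₀} be pairwise distinct points of M and d_1,…,d_{n−n₀} pairwise distinct lines of M such that every c_i is incident to every d_j. Let M₀ be the incidence structure whose points are the points of M not among the c_i that are incident to every d_j, whose lines are the lines of M not among the d_j that are incident to every c_i, and whose incidence relation is induced from M. Then M₀ is an existentially closed K_{m₀,n₀}-free incidence structure. -/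
open FirstOrder FirstOrder.Language

universe u v

/-- Relation symbols of the language of incidence structures: two unary symbols
(`pt` for "point", `lin` for "line") and one binary symbol (`inc` for "incidence"). -/
inductive IncRel : ℕ → Type
  | pt : IncRel 1
  | lin : IncRel 1
  | inc : IncRel 2

/-- The first-order language `{P, L, I}` of incidence structures. -/
def IncLang : FirstOrder.Language := ⟨fun _ => Empty, IncRel⟩

section
variable {M : Type u} [IncLang.Structure M]

/-- `x` is a point. -/
def ptL (x : M) : Prop := Structure.RelMap (L := IncLang) IncRel.pt ![x]

/-- `x` is a line. -/
def lnL (x : M) : Prop := Structure.RelMap (L := IncLang) IncRel.lin ![x]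

/-- `x` is incident to `y`. -/
def incL (x y : M) : Prop := Structure.RelMap (L := IncLang) IncRel.inc ![x, y]

end

/-- `M` is an incidence structure: points and lines partition the domain, and
incidence only holds between a point and a line. -/
def IsIncidenceL (M : Type u) [IncLang.Structure M] : Prop :=
  (∀ x : M, ptL x ∨ lnL x) ∧ (∀ x : M, ¬(ptL x ∧ lnL x)) ∧
    ∀ x y : M, incL x y → ptL x ∧ lnL y

/-- `M` is `K_{m,n}`-free: there are no `m` pairwise distinct points and `n` pairwise
distinct lines with every one of the points incident to every one of the lines. -/
def KFreeL (m n : ℕ) (M : Type u) [IncLang.Structure M] : Prop :=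
  ¬∃ (a : Fin m → M) (b : Fin n → M),
      Function.Injective a ∧ Function.Injective b ∧
      (∀ i, ptL (a i)) ∧ (∀ j, lnL (b j)) ∧ ∀ i j, incL (a i) (b j)

/-- `M` is an existentially closed `K_{m,n}`-free incidence structure: `M` is a
`K_{m,n}`-free incidence structure, and for every `K_{m,n}`-free incidence structure
`N` containing `M` as an induced substructure (i.e. admitting an embedding of `M`),
every existential formula `∃ ȳ φ(ā, ȳ)` (with `φ` quantifier-free and parameters `ā`
from `M`) that holds in `N` also holds in `M`. -/
def IsECL (m n : ℕ) (M : Type u) [IncLang.Structure M] : Prop :=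
  IsIncidenceL M ∧ KFreeL m n M ∧
    ∀ (N : Type u) [IncLang.Structure N], IsIncidenceL N → KFreeL m n N →
      ∀ (f : M ↪[IncLang] N) (k : ℕ) (φ : IncLang.BoundedFormula M k), φ.IsQF →
        (∃ xs : Fin k → N, φ.Realize (f : M → N) xs) →
          ∃ xs : Fin k → M, φ.Realize (id : M → M) xs

/-- The induced structure on a subset of an `IncLang`-structure (the language has no
function symbols, so every subset is closed). -/
instance subStructure {M : Type u} [IncLang.Structure M] (p : M → Prop) :
    IncLang.Structure (Subtype p) where
  funMap := fun {_} f _ => Empty.elim f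
  RelMap := fun {_} r xs => Structure.RelMap (M := M) r (fun i => (xs i : M))

/-!
`M₀` is clearly an incidence structure, and a `K_{m₀,n₀}` in `M₀` together with the `cᵢ` and
`dⱼ` would be a `K_{m,n}` in `M`.

For existential closedness, let `N ⊇ M₀` be `K_{m₀,n₀}`-free and glue `N` to `M` along `M₀`,
making every new point incident to all `dⱼ` and every new line incident to all `cᵢ`. In this
amalgam every element of `N` satisfies the quantifier-free definition of `M₀` with parameters
`cᵢ, dⱼ`, so a quantifier-free formula realised in `N` is realised in the amalgam inside `M₀`,
hence, by existential closedness of `M`, in `M` inside `M₀`.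

The amalgam is `K_{m,n}`-free. A `K_{m,n}` with both new points and new lines has at most
`m - m₀` points (the `cᵢ`) and `n - n₀` lines (the `dⱼ`) outside `N`, so it contains a
`K_{m₀,n₀}` of `N`. If it has a new point but only old lines, at least `n₀` of these lines lie in
`M₀`. In an existentially closed `K_{m,n}`-free structure any `n` lines have `m - 1` common
points (otherwise a new common point could be adjoined, and existential closedness would yield
infinitely many), so these `n₀` lines and the `dⱼ` have `m - 1` common points, at least `m₀ - 1`
of them in `M₀`; together with the new point they form a `K_{m₀,n₀}` in `N`. The remaining cases
are dual or take place in `M`.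
-/

open Function

section Structures

variable {S : Type u}

@[reducible] def incStructure (P Ln : S → Prop) (I : S → S → Prop) : IncLang.Structure S where
  funMap := fun {_} f _ => Empty.elim f
  RelMap := fun {l} r xs =>
    match l, r with
    | _, IncRel.pt => P (xs 0)
    | _, IncRel.lin => Ln (xs 0)
    | _, IncRel.inc => I (xs 0) (xs 1)

theorem comp_vecCons_one {α β : Type*} (F : α → β) (x : α) : F ∘ ![x] = ![F x] :=
  (FinVec.etaExpand_eq _).symm

theorem comp_vecCons_two {α β : Type*} (F : α → β) (x y : α) : F ∘ ![x, y] = ![F x, F y] :=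
  (FinVec.etaExpand_eq _).symm

variable {M : Type u} [IncLang.Structure M] {p : M → Prop}

@[simp] theorem ptL_subtype (x : Subtype p) : ptL x ↔ ptL (x : M) := by
  unfold ptL; rw [← comp_vecCons_one]; rfl

@[simp] theorem lnL_subtype (x : Subtype p) : lnL x ↔ lnL (x : M) := by
  unfold lnL; rw [← comp_vecCons_one]; rfl

@[simp] theorem incL_subtype (x y : Subtype p) : incL x y ↔ incL (x : M) (y : M) := by
  unfold incL; rw [← comp_vecCons_two]; rfl

variable {A B : Type u} [IncLang.Structure A] [IncLang.Structure B]

@[simp] theorem ptL_embedding (F : A ↪[IncLang] B) (x : A) : ptL (F x) ↔ ptL x := by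
  unfold ptL; rw [← comp_vecCons_one]; exact F.map_rel _ _

@[simp] theorem lnL_embedding (F : A ↪[IncLang] B) (x : A) : lnL (F x) ↔ lnL x := by
  unfold lnL; rw [← comp_vecCons_one]; exact F.map_rel _ _

@[simp] theorem incL_embedding (F : A ↪[IncLang] B) (x y : A) :
    incL (F x) (F y) ↔ incL x y := by
  unfold incL; rw [← comp_vecCons_two]; exact F.map_rel _ _

def incEmbedding (F : A → B) (hF : Injective F) (hpt : ∀ x, ptL (F x) ↔ ptL x)
    (hln : ∀ x, lnL (F x) ↔ lnL x) (hinc : ∀ x y, incL (F x) (F y) ↔ incL x y) :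
    A ↪[IncLang] B where
  toFun := F
  inj' := hF
  map_fun' := fun {_} f => Empty.elim f
  map_rel' := fun {l} r xs =>
    match l, r with
    | _, IncRel.pt => by
      obtain ⟨x, rfl⟩ : ∃ x, xs = ![x] := ⟨_, (FinVec.etaExpand_eq xs).symm⟩
      rw [comp_vecCons_one]; exact hpt x
    | _, IncRel.lin => by
      obtain ⟨x, rfl⟩ : ∃ x, xs = ![x] := ⟨_, (FinVec.etaExpand_eq xs).symm⟩
      rw [comp_vecCons_one]; exact hln x
    | _, IncRel.inc => by
      obtain ⟨x, y, rfl⟩ : ∃ x y, xs = ![x, y] := ⟨_, _, (FinVec.etaExpand_eq xs).symm⟩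
      rw [comp_vecCons_two]; exact hinc x y

def subtypeEmbedding (p : M → Prop) : Subtype p ↪[IncLang] M :=
  incEmbedding Subtype.val Subtype.val_injective (by simp) (by simp) (by simp)

end Structures

section Bicliques

variable {M : Type u} [IncLang.Structure M] {p q : ℕ}

def IsBiclique (a : Fin p → M) (b : Fin q → M) : Prop :=
  Injective a ∧ Injective b ∧ (∀ i, ptL (a i)) ∧ (∀ j, lnL (b j)) ∧ ∀ i j, incL (a i) (b j)

theorem KFreeL.not_isBiclique (h : KFreeL p q M) {a : Fin p → M} {b : Fin q → M} :
    ¬IsBiclique a b :=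
  fun hab => h ⟨a, b, hab⟩

theorem IsBiclique.comp {p' q' : ℕ} {a : Fin p → M} {b : Fin q → M} (h : IsBiclique a b)
    (e : Fin p' ↪ Fin p) (e' : Fin q' ↪ Fin q) : IsBiclique (a ∘ e) (b ∘ e') :=
  ⟨h.1.comp e.injective, h.2.1.comp e'.injective, fun _ => h.2.2.1 _, fun _ => h.2.2.2.1 _,
    fun _ _ => h.2.2.2.2 _ _⟩

theorem IsBiclique.map {N : Type u} [IncLang.Structure N] (F : M ↪[IncLang] N)
    {a : Fin p → M} {b : Fin q → M} (h : IsBiclique a b) : IsBiclique (F ∘ a) (F ∘ b) := by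
  simpa [IsBiclique, F.injective.of_comp_iff] using h

theorem IsBiclique.of_embedding {N : Type u} [IncLang.Structure N] (F : M ↪[IncLang] N)
    {a : Fin p → N} {b : Fin q → N} (h : IsBiclique a b) {a' : Fin p → M} {b' : Fin q → M}
    (ha : ∀ i, F (a' i) = a i) (hb : ∀ j, F (b' j) = b j) : IsBiclique a' b' := by
  obtain rfl : a = F ∘ a' := (funext ha).symm
  obtain rfl : b = F ∘ b' := (funext hb).symm
  simpa [IsBiclique, F.injective.of_comp_iff] using h

theorem IsBiclique.append {p' q' : ℕ} {a : Fin p → M} {a' : Fin p' → M} {b : Fin q → M}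
    {b' : Fin q' → M} (h : IsBiclique a b) (h' : IsBiclique a' b')
    (hab' : ∀ i j, incL (a i) (b' j)) (ha'b : ∀ i j, incL (a' i) (b j))
    (ha : ∀ i j, a i ≠ a' j) (hb : ∀ i j, b i ≠ b' j) :
    IsBiclique (Fin.append a a') (Fin.append b b') := by
  refine ⟨Fin.append_injective_iff.2 ⟨h.1, h'.1, ha⟩, Fin.append_injective_iff.2 ⟨h.2.1, h'.2.1, hb⟩,
    ?_, ?_, ?_⟩ <;>
    simp only [Fin.forall_fin_add, Fin.append_left, Fin.append_right]
  exacts [⟨h.2.2.1, h'.2.2.1⟩, ⟨h.2.2.2.1, h'.2.2.2.1⟩,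
    ⟨fun i => ⟨h.2.2.2.2 i, hab' i⟩, fun i => ⟨ha'b i, h'.2.2.2.2 i⟩⟩]

theorem isBiclique_cons_left {x : M} {a : Fin p → M} {b : Fin q → M} :
    IsBiclique (Fin.cons x a : Fin (p + 1) → M) b ↔
      x ∉ Set.range a ∧ ptL x ∧ (∀ j, incL x (b j)) ∧ IsBiclique a b := by
  simp only [IsBiclique, Fin.cons_injective_iff, Fin.forall_fin_succ, Fin.cons_zero, Fin.cons_succ]
  tauto

theorem isBiclique_cons_right {y : M} {a : Fin p → M} {b : Fin q → M} :
    IsBiclique a (Fin.cons y b : Fin (q + 1) → M) ↔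
      y ∉ Set.range b ∧ lnL y ∧ (∀ i, incL (a i) y) ∧ IsBiclique a b := by
  simp only [IsBiclique, Fin.cons_injective_iff, Fin.forall_fin_succ, Fin.cons_zero, Fin.cons_succ,
    forall_and]
  tauto

end Bicliques

theorem exists_embedding_of_forall_or_mem_range {X : Type*} {p r k : ℕ} {a : Fin p → X}
    (ha : Injective a) {P : X → Prop} {c : Fin r → X}
    (h : ∀ i, P (a i) ∨ a i ∈ Set.range c) (hk : k + r ≤ p) :
    ∃ e : Fin k ↪ Fin p, ∀ i, P (a (e i)) := by
  classical
  set s := Finset.univ.filter fun i => P (a i) with hs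
  have hbad : (Finset.univ.filter fun i => ¬P (a i)).card ≤ r :=
    calc _ ≤ (Finset.univ.image c).card :=
          Finset.card_le_card_of_injOn a (fun i hi => by
            obtain ⟨j, hj⟩ := (h i).resolve_left (Finset.mem_filter.1 hi).2
            simp [← hj]) ha.injOn
      _ ≤ r := Finset.card_image_le.trans (by simp)
  have hks : k ≤ s.card := by
    have := Finset.card_filter_add_card_filter_not (s := Finset.univ) (fun i => P (a i))
    simp only [Finset.card_univ, Fintype.card_fin, ← hs] at this
    omega
  refine ⟨(Fin.castLEEmb hks).trans (s.equivFin.symm.toEmbedding.trans (Embedding.subtype _)),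
    fun i => ?_⟩
  exact (Finset.mem_filter.1 (s.equivFin.symm _).2).2

section Link

variable {M : Type u} [IncLang.Structure M] {r s : ℕ}

/-- `Subtype (InLink c d)` is the structure `M₀` of the statement. -/
def InLink (c : Fin r → M) (d : Fin s → M) (x : M) : Prop :=
  (ptL x ∧ (∀ i, x ≠ c i) ∧ ∀ j, incL x (d j)) ∨ (lnL x ∧ (∀ j, x ≠ d j) ∧ ∀ i, incL (c i) x)

theorem inLink_embedding_iff {N : Type u} [IncLang.Structure N] (F : M ↪[IncLang] N)
    {c : Fin r → M} {d : Fin s → M} {x : M} :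
    InLink (F ∘ c) (F ∘ d) (F x) ↔ InLink c d x := by
  simp [InLink, F.injective.ne_iff]

theorem InLink.of_ptL (hM : IsIncidenceL M) {c : Fin r → M} {d : Fin s → M} {x : M}
    (h : InLink c d x) (hx : ptL x) : (∀ i, x ≠ c i) ∧ ∀ j, incL x (d j) :=
  h.elim (·.2) fun h' => (hM.2.1 x ⟨hx, h'.1⟩).elim

theorem InLink.of_lnL (hM : IsIncidenceL M) {c : Fin r → M} {d : Fin s → M} {x : M}
    (h : InLink c d x) (hx : lnL x) : (∀ j, x ≠ d j) ∧ ∀ i, incL (c i) x :=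
  h.elim (fun h' => (hM.2.1 x ⟨h'.1, hx⟩).elim) (·.2)

theorem not_inLink_apply_left (hM : IsIncidenceL M) {c : Fin r → M} (hcp : ∀ i, ptL (c i))
    (d : Fin s → M) (i : Fin r) : ¬InLink c d (c i) :=
  fun h => (h.of_ptL hM (hcp i)).1 i rfl

theorem not_inLink_apply_right (hM : IsIncidenceL M) (c : Fin r → M) {d : Fin s → M}
    (hdl : ∀ j, lnL (d j)) (j : Fin s) : ¬InLink c d (d j) :=
  fun h => (h.of_lnL hM (hdl j)).1 j rfl

end Link

namespace FirstOrder.Language.BoundedFormula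

variable {L : Language} {α β : Type*} {n : ℕ}

theorem isQF_iInf {ι : Type*} [Finite ι] {f : ι → L.BoundedFormula α n} (h : ∀ i, (f i).IsQF) :
    (iInf f).IsQF := by
  unfold iInf
  dsimp only
  generalize (@Finset.univ ι (Fintype.ofFinite ι)).toList = l
  induction l with
  | nil => exact IsQF.top
  | cons i l ih => exact (h i).inf ih

theorem IsQF.subst {φ : L.BoundedFormula α n} (h : φ.IsQF) (tf : α → L.Term β) :
    (φ.subst tf).IsQF := by
  induction h with
  | falsum => exact isQF_bot
  | of_isAtomic h =>
    cases h with
    | equal => exact (IsAtomic.equal _ _).isQF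
    | rel => exact (IsAtomic.rel _ _).isQF
  | imp _ _ h₁ h₂ => exact h₁.imp h₂

end FirstOrder.Language.BoundedFormula

section Formulas

open BoundedFormula

variable {α : Type u} {k r s : ℕ}

def ptF (t : IncLang.Term (α ⊕ Fin k)) : IncLang.BoundedFormula α k :=
  Relations.boundedFormula₁ (IncRel.pt : IncLang.Relations 1) t

def lnF (t : IncLang.Term (α ⊕ Fin k)) : IncLang.BoundedFormula α k :=
  Relations.boundedFormula₁ (IncRel.lin : IncLang.Relations 1) t

def incF (t₁ t₂ : IncLang.Term (α ⊕ Fin k)) : IncLang.BoundedFormula α k :=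
  Relations.boundedFormula₂ (IncRel.inc : IncLang.Relations 2) t₁ t₂

def neF (t₁ t₂ : IncLang.Term (α ⊕ Fin k)) : IncLang.BoundedFormula α k :=
  (t₁.bdEqual t₂).not

noncomputable def linkF (c : Fin r → α) (d : Fin s → α) (t : IncLang.Term (α ⊕ Fin k)) :
    IncLang.BoundedFormula α k :=
  (ptF t ⊓ iInf (fun i => neF t (.var (.inl (c i)))) ⊓ iInf fun j => incF t (.var (.inl (d j)))) ⊔
    (lnF t ⊓ iInf (fun j => neF t (.var (.inl (d j)))) ⊓ iInf fun i => incF (.var (.inl (c i))) t)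

theorem isQF_ptF (t : IncLang.Term (α ⊕ Fin k)) : (ptF t).IsQF := (IsAtomic.rel _ _).isQF

theorem isQF_lnF (t : IncLang.Term (α ⊕ Fin k)) : (lnF t).IsQF := (IsAtomic.rel _ _).isQF

theorem isQF_incF (t₁ t₂ : IncLang.Term (α ⊕ Fin k)) : (incF t₁ t₂).IsQF :=
  (IsAtomic.rel _ _).isQF

theorem isQF_neF (t₁ t₂ : IncLang.Term (α ⊕ Fin k)) : (neF t₁ t₂).IsQF :=
  (IsAtomic.equal _ _).isQF.not

theorem isQF_linkF (c : Fin r → α) (d : Fin s → α) (t : IncLang.Term (α ⊕ Fin k)) :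
    (linkF c d t).IsQF :=
  (((isQF_ptF t).inf (isQF_iInf fun _ => isQF_neF _ _)).inf (isQF_iInf fun _ => isQF_incF _ _)).sup
    (((isQF_lnF t).inf (isQF_iInf fun _ => isQF_neF _ _)).inf (isQF_iInf fun _ => isQF_incF _ _))

variable {T : Type u} [IncLang.Structure T] {v : α → T} {xs : Fin k → T}

@[simp] theorem realize_ptF {t : IncLang.Term (α ⊕ Fin k)} :
    (ptF t).Realize v xs ↔ ptL (t.realize (Sum.elim v xs)) :=
  realize_rel₁

@[simp] theorem realize_lnF {t : IncLang.Term (α ⊕ Fin k)} :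
    (lnF t).Realize v xs ↔ lnL (t.realize (Sum.elim v xs)) :=
  realize_rel₁

@[simp] theorem realize_incF {t₁ t₂ : IncLang.Term (α ⊕ Fin k)} :
    (incF t₁ t₂).Realize v xs ↔
      incL (t₁.realize (Sum.elim v xs)) (t₂.realize (Sum.elim v xs)) :=
  realize_rel₂

@[simp] theorem realize_neF {t₁ t₂ : IncLang.Term (α ⊕ Fin k)} :
    (neF t₁ t₂).Realize v xs ↔ t₁.realize (Sum.elim v xs) ≠ t₂.realize (Sum.elim v xs) := by
  simp [neF]

@[simp] theorem realize_linkF {c : Fin r → α} {d : Fin s → α} {t : IncLang.Term (α ⊕ Fin k)} :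
    (linkF c d t).Realize v xs ↔ InLink (v ∘ c) (v ∘ d) (t.realize (Sum.elim v xs)) := by
  simp [linkF, InLink, and_assoc]

end Formulas

open BoundedFormula in
theorem IsECL.infinite_setOf_realize {m n : ℕ} {M : Type u} [IncLang.Structure M]
    (hM : IsECL m n M) {E : Type u} [IncLang.Structure E] (hE : IsIncidenceL E)
    (hEf : KFreeL m n E) (ι : M ↪[IncLang] E) {ψ : IncLang.BoundedFormula M 1} (hψ : ψ.IsQF)
    {y : E} (hy : y ∉ Set.range ι) (hψy : ψ.Realize ι ![y]) :
    {x : M | ψ.Realize id ![x]}.Infinite := by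
  intro hfin
  have := hfin.to_subtype
  obtain ⟨xs, hxs⟩ := hM.2.2 E hE hEf ι 1
    (ψ ⊓ iInf fun x : {x : M | ψ.Realize id ![x]} => neF (.var (.inr 0)) (.var (.inl x.1)))
    (hψ.inf (isQF_iInf fun _ => isQF_neF _ _))
    ⟨![y], by simpa [hψy] using fun x _ hx => hy ⟨x, hx.symm⟩⟩
  rw [← FinVec.etaExpand_eq xs] at hxs
  simp only [realize_inf, realize_iInf, realize_neF] at hxs
  exact hxs.2 ⟨xs 0, hxs.1⟩ rfl

section OnePointExtension

variable {M : Type u} [IncLang.Structure M] {m n : ℕ}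

def WithPointOn (_L : Finset M) : Type u := Option M

def withPointOnInc (L : Finset M) : Option M → Option M → Prop
  | some x, some y => incL x y
  | none, some y => y ∈ L
  | _, none => False

instance (L : Finset M) : IncLang.Structure (WithPointOn L) :=
  incStructure (fun o => o.elim True ptL) (fun o => o.elim False lnL) (withPointOnInc L)

def WithPointOn.embedding (L : Finset M) : M ↪[IncLang] WithPointOn L :=
  incEmbedding some (Option.some_injective M) (fun _ => Iff.rfl) (fun _ => Iff.rfl)
    (fun _ _ => Iff.rfl)

theorem WithPointOn.isIncidenceL {L : Finset M} (hM : IsIncidenceL M) (hL : ∀ y ∈ L, lnL y) :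
    IsIncidenceL (WithPointOn L) := by
  refine ⟨?_, ?_, ?_⟩
  · rintro (_ | x)
    exacts [Or.inl trivial, hM.1 x]
  · rintro (_ | x)
    exacts [fun h => h.2, hM.2.1 x]
  · rintro (_ | x) (_ | y) h
    exacts [h.elim, ⟨trivial, hL y h⟩, h.elim, hM.2.2 x y h]

theorem WithPointOn.kFreeL {L : Finset M} (hM : KFreeL m n M) (hL : L.card ≤ n)
    (hno : ¬∃ w : Fin (m - 1) → M, Injective w ∧ ∀ i, ptL (w i) ∧ ∀ y ∈ L, incL (w i) y) :
    KFreeL m n (WithPointOn L) := by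
  classical
  rintro ⟨a, b, (hab : IsBiclique a b)⟩
  have ⟨ha, hb, hpt, hln, hinc⟩ := hab
  choose b' hb' using fun j => Option.ne_none_iff_exists'.1
    (fun h => by have := hln j; rw [h] at this; exact this : (b j : Option M) ≠ none)
  have hb'inj : Injective b' := fun j j' h => hb (by rw [hb', hb', h])
  by_cases hnew : ∃ i, a i = none
  · obtain ⟨i₀, hi₀⟩ := hnew
    -- the lines of a `K_{m,n}` through the new point exhaust `L`, so its other points are common
    -- points of `L`
    have hbL : Finset.univ.image b' = L := by
      refine Finset.eq_of_subset_of_card_le ?_ ?_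
      · simp only [Finset.image_subset_iff, Finset.mem_univ, true_implies]
        intro j
        have := hinc i₀ j; rwa [hi₀, hb'] at this
      · rw [Finset.card_image_of_injective _ hb'inj]
        simpa using hL
    obtain ⟨e, he⟩ := exists_embedding_of_forall_or_mem_range (k := m - 1) ha
      (P := fun o => o ≠ none) (c := fun _ : Fin 1 => none)
      (fun i => (eq_or_ne (a i) none).symm.imp id fun h => ⟨0, h.symm⟩)
      (by have := i₀.isLt; omega)
    choose w hw using fun i => Option.ne_none_iff_exists'.1 (he i)
    refine hno ⟨w, fun i i' h => e.injective (ha (by rw [hw, hw, h])), fun i => ⟨?_, ?_⟩⟩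
    · have := hpt (e i); rwa [hw] at this
    · rw [← hbL]
      simp only [Finset.mem_image, Finset.mem_univ, true_and, forall_exists_index]
      rintro _ j rfl
      have := hinc (e i) j; rwa [hw, hb'] at this
  · simp only [not_exists] at hnew
    choose a' ha' using fun i => Option.ne_none_iff_exists'.1 (hnew i)
    exact hM.not_isBiclique (hab.of_embedding (WithPointOn.embedding L) (fun i => (ha' i).symm)
      fun j => (hb' j).symm)

end OnePointExtension

section OneLineExtension

variable {M : Type u} [IncLang.Structure M] {m n : ℕ}

def WithLineThrough (_P : Finset M) : Type u := Option M

def withLineThroughInc (P : Finset M) : Option M → Option M → Prop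
  | some x, some y => incL x y
  | some x, none => x ∈ P
  | none, _ => False

instance (P : Finset M) : IncLang.Structure (WithLineThrough P) :=
  incStructure (fun o => o.elim False ptL) (fun o => o.elim True lnL) (withLineThroughInc P)

def WithLineThrough.embedding (P : Finset M) : M ↪[IncLang] WithLineThrough P :=
  incEmbedding some (Option.some_injective M) (fun _ => Iff.rfl) (fun _ => Iff.rfl)
    (fun _ _ => Iff.rfl)

theorem WithLineThrough.isIncidenceL {P : Finset M} (hM : IsIncidenceL M)
    (hP : ∀ x ∈ P, ptL x) : IsIncidenceL (WithLineThrough P) := by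
  refine ⟨?_, ?_, ?_⟩
  · rintro (_ | x)
    exacts [Or.inr trivial, hM.1 x]
  · rintro (_ | x)
    exacts [fun h => h.1, hM.2.1 x]
  · rintro (_ | x) (_ | y) h
    exacts [h.elim, h.elim, ⟨hP x h, trivial⟩, hM.2.2 x y h]

theorem WithLineThrough.kFreeL {P : Finset M} (hM : KFreeL m n M) (hP : P.card ≤ m)
    (hno : ¬∃ w : Fin (n - 1) → M, Injective w ∧ ∀ j, lnL (w j) ∧ ∀ x ∈ P, incL x (w j)) :
    KFreeL m n (WithLineThrough P) := by
  classical
  rintro ⟨a, b, (hab : IsBiclique a b)⟩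
  have ⟨ha, hb, hpt, hln, hinc⟩ := hab
  choose a' ha' using fun i => Option.ne_none_iff_exists'.1
    (fun h => by have := hpt i; rw [h] at this; exact this : (a i : Option M) ≠ none)
  have ha'inj : Injective a' := fun i i' h => ha (by rw [ha', ha', h])
  by_cases hnew : ∃ j, b j = none
  · obtain ⟨j₀, hj₀⟩ := hnew
    have haP : Finset.univ.image a' = P := by
      refine Finset.eq_of_subset_of_card_le ?_ ?_
      · simp only [Finset.image_subset_iff, Finset.mem_univ, true_implies]
        intro i
        have := hinc i j₀; rwa [hj₀, ha'] at this
      · rw [Finset.card_image_of_injective _ ha'inj]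
        simpa using hP
    obtain ⟨e, he⟩ := exists_embedding_of_forall_or_mem_range (k := n - 1) hb
      (P := fun o => o ≠ none) (c := fun _ : Fin 1 => none)
      (fun j => (eq_or_ne (b j) none).symm.imp id fun h => ⟨0, h.symm⟩)
      (by have := j₀.isLt; omega)
    choose w hw using fun j => Option.ne_none_iff_exists'.1 (he j)
    refine hno ⟨w, fun j j' h => e.injective (hb (by rw [hw, hw, h])), fun j => ⟨?_, ?_⟩⟩
    · have := hln (e j); rwa [hw] at this
    · rw [← haP]
      simp only [Finset.mem_image, Finset.mem_univ, true_and, forall_exists_index]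
      rintro _ i rfl
      have := hinc i (e j); rwa [hw, ha'] at this
  · simp only [not_exists] at hnew
    choose b' hb' using fun j => Option.ne_none_iff_exists'.1 (hnew j)
    exact hM.not_isBiclique (hab.of_embedding (WithLineThrough.embedding P) (fun i => (ha' i).symm)
      fun j => (hb' j).symm)

end OneLineExtension

section Abundance

open BoundedFormula

variable {M : Type u} [IncLang.Structure M] {m n : ℕ}

theorem IsECL.exists_points_on_lines (hM : IsECL m n M) {L : Finset M} (hL : L.card ≤ n)
    (hLl : ∀ y ∈ L, lnL y) :
    ∃ w : Fin (m - 1) → M, Injective w ∧ ∀ i, ptL (w i) ∧ ∀ y ∈ L, incL (w i) y := by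
  by_contra hno
  have hinf := hM.infinite_setOf_realize (WithPointOn.isIncidenceL hM.1 hLl)
    (WithPointOn.kFreeL hM.2.1 hL hno) (WithPointOn.embedding L)
    (ψ := ptF (.var (.inr 0)) ⊓ iInf fun y : L => incF (.var (.inr 0)) (.var (.inl y.1)))
    ((isQF_ptF _).inf (isQF_iInf fun _ => isQF_incF _ _)) (y := none)
    (by rintro ⟨x, hx⟩; cases hx) (by simpa using ⟨trivial, fun _ hy => hy⟩)
  simp only [realize_inf, realize_ptF, realize_iInf, realize_incF] at hinf
  let e := hinf.natEmbedding
  exact hno ⟨fun i => e i, fun i j h => Fin.val_injective (e.injective (Subtype.ext h)),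
    fun i => by simpa using (e i).2⟩

theorem IsECL.exists_lines_through_points (hM : IsECL m n M) {P : Finset M} (hP : P.card ≤ m)
    (hPp : ∀ x ∈ P, ptL x) :
    ∃ w : Fin (n - 1) → M, Injective w ∧ ∀ j, lnL (w j) ∧ ∀ x ∈ P, incL x (w j) := by
  by_contra hno
  have hinf := hM.infinite_setOf_realize (WithLineThrough.isIncidenceL hM.1 hPp)
    (WithLineThrough.kFreeL hM.2.1 hP hno) (WithLineThrough.embedding P)
    (ψ := lnF (.var (.inr 0)) ⊓ iInf fun x : P => incF (.var (.inl x.1)) (.var (.inr 0)))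
    ((isQF_lnF _).inf (isQF_iInf fun _ => isQF_incF _ _)) (y := none)
    (by rintro ⟨x, hx⟩; cases hx) (by simpa using ⟨trivial, fun _ hx => hx⟩)
  simp only [realize_inf, realize_lnF, realize_iInf, realize_incF] at hinf
  let e := hinf.natEmbedding
  exact hno ⟨fun j => e j, fun i j h => Fin.val_injective (e.injective (Subtype.ext h)),
    fun j => by simpa using (e j).2⟩

end Abundance

section LinkAbundance

variable {M : Type u} [IncLang.Structure M] {m n m₀ n₀ r s : ℕ} {c : Fin r → M} {d : Fin s → M}

theorem IsECL.exists_link_points_on_lines (hM : IsECL m n M) (hdl : ∀ j, lnL (d j))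
    (hm₀ : 1 ≤ m₀) (hr : m₀ + r ≤ m) (hs : n₀ + s ≤ n) (ℓ : Fin n₀ → Subtype (InLink c d))
    (hℓ : ∀ k, lnL (ℓ k)) :
    ∃ w : Fin (m₀ - 1) → Subtype (InLink c d),
      Injective w ∧ ∀ i, ptL (w i) ∧ ∀ k, incL (w i) (ℓ k) := by
  classical
  obtain ⟨w, hw, hwL⟩ := hM.exists_points_on_lines
    (L := Finset.univ.image (fun k => (ℓ k : M)) ∪ Finset.univ.image d)
    ((Finset.card_union_le _ _).trans (by grw [Finset.card_image_le, Finset.card_image_le]; simpa))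
    (by simpa [or_imp, forall_and] using ⟨fun k => (lnL_subtype _).1 (hℓ k), hdl⟩)
  simp only [Finset.mem_union, Finset.mem_image, Finset.mem_univ, true_and, or_imp,
    forall_and, forall_exists_index, forall_apply_eq_imp_iff] at hwL
  obtain ⟨hwp, hwℓ, hwd⟩ := hwL
  obtain ⟨e, he⟩ := exists_embedding_of_forall_or_mem_range (k := m₀ - 1) hw (P := InLink c d)
    (c := c) (fun i => (em (w i ∈ Set.range c)).symm.imp
      (fun h => Or.inl ⟨hwp i, fun j hj => h ⟨j, hj.symm⟩, hwd i⟩) id) (by omega)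
  exact ⟨fun i => ⟨w (e i), he i⟩, fun i i' h => e.injective (hw (congrArg Subtype.val h)),
    fun i => ⟨by simpa using hwp _, fun k => by simpa using hwℓ _ k⟩⟩

theorem IsECL.exists_link_lines_through_points (hM : IsECL m n M) (hcp : ∀ i, ptL (c i))
    (hn₀ : 1 ≤ n₀) (hr : m₀ + r ≤ m) (hs : n₀ + s ≤ n) (P : Fin m₀ → Subtype (InLink c d))
    (hP : ∀ i, ptL (P i)) :
    ∃ w : Fin (n₀ - 1) → Subtype (InLink c d),
      Injective w ∧ ∀ j, lnL (w j) ∧ ∀ i, incL (P i) (w j) := by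
  classical
  obtain ⟨w, hw, hwP⟩ := hM.exists_lines_through_points
    (P := Finset.univ.image (fun i => (P i : M)) ∪ Finset.univ.image c)
    ((Finset.card_union_le _ _).trans (by grw [Finset.card_image_le, Finset.card_image_le]; simpa))
    (by simpa [or_imp, forall_and] using ⟨fun i => (ptL_subtype _).1 (hP i), hcp⟩)
  simp only [Finset.mem_union, Finset.mem_image, Finset.mem_univ, true_and, or_imp,
    forall_and, forall_exists_index, forall_apply_eq_imp_iff] at hwP
  obtain ⟨hwl, hwP, hwc⟩ := hwP
  obtain ⟨e, he⟩ := exists_embedding_of_forall_or_mem_range (k := n₀ - 1) hw (P := InLink c d)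
    (c := d) (fun j => (em (w j ∈ Set.range d)).symm.imp
      (fun h => Or.inr ⟨hwl j, fun i hi => h ⟨i, hi.symm⟩, hwc j⟩) id) (by omega)
  exact ⟨fun j => ⟨w (e j), he j⟩, fun j j' h => e.injective (hw (congrArg Subtype.val h)),
    fun j => ⟨by simpa using hwl _, fun i => by simpa using hwP _ i⟩⟩

end LinkAbundance

section Amalgam

variable {M : Type u} [IncLang.Structure M] {r s : ℕ} {c : Fin r → M} {d : Fin s → M}
  {N : Type u} [IncLang.Structure N] (f : Subtype (InLink c d) ↪[IncLang] N)

abbrev Amalgam : Type u := M ⊕ {y : N // y ∉ Set.range f}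

open Classical in
def amalgamInc : M ⊕ {y : N // y ∉ Set.range f} → M ⊕ {y : N // y ∉ Set.range f} → Prop
  | .inl x, .inl x' => incL x x'
  | .inl x, .inr y => if h : InLink c d x then incL (f ⟨x, h⟩) y.1 else x ∈ Set.range c ∧ lnL y.1
  | .inr y, .inl x => if h : InLink c d x then incL y.1 (f ⟨x, h⟩) else x ∈ Set.range d ∧ ptL y.1
  | .inr y, .inr y' => incL y.1 y'.1

instance : IncLang.Structure (Amalgam f) :=
  incStructure (Sum.elim ptL fun y => ptL y.1) (Sum.elim lnL fun y => lnL y.1) (amalgamInc f)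

namespace Amalgam

def inl : M ↪[IncLang] Amalgam f :=
  incEmbedding Sum.inl Sum.inl_injective (fun _ => Iff.rfl) (fun _ => Iff.rfl) (fun _ _ => Iff.rfl)

open Classical in
noncomputable def ofN (y : N) : Amalgam f :=
  if hy : y ∈ Set.range f then Sum.inl ((Equiv.ofInjective f f.injective).symm ⟨y, hy⟩ : M)
  else Sum.inr ⟨y, hy⟩

variable {f}

theorem ofN_apply (z : Subtype (InLink c d)) : ofN f (f z) = Sum.inl z.1 := by
  rw [ofN, dif_pos ⟨z, rfl⟩, Equiv.ofInjective_symm_apply]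

theorem ofN_of_notMem {y : N} (hy : y ∉ Set.range f) : ofN f y = Sum.inr ⟨y, hy⟩ :=
  dif_neg hy

theorem ofN_injective : Injective (ofN f) := by
  intro y y' h
  rcases em (y ∈ Set.range f) with ⟨z, rfl⟩ | hy <;>
    rcases em (y' ∈ Set.range f) with ⟨z', rfl⟩ | hy'
  · simp only [ofN_apply, Sum.inl.injEq] at h
    rw [Subtype.ext h]
  · simp [ofN_apply, ofN_of_notMem hy'] at h
  · simp [ofN_apply, ofN_of_notMem hy] at h
  · simpa [ofN_of_notMem hy, ofN_of_notMem hy'] using h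

theorem ptL_ofN (y : N) : ptL (ofN f y) ↔ ptL y := by
  rcases em (y ∈ Set.range f) with ⟨z, rfl⟩ | hy
  · rw [ofN_apply, ptL_embedding, ptL_subtype]; rfl
  · rw [ofN_of_notMem hy]; rfl

theorem lnL_ofN (y : N) : lnL (ofN f y) ↔ lnL y := by
  rcases em (y ∈ Set.range f) with ⟨z, rfl⟩ | hy
  · rw [ofN_apply, lnL_embedding, lnL_subtype]; rfl
  · rw [ofN_of_notMem hy]; rfl

theorem incL_ofN (y y' : N) : incL (ofN f y) (ofN f y') ↔ incL y y' := by
  rcases em (y ∈ Set.range f) with ⟨z, rfl⟩ | hy <;>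
    rcases em (y' ∈ Set.range f) with ⟨z', rfl⟩ | hy'
  · rw [ofN_apply, ofN_apply, incL_embedding, incL_subtype]; rfl
  · rw [ofN_apply, ofN_of_notMem hy']
    exact Iff.of_eq (dif_pos z.2)
  · rw [ofN_apply, ofN_of_notMem hy]
    exact Iff.of_eq (dif_pos z'.2)
  · rw [ofN_of_notMem hy, ofN_of_notMem hy']; rfl

variable (f) in
noncomputable def embN : N ↪[IncLang] Amalgam f :=
  incEmbedding (ofN f) ofN_injective ptL_ofN lnL_ofN incL_ofN

theorem embN_apply (z : Subtype (InLink c d)) : embN f (f z) = inl f z.1 :=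
  ofN_apply z

theorem embN_of_notMem {y : N} (hy : y ∉ Set.range f) : embN f y = Sum.inr ⟨y, hy⟩ :=
  ofN_of_notMem hy

theorem inLink_or_mem_range_c {x : M} {y : {y : N // y ∉ Set.range f}}
    (h : incL (Sum.inl x : Amalgam f) (Sum.inr y)) : InLink c d x ∨ x ∈ Set.range c := by
  by_cases hx : InLink c d x
  exacts [Or.inl hx, Or.inr ((dif_neg hx).mp h).1]

theorem inLink_or_mem_range_d {x : M} {y : {y : N // y ∉ Set.range f}}
    (h : incL (Sum.inr y : Amalgam f) (Sum.inl x)) : InLink c d x ∨ x ∈ Set.range d := by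
  by_cases hx : InLink c d x
  exacts [Or.inl hx, Or.inr ((dif_neg hx).mp h).1]

theorem mem_range_embN_or_of_incL_inr {z : Amalgam f} {y : {y : N // y ∉ Set.range f}}
    (h : incL z (Sum.inr y)) : z ∈ Set.range (embN f) ∨ z ∈ Set.range (inl f ∘ c) := by
  rcases z with x | y'
  · refine (inLink_or_mem_range_c h).imp (fun hx => ⟨f ⟨x, hx⟩, embN_apply _⟩) ?_
    rintro ⟨i, rfl⟩
    exact ⟨i, rfl⟩
  · exact Or.inl ⟨y', embN_of_notMem y'.2⟩

theorem mem_range_embN_or_of_inr_incL {z : Amalgam f} {y : {y : N // y ∉ Set.range f}}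
    (h : incL (Sum.inr y) z) : z ∈ Set.range (embN f) ∨ z ∈ Set.range (inl f ∘ d) := by
  rcases z with x | y'
  · refine (inLink_or_mem_range_d h).imp (fun hx => ⟨f ⟨x, hx⟩, embN_apply _⟩) ?_
    rintro ⟨j, rfl⟩
    exact ⟨j, rfl⟩
  · exact Or.inl ⟨y', embN_of_notMem y'.2⟩

theorem isIncidenceL (hM : IsIncidenceL M) (hN : IsIncidenceL N) (hcp : ∀ i, ptL (c i))
    (hdl : ∀ j, lnL (d j)) : IsIncidenceL (Amalgam f) := by
  refine ⟨?_, ?_, ?_⟩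
  · rintro (x | y)
    exacts [hM.1 x, hN.1 y.1]
  · rintro (x | y)
    exacts [hM.2.1 x, hN.2.1 y.1]
  · rintro (x | y) (x' | y') h
    · exact hM.2.2 x x' h
    · by_cases hx : InLink c d x
      · have := hN.2.2 _ _ ((dif_pos hx).mp h)
        exact ⟨(ptL_subtype _).1 ((ptL_embedding f _).1 this.1), this.2⟩
      · obtain ⟨⟨i, rfl⟩, hl⟩ := (dif_neg hx).mp h
        exact ⟨hcp i, hl⟩
    · by_cases hx : InLink c d x'
      · have := hN.2.2 _ _ ((dif_pos hx).mp h)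
        exact ⟨this.1, (lnL_subtype _).1 ((lnL_embedding f _).1 this.2)⟩
      · obtain ⟨⟨j, rfl⟩, hp⟩ := (dif_neg hx).mp h
        exact ⟨hp, hdl j⟩
    · exact hN.2.2 _ _ h

theorem inLink_embN (hM : IsIncidenceL M) (hN : IsIncidenceL N) (hcp : ∀ i, ptL (c i))
    (hdl : ∀ j, lnL (d j)) (y : N) : InLink (inl f ∘ c) (inl f ∘ d) (embN f y) := by
  rcases em (y ∈ Set.range f) with ⟨z, rfl⟩ | hy
  · rw [embN_apply, inLink_embedding_iff]
    exact z.2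
  · rw [embN_of_notMem hy]
    rcases hN.1 y with hp | hl
    · exact Or.inl ⟨hp, fun _ => Sum.inr_ne_inl,
        fun j => (dif_neg (not_inLink_apply_right hM c hdl j)).mpr ⟨⟨j, rfl⟩, hp⟩⟩
    · exact Or.inr ⟨hl, fun _ => Sum.inr_ne_inl,
        fun i => (dif_neg (not_inLink_apply_left hM hcp d i)).mpr ⟨⟨i, rfl⟩, hl⟩⟩

end Amalgam

end Amalgam

namespace Amalgam

variable {M : Type u} [IncLang.Structure M] {m n m₀ n₀ r s : ℕ} {c : Fin r → M} {d : Fin s → M}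
  {N : Type u} [IncLang.Structure N] {f : Subtype (InLink c d) ↪[IncLang] N}
  {a : Fin m → Amalgam f} {b : Fin n → Amalgam f}

theorem mem_range_inl_of_ne_inr {z : Amalgam f} (h : ∀ y, z ≠ Sum.inr y) :
    z ∈ Set.range (inl f) := by
  rcases z with x | y
  exacts [⟨x, rfl⟩, (h y rfl).elim]

theorem not_isBiclique_of_inr_of_inr (hN : KFreeL m₀ n₀ N) (hr : m₀ + r ≤ m)
    (hs : n₀ + s ≤ n) (hab : IsBiclique a b) {i₀ : Fin m} {j₀ : Fin n}
    {y₀ y₁ : {y : N // y ∉ Set.range f}} (hi₀ : a i₀ = Sum.inr y₀) (hj₀ : b j₀ = Sum.inr y₁) :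
    False := by
  obtain ⟨e, he⟩ := exists_embedding_of_forall_or_mem_range (k := m₀) hab.1
    (fun i => mem_range_embN_or_of_incL_inr (y := y₁) (hj₀ ▸ hab.2.2.2.2 i j₀)) (by omega)
  obtain ⟨e', he'⟩ := exists_embedding_of_forall_or_mem_range (k := n₀) hab.2.1
    (fun j => mem_range_embN_or_of_inr_incL (y := y₀) (hi₀ ▸ hab.2.2.2.2 i₀ j)) (by omega)
  choose A hA using he
  choose B hB using he'
  exact hN.not_isBiclique ((hab.comp e e').of_embedding (embN f) hA hB)

theorem not_isBiclique_of_inr_of_forall_inl (hM : IsECL m n M) (hN : KFreeL m₀ n₀ N)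
    (hdl : ∀ j, lnL (d j)) (hm₀ : 1 ≤ m₀) (hr : m₀ + r ≤ m) (hs : n₀ + s ≤ n)
    (hab : IsBiclique a b) {i₀ : Fin m} {y₀ : {y : N // y ∉ Set.range f}}
    (hi₀ : a i₀ = Sum.inr y₀) (hb : ∀ j, b j ∈ Set.range (inl f)) : False := by
  have hlink (j : Fin n) :
      (∃ ℓ : Subtype (InLink c d), inl f ℓ.1 = b j) ∨ b j ∈ Set.range (inl f ∘ d) := by
    obtain ⟨x, hx⟩ := hb j
    have := hab.2.2.2.2 i₀ j
    rw [hi₀, ← hx] at this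
    exact (inLink_or_mem_range_d this).imp (fun h => ⟨⟨x, h⟩, hx⟩)
      fun ⟨j', hj'⟩ => ⟨j', by rw [← hx, ← hj']; rfl⟩
  obtain ⟨e, he⟩ := exists_embedding_of_forall_or_mem_range (k := n₀) hab.2.1
    (P := fun z => ∃ ℓ : Subtype (InLink c d), inl f ℓ.1 = z) hlink (by omega)
  choose ℓ hℓ using he
  have hℓl (k : Fin n₀) : lnL (ℓ k) := by simpa [← hℓ k] using hab.2.2.2.1 (e k)
  obtain ⟨w, hw, hwℓ⟩ := hM.exists_link_points_on_lines hdl hm₀ hr hs ℓ hℓl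
  have hwℓ' : IsBiclique w ℓ := ⟨hw, fun k k' h => e.injective (hab.2.1 (by rw [← hℓ, ← hℓ, h])),
    fun i => (hwℓ i).1, hℓl, fun i => (hwℓ i).2⟩
  rw [← Nat.sub_add_cancel hm₀] at hN
  refine hN.not_isBiclique (isBiclique_cons_left.2 ⟨fun ⟨i, hi⟩ => y₀.2 ⟨w i, hi⟩, ?_, ?_, hwℓ'.map f⟩)
  · have := hab.2.2.1 i₀
    rwa [hi₀] at this
  · intro k
    have := hab.2.2.2.2 i₀ (e k)
    rw [hi₀, ← hℓ k] at this
    exact (dif_pos (ℓ k).2).mp this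

theorem not_isBiclique_of_forall_inl_of_inr (hM : IsECL m n M) (hN : KFreeL m₀ n₀ N)
    (hcp : ∀ i, ptL (c i)) (hn₀ : 1 ≤ n₀) (hr : m₀ + r ≤ m) (hs : n₀ + s ≤ n)
    (hab : IsBiclique a b) (ha : ∀ i, a i ∈ Set.range (inl f)) {j₀ : Fin n}
    {y₁ : {y : N // y ∉ Set.range f}} (hj₀ : b j₀ = Sum.inr y₁) : False := by
  have hlink (i : Fin m) :
      (∃ P : Subtype (InLink c d), inl f P.1 = a i) ∨ a i ∈ Set.range (inl f ∘ c) := by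
    obtain ⟨x, hx⟩ := ha i
    have := hab.2.2.2.2 i j₀
    rw [hj₀, ← hx] at this
    exact (inLink_or_mem_range_c this).imp (fun h => ⟨⟨x, h⟩, hx⟩)
      fun ⟨i', hi'⟩ => ⟨i', by rw [← hx, ← hi']; rfl⟩
  obtain ⟨e, he⟩ := exists_embedding_of_forall_or_mem_range (k := m₀) hab.1
    (P := fun z => ∃ P : Subtype (InLink c d), inl f P.1 = z) hlink (by omega)
  choose P hP using he
  have hPp (i : Fin m₀) : ptL (P i) := by simpa [← hP i] using hab.2.2.1 (e i)
  obtain ⟨w, hw, hPw⟩ := hM.exists_link_lines_through_points hcp hn₀ hr hs P hPp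
  have hPw' : IsBiclique P w := ⟨fun i i' h => e.injective (hab.1 (by rw [← hP, ← hP, h])), hw,
    hPp, fun j => (hPw j).1, fun i j => (hPw j).2 i⟩
  rw [← Nat.sub_add_cancel hn₀] at hN
  refine hN.not_isBiclique
    (isBiclique_cons_right.2 ⟨fun ⟨j, hj⟩ => y₁.2 ⟨w j, hj⟩, ?_, ?_, hPw'.map f⟩)
  · have := hab.2.2.2.1 j₀
    rwa [hj₀] at this
  · intro i
    have := hab.2.2.2.2 (e i) j₀
    rw [hj₀, ← hP i] at this
    exact (dif_pos (P i).2).mp this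

theorem kFreeL (hM : IsECL m n M) (hN : KFreeL m₀ n₀ N) (hcp : ∀ i, ptL (c i))
    (hdl : ∀ j, lnL (d j)) (hm₀ : 1 ≤ m₀) (hn₀ : 1 ≤ n₀) (hr : m₀ + r ≤ m) (hs : n₀ + s ≤ n) :
    KFreeL m n (Amalgam f) := by
  rintro ⟨a, b, (hab : IsBiclique a b)⟩
  by_cases hnp : ∃ i y, a i = Sum.inr y <;> by_cases hnl : ∃ j y, b j = Sum.inr y
  · obtain ⟨i₀, y₀, hi₀⟩ := hnp
    obtain ⟨j₀, y₁, hj₀⟩ := hnl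
    exact not_isBiclique_of_inr_of_inr hN hr hs hab hi₀ hj₀
  · obtain ⟨i₀, y₀, hi₀⟩ := hnp
    exact not_isBiclique_of_inr_of_forall_inl hM hN hdl hm₀ hr hs hab hi₀
      fun j => mem_range_inl_of_ne_inr fun y h => hnl ⟨j, y, h⟩
  · obtain ⟨j₀, y₁, hj₀⟩ := hnl
    exact not_isBiclique_of_forall_inl_of_inr hM hN hcp hn₀ hr hs hab
      (fun i => mem_range_inl_of_ne_inr fun y h => hnp ⟨i, y, h⟩) hj₀
  · choose a' ha' using fun i => mem_range_inl_of_ne_inr fun y h => hnp ⟨i, y, h⟩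
    choose b' hb' using fun j => mem_range_inl_of_ne_inr fun y h => hnl ⟨j, y, h⟩
    exact hM.2.1.not_isBiclique (hab.of_embedding (inl f) ha' hb')

end Amalgam

theorem IsIncidenceL.subtype {M : Type u} [IncLang.Structure M] (hM : IsIncidenceL M)
    (p : M → Prop) : IsIncidenceL (Subtype p) := by
  refine ⟨fun x => ?_, fun x => ?_, fun x y h => ?_⟩ <;>
    simp only [ptL_subtype, lnL_subtype, incL_subtype] at *
  exacts [hM.1 x, hM.2.1 x, hM.2.2 x y h]

section LinkStructure

open BoundedFormula

variable {M : Type u} [IncLang.Structure M] {m n m₀ n₀ r s : ℕ} {c : Fin r → M} {d : Fin s → M}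

theorem kFreeL_link (hM : IsIncidenceL M) (hMf : KFreeL (m₀ + r) (n₀ + s) M)
    (hcd : IsBiclique c d) : KFreeL m₀ n₀ (Subtype (InLink c d)) := by
  rintro ⟨a, b, (hab : IsBiclique a b)⟩
  have ha (i : Fin m₀) := (a i).2.of_ptL hM ((ptL_subtype _).1 (hab.2.2.1 i))
  have hb (j : Fin n₀) := (b j).2.of_lnL hM ((lnL_subtype _).1 (hab.2.2.2.1 j))
  exact hMf.not_isBiclique ((hab.map (subtypeEmbedding _)).append hcd (fun i j => (ha i).2 j)
    (fun i j => (hb j).2 i) (fun i j => (ha i).1 j) fun i j => (hb i).1 j)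

theorem IsECL.exists_realize_link (hM : IsECL m n M) (hcd : IsBiclique c d) (hm₀ : 1 ≤ m₀)
    (hn₀ : 1 ≤ n₀) (hr : m₀ + r ≤ m) (hs : n₀ + s ≤ n) {N : Type u} [IncLang.Structure N]
    (hN : IsIncidenceL N) (hNf : KFreeL m₀ n₀ N) (f : Subtype (InLink c d) ↪[IncLang] N) {k : ℕ}
    {φ : IncLang.BoundedFormula (Subtype (InLink c d)) k} (hφ : φ.IsQF) {xs : Fin k → N}
    (hxs : φ.Realize f xs) : ∃ xs' : Fin k → Subtype (InLink c d), φ.Realize id xs' := by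
  let ψ := φ.subst (fun z => .var z.1) ⊓ iInf fun i => linkF c d (.var (.inr i))
  have hψ : ψ.Realize (Amalgam.inl f) (Amalgam.embN f ∘ xs) := by
    simp only [ψ, realize_inf, realize_subst, realize_iInf, realize_linkF, Term.realize_var]
    refine ⟨?_, fun i => Amalgam.inLink_embN hM.1 hN hcd.2.2.1 hcd.2.2.2.1 (xs i)⟩
    rw [show (fun z => Amalgam.inl f z.1) = Amalgam.embN f ∘ f from
      funext fun z => (Amalgam.embN_apply z).symm]
    exact (hφ.realize_embedding _).2 hxs
  obtain ⟨ws, hws⟩ := hM.2.2 (Amalgam f)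
    (Amalgam.isIncidenceL hM.1 hN hcd.2.2.1 hcd.2.2.2.1)
    (Amalgam.kFreeL hM hNf hcd.2.2.1 hcd.2.2.2.1 hm₀ hn₀ hr hs) (Amalgam.inl f) k ψ
    ((hφ.subst _).inf (isQF_iInf fun _ => isQF_linkF _ _ _)) ⟨_, hψ⟩
  simp only [ψ, realize_inf, realize_subst, realize_iInf, realize_linkF, Term.realize_var] at hws
  exact ⟨fun i => ⟨ws i, hws.2 i⟩, (hφ.realize_embedding (subtypeEmbedding _)).1 hws.1⟩

end LinkStructure

/-- Let `1 ≤ m₀ ≤ m`, `1 ≤ n₀ ≤ n`, let `M` be an existentially closed `K_{m,n}`-free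
incidence structure, `c₁, …, c_{m-m₀}` pairwise distinct points and `d₁, …, d_{n-n₀}`
pairwise distinct lines with every `cᵢ` incident to every `dⱼ`.  Then the induced
structure `M₀`, on the points of `M` not among the `cᵢ` incident to every `dⱼ` together
with the lines of `M` not among the `dⱼ` incident to every `cᵢ`, is an existentially
closed `K_{m₀,n₀}`-free incidence structure. -/
theorem statement_10 (m₀ n₀ m n : ℕ) (hm₀ : 1 ≤ m₀) (hn₀ : 1 ≤ n₀)
    (hm : m₀ ≤ m) (hn : n₀ ≤ n) {M : Type u} [IncLang.Structure M]
    (hM : IsECL m n M) (c : Fin (m - m₀) → M) (d : Fin (n - n₀) → M)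
    (hc : Function.Injective c) (hd : Function.Injective d)
    (hcp : ∀ i, ptL (c i)) (hdl : ∀ j, lnL (d j))
    (hcd : ∀ i j, incL (c i) (d j)) :
    IsECL m₀ n₀ (Subtype fun x : M =>
      (ptL x ∧ (∀ i, x ≠ c i) ∧ ∀ j, incL x (d j)) ∨
      (lnL x ∧ (∀ j, x ≠ d j) ∧ ∀ i, incL (c i) x)) := by
  have hcd' : IsBiclique c d := ⟨hc, hd, hcp, hdl, hcd⟩
  have hMf : KFreeL (m₀ + (m - m₀)) (n₀ + (n - n₀)) M := by
    rw [Nat.add_sub_cancel' hm, Nat.add_sub_cancel' hn]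
    exact hM.2.1
  exact ⟨hM.1.subtype _, kFreeL_link hM.1 hMf hcd', fun N _ hN hNf f k φ hφ ⟨xs, hxs⟩ =>
    hM.exists_realize_link hcd' hm₀ hn₀ (by omega) (by omega) hN hNf f hφ hxs⟩
end

section
/- Let m, n ≥ 1. Suppose B is a K_{m,n}-free incidence structure and A ⊆ B is I-closed in B. Then inside the free completion F(B) there is a subset C, containing A, such that the induced structure on C is isomorphic to the free completion F(A) via an isomorphism fixing A pointwise, B ∩ C = A, and no element of C∖A is incident (in F(B)) with any element of B∖A. -/
universe u v

/-- An incidence structure on the type `M`: "points" and "lines" partition `M`,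
and incidence only holds between a point and a line. -/
structure IncidenceData (M : Type u) where
  pt : M → Prop
  ln : M → Prop
  inc : M → M → Prop
  pt_or_ln : ∀ z, pt z ∨ ln z
  not_pt_and_ln : ∀ z, ¬(pt z ∧ ln z)
  inc_pt_ln : ∀ x y, inc x y → pt x ∧ ln y

/-- `K_{m,n}`-freeness: there are no `m` pairwise distinct points and `n` pairwise
distinct lines with every one of the points incident to every one of the lines. -/
def KFree (m n : ℕ) {M : Type u} (S : IncidenceData M) : Prop :=
  ¬∃ (a : Fin m → M) (b : Fin n → M),
      Function.Injective a ∧ Function.Injective b ∧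
      (∀ i, S.pt (a i)) ∧ (∀ j, S.ln (b j)) ∧ ∀ i j, S.inc (a i) (b j)

/-- Membership in `T^c_{m,n}`: a `K_{m,n}`-free incidence structure in which every `m`
pairwise distinct points are simultaneously incident to exactly `n-1` pairwise distinct
lines, and every `n` pairwise distinct lines are simultaneously incident to exactly
`m-1` pairwise distinct points. -/
def Complete (m n : ℕ) {M : Type u} (S : IncidenceData M) : Prop :=
  KFree m n S ∧
  (∀ a : Fin m → M, Function.Injective a → (∀ i, S.pt (a i)) →
    ∃ b : Fin (n - 1) → M, Function.Injective b ∧ (∀ j, S.ln (b j)) ∧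
      (∀ i j, S.inc (a i) (b j)) ∧ ∀ y, S.ln y → (∀ i, S.inc (a i) y) → ∃ j, y = b j) ∧
  (∀ b : Fin n → M, Function.Injective b → (∀ j, S.ln (b j)) →
    ∃ a : Fin (m - 1) → M, Function.Injective a ∧ (∀ i, S.pt (a i)) ∧
      (∀ i j, S.inc (a i) (b j)) ∧ ∀ x, S.pt x → (∀ j, S.inc x (b j)) → ∃ i, x = a i)

/-- An embedding of incidence structures: an injective map preserving points, lines,
incidence and non-incidence. -/
structure IncEmbedding {M : Type u} {N : Type v} (S : IncidenceData M)
    (T : IncidenceData N) where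
  toFun : M → N
  inj : Function.Injective toFun
  pt_iff : ∀ x, T.pt (toFun x) ↔ S.pt x
  ln_iff : ∀ x, T.ln (toFun x) ↔ S.ln x
  inc_iff : ∀ x y, T.inc (toFun x) (toFun y) ↔ S.inc x y

/-- The induced incidence structure on a subset. -/
def IncidenceData.restrict {M : Type u} (S : IncidenceData M) (A : Set M) :
    IncidenceData A where
  pt x := S.pt x
  ln x := S.ln x
  inc x y := S.inc x y
  pt_or_ln x := S.pt_or_ln x
  not_pt_and_ln x := S.not_pt_and_ln x
  inc_pt_ln x y h := S.inc_pt_ln x y h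

/-- A subset `Y` is `I`-closed: whenever `m` pairwise distinct points of `Y` are all
incident to an element `y` of `M`, then `y ∈ Y`, and dually for `n` pairwise distinct
lines of `Y`. -/
def IClosedD (m n : ℕ) {M : Type u} (S : IncidenceData M) (Y : Set M) : Prop :=
  (∀ (a : Fin m → M) (y : M), Function.Injective a → (∀ i, S.pt (a i)) →
    (∀ i, a i ∈ Y) → (∀ i, S.inc (a i) y) → y ∈ Y) ∧
  (∀ (b : Fin n → M) (x : M), Function.Injective b → (∀ j, S.ln (b j)) →
    (∀ j, b j ∈ Y) → (∀ j, S.inc x (b j)) → x ∈ Y)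

/-- The `I`-closure of `A` in `M`: the smallest `I`-closed subset containing `A`. -/
def iclD (m n : ℕ) {M : Type u} (S : IncidenceData M) (A : Set M) : Set M :=
  ⋂₀ {Y : Set M | IClosedD m n S Y ∧ A ⊆ Y}

/-- An `m`-element set `σ` of points of `Xk` which are simultaneously incident to at
most `n - 2` lines of `Xk` (i.e. it is not the case that there exist `n - 1` pairwise
distinct common lines in `Xk`). -/
def IsDeficientPtSet (m n : ℕ) {T : Type v} (S : IncidenceData T) (Xk σ : Set T) : Prop :=
  σ ⊆ Xk ∧ (∀ x ∈ σ, S.pt x) ∧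
    (∃ a : Fin m → T, Function.Injective a ∧ Set.range a = σ) ∧
    ¬∃ g : Fin (n - 1) → T, Function.Injective g ∧
        ∀ j, g j ∈ Xk ∧ S.ln (g j) ∧ ∀ x ∈ σ, S.inc x (g j)

/-- An `n`-element set `σ` of lines of `Xk` which are simultaneously incident to at
most `m - 2` points of `Xk`. -/
def IsDeficientLnSet (m n : ℕ) {T : Type v} (S : IncidenceData T) (Xk σ : Set T) : Prop :=
  σ ⊆ Xk ∧ (∀ y ∈ σ, S.ln y) ∧
    (∃ b : Fin n → T, Function.Injective b ∧ Set.range b = σ) ∧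
    ¬∃ g : Fin (m - 1) → T, Function.Injective g ∧
        ∀ i, g i ∈ Xk ∧ S.pt (g i) ∧ ∀ y ∈ σ, S.inc (g i) y

/-- `(T, e)` is a realization of the free completion `F(A)` of `A`: `T` is the union of
an increasing chain `X 0 ⊆ X 1 ⊆ ⋯` of subsets with `X 0` the image of `A`, where
`X (k+1)` is obtained from `X k` by adding, for each `m`-element set `σ` of points of
`X k` simultaneously incident to at most `n-2` lines of `X k`, exactly one new line
whose incidences within `X (k+1)` are exactly with the elements of `σ`, and dually for
each `n`-element set of lines of `X k` simultaneously incident to at most `m-2` points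
of `X k`; and every element of `X (k+1) ∖ X k` arises in one of these two ways. -/
def IsFreeCompletion (m n : ℕ) {A : Type u} {T : Type v} (SA : IncidenceData A)
    (ST : IncidenceData T) (e : IncEmbedding SA ST) : Prop :=
  ∃ X : ℕ → Set T,
    X 0 = Set.range e.toFun ∧
    (∀ k, X k ⊆ X (k + 1)) ∧
    (⋃ k, X k) = Set.univ ∧
    ∀ k,
      (∀ σ : Set T, IsDeficientPtSet m n ST (X k) σ →
        ∃! y, y ∈ X (k + 1) ∧ y ∉ X k ∧ ST.ln y ∧ (∀ x ∈ σ, ST.inc x y) ∧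
          ∀ x ∈ X (k + 1), ST.inc x y → x ∈ σ) ∧
      (∀ σ : Set T, IsDeficientLnSet m n ST (X k) σ →
        ∃! x, x ∈ X (k + 1) ∧ x ∉ X k ∧ ST.pt x ∧ (∀ y ∈ σ, ST.inc x y) ∧
          ∀ y ∈ X (k + 1), ST.inc x y → y ∈ σ) ∧
      ∀ z ∈ X (k + 1), z ∉ X k →
        (ST.ln z ∧ IsDeficientPtSet m n ST (X k) {x | x ∈ X (k + 1) ∧ ST.inc x z}) ∨
        (ST.pt z ∧ IsDeficientLnSet m n ST (X k) {y | y ∈ X (k + 1) ∧ ST.inc z y})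

/-- auxiliary: two injective enumerations of the same length with nested ranges have
equal ranges. -/
lemma range_subset_range_eq {α : Type*} {m : ℕ} {f g : Fin m → α}
    (hf : Function.Injective f) (hg : Function.Injective g)
    (h : Set.range f ⊆ Set.range g) : Set.range f = Set.range g := by
  have hφ : ∀ i, ∃ j, g j = f i := fun i => h ⟨i, rfl⟩
  choose φ hφ using hφ
  have hinj : Function.Injective φ := fun i j hij => hf (by rw [← hφ, ← hφ, hij])
  have hsurj : Function.Surjective φ := Finite.surjective_of_injective hinj
  refine h.antisymm ?_
  rintro x ⟨j, rfl⟩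
  obtain ⟨i, rfl⟩ := hsurj j
  exact ⟨i, (hφ i).symm⟩

/-- The chain approximating the copy of `F(A)` inside `F(B)`. -/
def Yseq {T : Type v} (ST : IncidenceData T) (X : ℕ → Set T) (A0 : Set T) : ℕ → Set T
  | 0 => A0
  | k + 1 => Yseq ST X A0 k ∪
      {z | z ∈ X (k + 1) ∧ z ∉ X k ∧
        ∀ w ∈ X (k + 1), (ST.inc w z ∨ ST.inc z w) → w ∈ Yseq ST X A0 k}

lemma Yseq_zero {T : Type v} (ST : IncidenceData T) (X : ℕ → Set T) (A0 : Set T) :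
    Yseq ST X A0 0 = A0 := rfl

lemma mem_Yseq_succ {T : Type v} (ST : IncidenceData T) (X : ℕ → Set T) (A0 : Set T)
    (k : ℕ) (z : T) :
    z ∈ Yseq ST X A0 (k + 1) ↔ z ∈ Yseq ST X A0 k ∨
      (z ∈ X (k + 1) ∧ z ∉ X k ∧
        ∀ w ∈ X (k + 1), (ST.inc w z ∨ ST.inc z w) → w ∈ Yseq ST X A0 k) := Iff.rfl

/-- If `B` is a `K_{m,n}`-free incidence structure and `A ⊆ B` is `I`-closed in `B`,
then inside the free completion `F(B)` (realized as `(T, e)`) there is a subset `C`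
containing (the image of) `A` such that the induced structure on `C` is a free
completion of `A` via an embedding fixing `A` pointwise, `B ∩ C = A`, and no element
of `C ∖ A` is incident in `F(B)` with any element of `B ∖ A`. -/
theorem statement_14 (m n : ℕ) (hm : 1 ≤ m) (hn : 1 ≤ n)
    {B T : Type u} (SB : IncidenceData B) (hB : KFree m n SB)
    (A : Set B) (hA : IClosedD m n SB A)
    (ST : IncidenceData T) (e : IncEmbedding SB ST)
    (hT : IsFreeCompletion m n SB ST e) :
    ∃ C : Set T,
      e.toFun '' A ⊆ C ∧
      Set.range e.toFun ∩ C = e.toFun '' A ∧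
      (∀ c ∈ C, c ∉ e.toFun '' A → ∀ b ∈ Set.range e.toFun, b ∉ e.toFun '' A →
        ¬ST.inc c b ∧ ¬ST.inc b c) ∧
      ∃ f : IncEmbedding (SB.restrict A) (ST.restrict C),
        (∀ a : A, (f.toFun a : T) = e.toFun a) ∧
        IsFreeCompletion m n (SB.restrict A) (ST.restrict C) f := by
  classical
  obtain ⟨X, hX0, hXsucc, hXunion, hXstep⟩ := hT
  have hXmono : ∀ {j k : ℕ}, j ≤ k → X j ⊆ X k := fun h => monotone_nat_of_le_succ hXsucc h
  set Y : ℕ → Set T := Yseq ST X (e.toFun '' A) with hYdef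
  have hY0 : Y 0 = e.toFun '' A := rfl
  have hYsucc : ∀ k, Y k ⊆ Y (k + 1) := fun k z hz => Or.inl hz
  have hYmono : ∀ {j k : ℕ}, j ≤ k → Y j ⊆ Y k := fun h => monotone_nat_of_le_succ hYsucc h
  have hYX : ∀ k, Y k ⊆ X k := by
    intro k
    induction k with
    | zero => rw [hY0, hX0]; exact Set.image_subset_range _ _
    | succ k ih =>
      rintro z (hz | hz)
      · exact hXsucc k (ih hz)
      · exact hz.1
  -- a member of `Y (i+1) \ Y i` is a new element all of whose incidences within
  -- `X (i+1)` lie in `Y i`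
  have hYnew : ∀ i z, z ∈ Y (i + 1) → z ∉ Y i →
      z ∈ X (i + 1) ∧ z ∉ X i ∧
        ∀ w ∈ X (i + 1), (ST.inc w z ∨ ST.inc z w) → w ∈ Y i := by
    intro i z hz hz'
    rcases hz with hz | hz
    · exact absurd hz hz'
    · exact hz
  -- going back down the chain
  have hback : ∀ k j, j ≤ k → ∀ z, z ∈ Y k → z ∈ X j → z ∈ Y j := by
    intro k
    induction k with
    | zero =>
      intro j hj z hz _
      have hj0 : j = 0 := Nat.le_zero.mp hj
      subst hj0; exact hz
    | succ k ih =>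
      intro j hj z hz hzX
      rcases Nat.lt_or_ge j (k + 1) with hj' | hj'
      · have hjk : j ≤ k := Nat.lt_succ_iff.mp hj'
        rcases hz with hz | hz
        · exact ih j hjk z hz hzX
        · exact absurd (hXmono hjk hzX) hz.2.1
      · have : j = k + 1 := le_antisymm hj hj'
        subst this; exact hz
  -- stage extraction
  have hstageY : ∀ k z, z ∈ Y k → z ∉ Y 0 → ∃ i, z ∈ Y (i + 1) ∧ z ∉ Y i := by
    intro k
    induction k with
    | zero => intro z hz hz'; exact absurd hz hz'
    | succ k ih =>
      intro z hz hz'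
      by_cases h : z ∈ Y k
      · exact ih z h hz'
      · exact ⟨k, hz, h⟩
  have hstageX : ∀ k z, z ∈ X k → z ∉ X 0 → ∃ j, z ∈ X (j + 1) ∧ z ∉ X j := by
    intro k
    induction k with
    | zero => intro z hz hz'; exact absurd hz hz'
    | succ k ih =>
      intro z hz hz'
      by_cases h : z ∈ X k
      · exact ih z h hz'
      · exact ⟨k, hz, h⟩
  -- THE KEY LEMMA, line version: a line of `X k` incident with all of an m-set of
  -- points of `Y k` lies in `Y k`.
  have Lln : ∀ k (σ : Set T) (y : T), σ ⊆ Y k →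
      (∃ a : Fin m → T, Function.Injective a ∧ Set.range a = σ) →
      (∀ x ∈ σ, ST.pt x) → y ∈ X k → ST.ln y → (∀ x ∈ σ, ST.inc x y) → y ∈ Y k := by
    intro k σ y hσY henum hσpt hyX hyln hinc
    obtain ⟨a, hainj, harange⟩ := henum
    by_cases hcase : ∃ x ∈ σ, ∃ i, (x ∈ Y (i + 1) ∧ x ∉ Y i) ∧ y ∈ X (i + 1)
    · obtain ⟨x, hxσ, i, ⟨hx1, hx0⟩, hyXi⟩ := hcase
      have hprops := hYnew i x hx1 hx0
      have hyYi : y ∈ Y i := hprops.2.2 y hyXi (Or.inr (hinc x hxσ))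
      have hik : i ≤ k := by
        by_contra h
        exact hx0 (hYmono (le_of_not_ge h) (hσY hxσ))
      exact hYmono hik hyYi
    · push_neg at hcase
      by_cases hy0 : y ∈ X 0
      · -- y comes from B; all points of σ must be in Y 0 = e '' A, use I-closedness
        have hσ0 : σ ⊆ Y 0 := by
          intro x hx
          by_contra hx0
          obtain ⟨i, hx1, hxnot⟩ := hstageY k x (hσY hx) hx0
          exact hcase x hx i ⟨hx1, hxnot⟩ (hXmono (Nat.zero_le _) hy0)
        rw [hX0] at hy0
        obtain ⟨b0, hb0⟩ := hy0
        have hmem : ∀ i : Fin m, ∃ c, c ∈ A ∧ e.toFun c = a i := by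
          intro i
          have : a i ∈ Y 0 := hσ0 (harange ▸ Set.mem_range_self i)
          rw [hY0] at this
          obtain ⟨c, hc, hc'⟩ := this
          exact ⟨c, hc, hc'⟩
        choose c hcA hce using hmem
        have hcinj : Function.Injective c := fun i j hij => hainj (by rw [← hce, ← hce, hij])
        have hb0A : b0 ∈ A := by
          refine hA.1 c b0 hcinj ?_ hcA ?_
          · intro i
            have := hσpt (a i) (harange ▸ Set.mem_range_self i)
            rw [← hce i] at this
            exact (e.pt_iff _).mp this
          · intro i
            have := hinc (a i) (harange ▸ Set.mem_range_self i)
            rw [← hce i, ← hb0] at this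
            exact (e.inc_iff _ _).mp this
        exact hYmono (Nat.zero_le k) (by rw [hY0]; exact ⟨b0, hb0A, hb0⟩)
      · -- y is a new element of some stage j+1; its full incidence set is σ
        obtain ⟨j, hyj1, hyj0⟩ := hstageX k y hyX hy0
        have hjk : j < k := by
          by_contra h
          exact hyj0 (hXmono (le_of_not_gt h) hyX)
        rcases (hXstep j).2.2 y hyj1 hyj0 with ⟨_, hdef⟩ | ⟨hpt, _⟩
        swap
        · exact absurd ⟨hpt, hyln⟩ (ST.not_pt_and_ln y)
        obtain ⟨hτXj, hτpt, ⟨b, hbinj, hbrange⟩, _⟩ := hdef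
        have hστ : σ ⊆ {x | x ∈ X (j + 1) ∧ ST.inc x y} := by
          intro x hx
          refine ⟨?_, hinc x hx⟩
          by_cases hx0 : x ∈ Y 0
          · have : x ∈ X 0 := by
              rw [hX0]; rw [hY0] at hx0; exact Set.image_subset_range _ _ hx0
            exact hXmono (Nat.zero_le _) this
          · obtain ⟨i, hx1, hxnot⟩ := hstageY k x (hσY hx) hx0
            have hyni : y ∉ X (i + 1) := hcase x hx i ⟨hx1, hxnot⟩
            have hij : i + 1 ≤ j + 1 := by
              by_contra h
              exact hyni (hXmono (by omega) hyj1)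
            exact hXmono hij (hYnew i x hx1 hxnot).1
        have hτσ : σ = {x | x ∈ X (j + 1) ∧ ST.inc x y} := by
          rw [← harange, ← hbrange]
          exact range_subset_range_eq hainj hbinj (by rw [harange, hbrange]; exact hστ)
        have hyY : y ∈ Y (j + 1) := by
          refine Or.inr ⟨hyj1, hyj0, fun w hw hincw => ?_⟩
          rcases hincw with h | h
          · have hwσ : w ∈ σ := hτσ ▸ (⟨hw, h⟩ : w ∈ {x | x ∈ X (j + 1) ∧ ST.inc x y})
            exact hback k j (le_of_lt hjk) w (hσY hwσ) (hτXj (hτσ ▸ hwσ))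
          · exact absurd ⟨(ST.inc_pt_ln y w h).1, hyln⟩ (ST.not_pt_and_ln y)
        exact hYmono (by omega : j + 1 ≤ k) hyY
  -- THE KEY LEMMA, point version (dual).
  have Lpt : ∀ k (σ : Set T) (y : T), σ ⊆ Y k →
      (∃ b : Fin n → T, Function.Injective b ∧ Set.range b = σ) →
      (∀ x ∈ σ, ST.ln x) → y ∈ X k → ST.pt y → (∀ x ∈ σ, ST.inc y x) → y ∈ Y k := by
    intro k σ y hσY henum hσln hyX hypt hinc
    obtain ⟨a, hainj, harange⟩ := henum
    by_cases hcase : ∃ x ∈ σ, ∃ i, (x ∈ Y (i + 1) ∧ x ∉ Y i) ∧ y ∈ X (i + 1)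
    · obtain ⟨x, hxσ, i, ⟨hx1, hx0⟩, hyXi⟩ := hcase
      have hprops := hYnew i x hx1 hx0
      have hyYi : y ∈ Y i := hprops.2.2 y hyXi (Or.inl (hinc x hxσ))
      have hik : i ≤ k := by
        by_contra h
        exact hx0 (hYmono (le_of_not_ge h) (hσY hxσ))
      exact hYmono hik hyYi
    · push_neg at hcase
      by_cases hy0 : y ∈ X 0
      · have hσ0 : σ ⊆ Y 0 := by
          intro x hx
          by_contra hx0
          obtain ⟨i, hx1, hxnot⟩ := hstageY k x (hσY hx) hx0
          exact hcase x hx i ⟨hx1, hxnot⟩ (hXmono (Nat.zero_le _) hy0)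
        rw [hX0] at hy0
        obtain ⟨b0, hb0⟩ := hy0
        have hmem : ∀ i : Fin n, ∃ c, c ∈ A ∧ e.toFun c = a i := by
          intro i
          have : a i ∈ Y 0 := hσ0 (harange ▸ Set.mem_range_self i)
          rw [hY0] at this
          obtain ⟨c, hc, hc'⟩ := this
          exact ⟨c, hc, hc'⟩
        choose c hcA hce using hmem
        have hcinj : Function.Injective c := fun i j hij => hainj (by rw [← hce, ← hce, hij])
        have hb0A : b0 ∈ A := by
          refine hA.2 c b0 hcinj ?_ hcA ?_
          · intro i
            have := hσln (a i) (harange ▸ Set.mem_range_self i)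
            rw [← hce i] at this
            exact (e.ln_iff _).mp this
          · intro i
            have := hinc (a i) (harange ▸ Set.mem_range_self i)
            rw [← hce i, ← hb0] at this
            exact (e.inc_iff _ _).mp this
        exact hYmono (Nat.zero_le k) (by rw [hY0]; exact ⟨b0, hb0A, hb0⟩)
      · obtain ⟨j, hyj1, hyj0⟩ := hstageX k y hyX hy0
        have hjk : j < k := by
          by_contra h
          exact hyj0 (hXmono (le_of_not_gt h) hyX)
        rcases (hXstep j).2.2 y hyj1 hyj0 with ⟨hln, _⟩ | ⟨_, hdef⟩
        · exact absurd ⟨hypt, hln⟩ (ST.not_pt_and_ln y)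
        obtain ⟨hτXj, hτln, ⟨b, hbinj, hbrange⟩, _⟩ := hdef
        have hστ : σ ⊆ {x | x ∈ X (j + 1) ∧ ST.inc y x} := by
          intro x hx
          refine ⟨?_, hinc x hx⟩
          by_cases hx0 : x ∈ Y 0
          · have : x ∈ X 0 := by
              rw [hX0]; rw [hY0] at hx0; exact Set.image_subset_range _ _ hx0
            exact hXmono (Nat.zero_le _) this
          · obtain ⟨i, hx1, hxnot⟩ := hstageY k x (hσY hx) hx0
            have hyni : y ∉ X (i + 1) := hcase x hx i ⟨hx1, hxnot⟩
            have hij : i + 1 ≤ j + 1 := by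
              by_contra h
              exact hyni (hXmono (by omega) hyj1)
            exact hXmono hij (hYnew i x hx1 hxnot).1
        have hτσ : σ = {x | x ∈ X (j + 1) ∧ ST.inc y x} := by
          rw [← harange, ← hbrange]
          exact range_subset_range_eq hainj hbinj (by rw [harange, hbrange]; exact hστ)
        have hyY : y ∈ Y (j + 1) := by
          refine Or.inr ⟨hyj1, hyj0, fun w hw hincw => ?_⟩
          rcases hincw with h | h
          · exact absurd ⟨hypt, (ST.inc_pt_ln w y h).2⟩ (ST.not_pt_and_ln y)
          · have hwσ : w ∈ σ := hτσ ▸ (⟨hw, h⟩ : w ∈ {x | x ∈ X (j + 1) ∧ ST.inc y x})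
            exact hback k j (le_of_lt hjk) w (hσY hwσ) (hτXj (hτσ ▸ hwσ))
        exact hYmono (by omega : j + 1 ≤ k) hyY
  -- the set C
  refine ⟨⋃ k, Y k, ?_, ?_, ?_, ?_⟩
  case _ => -- e '' A ⊆ C
    exact fun z hz => Set.mem_iUnion.mpr ⟨0, by rw [hY0]; exact hz⟩
  case _ => -- range e ∩ C = e '' A
    apply Set.Subset.antisymm
    · rintro z ⟨hz1, hz2⟩
      obtain ⟨l, hl⟩ := Set.mem_iUnion.mp hz2
      have : z ∈ X 0 := by rw [hX0]; exact hz1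
      have := hback l 0 (Nat.zero_le l) z hl this
      rwa [hY0] at this
    · intro z hz
      exact ⟨Set.image_subset_range _ _ hz, Set.mem_iUnion.mpr ⟨0, by rw [hY0]; exact hz⟩⟩
  case _ => -- no incidences between C \ A and B \ A
    intro c hc hcA b hb hbA
    obtain ⟨l, hl⟩ := Set.mem_iUnion.mp hc
    have hc0 : c ∉ Y 0 := by rw [hY0]; exact hcA
    obtain ⟨i, hc1, hcnot⟩ := hstageY l c hl hc0
    have hprops := hYnew i c hc1 hcnot
    have hbX : b ∈ X (i + 1) := hXmono (Nat.zero_le _) (by rw [hX0]; exact hb)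
    have hbX0 : b ∈ X 0 := by rw [hX0]; exact hb
    constructor
    · intro hinc
      have : b ∈ Y i := hprops.2.2 b hbX (Or.inr hinc)
      have := hback i 0 (Nat.zero_le i) b this hbX0
      rw [hY0] at this
      exact hbA this
    · intro hinc
      have : b ∈ Y i := hprops.2.2 b hbX (Or.inl hinc)
      have := hback i 0 (Nat.zero_le i) b this hbX0
      rw [hY0] at this
      exact hbA this
  case _ => -- the embedding and free-completion structure
    have hAC : ∀ z, z ∈ e.toFun '' A → z ∈ ⋃ k, Y k :=
      fun z hz => Set.mem_iUnion.mpr ⟨0, by rw [hY0]; exact hz⟩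
    have hCX : ∀ k z, z ∈ (⋃ k, Y k) → z ∈ X k → z ∈ Y k := by
      intro k z hz hzX
      obtain ⟨l, hl⟩ := Set.mem_iUnion.mp hz
      rcases le_total l k with h | h
      · exact hYmono h hl
      · exact hback l k h z hl hzX
    refine ⟨⟨fun a => ⟨e.toFun a, hAC _ ⟨a, a.2, rfl⟩⟩,
        fun a b h => Subtype.ext (e.inj (congrArg Subtype.val h)),
        fun x => e.pt_iff x, fun x => e.ln_iff x, fun x y => e.inc_iff x y⟩,
      fun a => rfl, ?_⟩
    refine ⟨fun k => Subtype.val ⁻¹' Y k, ?_, fun k z hz => hYsucc k hz, ?_, ?_⟩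
    · -- X' 0 = range f
      ext z
      simp only [Set.mem_preimage, Set.mem_range]
      constructor
      · intro hz
        rw [hY0] at hz
        obtain ⟨a, haA, hae⟩ := hz
        exact ⟨⟨a, haA⟩, Subtype.ext hae⟩
      · rintro ⟨a, rfl⟩
        rw [hY0]
        exact ⟨a, a.2, rfl⟩
    · -- union is everything
      apply Set.eq_univ_of_forall
      intro z
      obtain ⟨l, hl⟩ := Set.mem_iUnion.mp z.2
      exact Set.mem_iUnion.mpr ⟨l, hl⟩
    · -- the step conditions
      intro k
      refine ⟨?_, ?_, ?_⟩
      · -- deficient point sets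
        rintro σ' ⟨hσ'sub, hσ'pt, ⟨a', ha'inj, ha'range⟩, hσ'now⟩
        set σ : Set T := Subtype.val '' σ' with hσdef
        have haveval : Function.Injective (fun i => (a' i : T)) :=
          fun i j h => ha'inj (Subtype.ext h)
        have havrange : Set.range (fun i => (a' i : T)) = σ := by
          rw [hσdef, ← ha'range]
          ext x; simp [Set.mem_image, Set.mem_range]
        have hσY : σ ⊆ Y k := by
          rintro x ⟨x', hx', rfl⟩
          exact hσ'sub hx'
        have hσpt : ∀ x ∈ σ, ST.pt x := by
          rintro x ⟨x', hx', rfl⟩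
          exact hσ'pt x' hx'
        have hdef : IsDeficientPtSet m n ST (X k) σ := by
          refine ⟨fun x hx => hYX k (hσY hx), hσpt, ⟨_, haveval, havrange⟩, ?_⟩
          rintro ⟨g, hginj, hg⟩
          apply hσ'now
          have hgY : ∀ j, g j ∈ Y k := fun j =>
            Lln k σ (g j) hσY ⟨_, haveval, havrange⟩ hσpt (hg j).1 (hg j).2.1
              (fun x hx => (hg j).2.2 x hx)
          refine ⟨fun j => ⟨g j, Set.mem_iUnion.mpr ⟨k, hgY j⟩⟩,
            fun i j h => hginj (congrArg Subtype.val h), fun j => ⟨hgY j, (hg j).2.1, ?_⟩⟩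
          intro x' hx'
          exact (hg j).2.2 x'.val ⟨x', hx', rfl⟩
        obtain ⟨y, ⟨hy1, hy0, hyln, hyincσ, hyonly⟩, hyuniq⟩ := (hXstep k).1 σ hdef
        have hyY : y ∈ Y (k + 1) := by
          refine Or.inr ⟨hy1, hy0, fun w hw hi => ?_⟩
          rcases hi with h | h
          · exact hσY (hyonly w hw h)
          · exact absurd ⟨(ST.inc_pt_ln y w h).1, hyln⟩ (ST.not_pt_and_ln y)
        have hyC : y ∈ ⋃ k, Y k := Set.mem_iUnion.mpr ⟨k + 1, hyY⟩
        refine ⟨⟨y, hyC⟩, ⟨hyY, fun h => hy0 (hYX k h), hyln, ?_, ?_⟩, ?_⟩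
        · intro x' hx'
          exact hyincσ x'.val ⟨x', hx', rfl⟩
        · intro x' hx'1 hincx'
          have : x'.val ∈ σ := hyonly x'.val (hYX (k + 1) hx'1) hincx'
          obtain ⟨x'', hx'', hval⟩ := this
          rwa [← Subtype.ext hval.symm] at hx''
        · rintro ⟨z, hzC⟩ ⟨hz1, hz0, hzln, hzinc, hzonly⟩
          have hznX : z ∉ X k := fun h => hz0 (hCX k z hzC h)
          have hz1X : z ∈ X (k + 1) := hYX (k + 1) hz1
          rcases (hXstep k).2.2 z hz1X hznX with ⟨_, hdz⟩ | ⟨hptz, _⟩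
          swap
          · exact absurd ⟨hptz, hzln⟩ (ST.not_pt_and_ln z)
          obtain ⟨hτsubX, hτpt, ⟨bz, hbzinj, hbzrange⟩, _⟩ := hdz
          have hστz : σ ⊆ {x | x ∈ X (k + 1) ∧ ST.inc x z} := by
            rintro x ⟨x', hx', rfl⟩
            exact ⟨hXsucc k (hYX k (hσ'sub hx')), hzinc x' hx'⟩
          have hσeq : σ = {x | x ∈ X (k + 1) ∧ ST.inc x z} := by
            rw [← havrange, ← hbzrange]
            exact range_subset_range_eq haveval hbzinj (by rw [havrange, hbzrange]; exact hστz)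
          have hzky : z = y := by
            apply hyuniq
            refine ⟨hz1X, hznX, hzln, ?_, ?_⟩
            · rintro x ⟨x', hx', rfl⟩
              exact hzinc x' hx'
            · intro x hx hincx
              rw [hσeq]
              exact ⟨hx, hincx⟩
          exact Subtype.ext hzky
      · -- deficient line sets (dual)
        rintro σ' ⟨hσ'sub, hσ'ln, ⟨a', ha'inj, ha'range⟩, hσ'now⟩
        set σ : Set T := Subtype.val '' σ' with hσdef
        have haveval : Function.Injective (fun i => (a' i : T)) :=
          fun i j h => ha'inj (Subtype.ext h)
        have havrange : Set.range (fun i => (a' i : T)) = σ := by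
          rw [hσdef, ← ha'range]
          ext x; simp [Set.mem_image, Set.mem_range]
        have hσY : σ ⊆ Y k := by
          rintro x ⟨x', hx', rfl⟩
          exact hσ'sub hx'
        have hσln : ∀ x ∈ σ, ST.ln x := by
          rintro x ⟨x', hx', rfl⟩
          exact hσ'ln x' hx'
        have hdef : IsDeficientLnSet m n ST (X k) σ := by
          refine ⟨fun x hx => hYX k (hσY hx), hσln, ⟨_, haveval, havrange⟩, ?_⟩
          rintro ⟨g, hginj, hg⟩
          apply hσ'now
          have hgY : ∀ j, g j ∈ Y k := fun j =>
            Lpt k σ (g j) hσY ⟨_, haveval, havrange⟩ hσln (hg j).1 (hg j).2.1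
              (fun x hx => (hg j).2.2 x hx)
          refine ⟨fun j => ⟨g j, Set.mem_iUnion.mpr ⟨k, hgY j⟩⟩,
            fun i j h => hginj (congrArg Subtype.val h), fun j => ⟨hgY j, (hg j).2.1, ?_⟩⟩
          intro x' hx'
          exact (hg j).2.2 x'.val ⟨x', hx', rfl⟩
        obtain ⟨y, ⟨hy1, hy0, hypt, hyincσ, hyonly⟩, hyuniq⟩ := (hXstep k).2.1 σ hdef
        have hyY : y ∈ Y (k + 1) := by
          refine Or.inr ⟨hy1, hy0, fun w hw hi => ?_⟩
          rcases hi with h | h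
          · exact absurd ⟨hypt, (ST.inc_pt_ln w y h).2⟩ (ST.not_pt_and_ln y)
          · exact hσY (hyonly w hw h)
        have hyC : y ∈ ⋃ k, Y k := Set.mem_iUnion.mpr ⟨k + 1, hyY⟩
        refine ⟨⟨y, hyC⟩, ⟨hyY, fun h => hy0 (hYX k h), hypt, ?_, ?_⟩, ?_⟩
        · intro x' hx'
          exact hyincσ x'.val ⟨x', hx', rfl⟩
        · intro x' hx'1 hincx'
          have : x'.val ∈ σ := hyonly x'.val (hYX (k + 1) hx'1) hincx'
          obtain ⟨x'', hx'', hval⟩ := this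
          rwa [← Subtype.ext hval.symm] at hx''
        · rintro ⟨z, hzC⟩ ⟨hz1, hz0, hzpt, hzinc, hzonly⟩
          have hznX : z ∉ X k := fun h => hz0 (hCX k z hzC h)
          have hz1X : z ∈ X (k + 1) := hYX (k + 1) hz1
          rcases (hXstep k).2.2 z hz1X hznX with ⟨hlnz, _⟩ | ⟨_, hdz⟩
          · exact absurd ⟨hzpt, hlnz⟩ (ST.not_pt_and_ln z)
          obtain ⟨hτsubX, hτln, ⟨bz, hbzinj, hbzrange⟩, _⟩ := hdz
          have hστz : σ ⊆ {x | x ∈ X (k + 1) ∧ ST.inc z x} := by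
            rintro x ⟨x', hx', rfl⟩
            exact ⟨hXsucc k (hYX k (hσ'sub hx')), hzinc x' hx'⟩
          have hσeq : σ = {x | x ∈ X (k + 1) ∧ ST.inc z x} := by
            rw [← havrange, ← hbzrange]
            exact range_subset_range_eq haveval hbzinj (by rw [havrange, hbzrange]; exact hστz)
          have hzky : z = y := by
            apply hyuniq
            refine ⟨hz1X, hznX, hzpt, ?_, ?_⟩
            · rintro x ⟨x', hx', rfl⟩
              exact hzinc x' hx'
            · intro x hx hincx
              rw [hσeq]
              exact ⟨hx, hincx⟩
          exact Subtype.ext hzky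
      · -- every new element of Y (k+1) arises from a deficient set of Y k
        rintro ⟨z, hzC⟩ hz1 hz0
        have hprops := hYnew k z hz1 hz0
        obtain ⟨hzX1, hzX0, hzesc⟩ := hprops
        rcases (hXstep k).2.2 z hzX1 hzX0 with ⟨hzln, hdz⟩ | ⟨hzpt, hdz⟩
        · left
          refine ⟨hzln, ?_⟩
          obtain ⟨hτX, hτpt, ⟨a, hainj, harange⟩, hτnw⟩ := hdz
          have hτY : ∀ x, x ∈ X (k + 1) → ST.inc x z → x ∈ Y k :=
            fun x hx hi => hzesc x hx (Or.inl hi)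
          have hτC : ∀ x, x ∈ X (k + 1) → ST.inc x z → x ∈ ⋃ k, Y k :=
            fun x hx hi => Set.mem_iUnion.mpr ⟨k, hτY x hx hi⟩
          have hmemτ : ∀ i : Fin m, a i ∈ X (k + 1) ∧ ST.inc (a i) z := by
            intro i
            have : a i ∈ {x | x ∈ X (k + 1) ∧ ST.inc x z} := harange ▸ Set.mem_range_self i
            exact this
          refine ⟨?_, ?_, ?_, ?_⟩
          · -- subset of Y k
            rintro x' ⟨hx'1, hx'inc⟩
            exact hτY x'.val (hYX (k + 1) hx'1) hx'inc
          · -- points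
            rintro x' ⟨hx'1, hx'inc⟩
            exact hτpt x'.val ⟨hYX (k + 1) hx'1, hx'inc⟩
          · -- enumeration
            refine ⟨fun i => ⟨a i, hτC (a i) (hmemτ i).1 (hmemτ i).2⟩,
              fun i j h => hainj (congrArg Subtype.val h), ?_⟩
            ext x'
            simp only [Set.mem_range, Set.mem_setOf_eq]
            constructor
            · rintro ⟨i, rfl⟩
              exact ⟨hYsucc k (hτY (a i) (hmemτ i).1 (hmemτ i).2), (hmemτ i).2⟩
            · rintro ⟨hx'1, hx'inc⟩
              have : x'.val ∈ Set.range a := by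
                rw [harange]
                exact ⟨hYX (k + 1) hx'1, hx'inc⟩
              obtain ⟨i, hi⟩ := this
              exact ⟨i, Subtype.ext hi⟩
          · -- no witnesses
            rintro ⟨g, hginj, hg⟩
            apply hτnw
            refine ⟨fun j => (g j).val, fun i j h => hginj (Subtype.ext h), fun j => ?_⟩
            refine ⟨hYX k (hg j).1, (hg j).2.1, ?_⟩
            rintro x ⟨hx1, hxinc⟩
            have hxY : x ∈ Y k := hτY x hx1 hxinc
            have : (⟨x, Set.mem_iUnion.mpr ⟨k, hxY⟩⟩ : {t // t ∈ ⋃ k, Y k}) ∈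
                {x' | x' ∈ Subtype.val ⁻¹' Y (k + 1) ∧ (ST.restrict _).inc x' ⟨z, hzC⟩} :=
              ⟨hYsucc k hxY, hxinc⟩
            exact (hg j).2.2 _ this
        · right
          refine ⟨hzpt, ?_⟩
          obtain ⟨hτX, hτln, ⟨a, hainj, harange⟩, hτnw⟩ := hdz
          have hτY : ∀ x, x ∈ X (k + 1) → ST.inc z x → x ∈ Y k :=
            fun x hx hi => hzesc x hx (Or.inr hi)
          have hτC : ∀ x, x ∈ X (k + 1) → ST.inc z x → x ∈ ⋃ k, Y k :=
            fun x hx hi => Set.mem_iUnion.mpr ⟨k, hτY x hx hi⟩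
          have hmemτ : ∀ i : Fin n, a i ∈ X (k + 1) ∧ ST.inc z (a i) := by
            intro i
            have : a i ∈ {x | x ∈ X (k + 1) ∧ ST.inc z x} := harange ▸ Set.mem_range_self i
            exact this
          refine ⟨?_, ?_, ?_, ?_⟩
          · rintro x' ⟨hx'1, hx'inc⟩
            exact hτY x'.val (hYX (k + 1) hx'1) hx'inc
          · rintro x' ⟨hx'1, hx'inc⟩
            exact hτln x'.val ⟨hYX (k + 1) hx'1, hx'inc⟩
          · refine ⟨fun i => ⟨a i, hτC (a i) (hmemτ i).1 (hmemτ i).2⟩,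
              fun i j h => hainj (congrArg Subtype.val h), ?_⟩
            ext x'
            simp only [Set.mem_range, Set.mem_setOf_eq]
            constructor
            · rintro ⟨i, rfl⟩
              exact ⟨hYsucc k (hτY (a i) (hmemτ i).1 (hmemτ i).2), (hmemτ i).2⟩
            · rintro ⟨hx'1, hx'inc⟩
              have : x'.val ∈ Set.range a := by
                rw [harange]
                exact ⟨hYX (k + 1) hx'1, hx'inc⟩
              obtain ⟨i, hi⟩ := this
              exact ⟨i, Subtype.ext hi⟩
          · rintro ⟨g, hginj, hg⟩
            apply hτnw
            refine ⟨fun j => (g j).val, fun i j h => hginj (Subtype.ext h), fun j => ?_⟩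
            refine ⟨hYX k (hg j).1, (hg j).2.1, ?_⟩
            rintro x ⟨hx1, hxinc⟩
            have hxY : x ∈ Y k := hτY x hx1 hxinc
            have : (⟨x, Set.mem_iUnion.mpr ⟨k, hxY⟩⟩ : {t // t ∈ ⋃ k, Y k}) ∈
                {y' | y' ∈ Subtype.val ⁻¹' Y (k + 1) ∧ (ST.restrict _).inc ⟨z, hzC⟩ y'} :=
              ⟨hYsucc k hxY, hxinc⟩
            exact (hg j).2.2 _ this
end

section
/- Let m, n ≥ 1. Let X_ab, X_ac, X_bc be K_{m,n}-free incidence structures such that X_ab ∩ X_ac = X_a, X_ab ∩ X_bc = X_b, X_ac ∩ X_bc = X_c (as induced substructures, with the incidence relations agreeing on these intersections), and X_a ∩ X_b = X_a ∩ X_c = X_b ∩ X_c = D. Suppose that the induced structures on X_a, X_b, X_c each belong to T^c_{m,n}, that in X_ab there are no incidences between X_a∖D and X_b∖D, and that in X_ac there are no incidences between X_a∖D and X_c∖D. Let X_abc be the incidence structure on X_ab ∪ X_ac ∪ X_bc whose incidences are exactly those of X_ab, X_ac and X_bc. Then X_abc is K_{m,n}-free. -/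
universe u v

/-- A complete configuration lying inside a `K_{m,n}`-free part gives `False`. -/
lemma inPart {U : Type u} (S : IncidenceData U) {m n : ℕ} (W : Set U)
    (hK : KFree m n (S.restrict W)) (a : Fin m → U) (b : Fin n → U)
    (ha : Function.Injective a) (hb : Function.Injective b)
    (hpt : ∀ i, S.pt (a i)) (hln : ∀ j, S.ln (b j))
    (hinc : ∀ i j, S.inc (a i) (b j))
    (haW : ∀ i, a i ∈ W) (hbW : ∀ j, b j ∈ W) : False :=
  hK ⟨fun i => ⟨a i, haW i⟩, fun j => ⟨b j, hbW j⟩,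
    fun i1 i2 h => ha (congrArg Subtype.val h),
    fun j1 j2 h => hb (congrArg Subtype.val h), hpt, hln, hinc⟩

/-- If all `m` points lie in `V`, `V ⊆ W`, `restrict V` is complete and `restrict W` is
`K_{m,n}`-free, then any line of `W` incident to all the points lies in `V`. -/
lemma push {U : Type u} (m n : ℕ) (hn : 1 ≤ n) (S : IncidenceData U)
    (V W : Set U) (hVW : V ⊆ W)
    (hC : Complete m n (S.restrict V)) (hK : KFree m n (S.restrict W))
    (a : Fin m → U) (ha : Function.Injective a) (haV : ∀ i, a i ∈ V)
    (hpt : ∀ i, S.pt (a i))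
    (y : U) (hyW : y ∈ W) (hyln : S.ln y) (hyinc : ∀ i, S.inc (a i) y) :
    y ∈ V := by
  by_contra hyV
  obtain ⟨b, hbinj, hbln, hbinc, -⟩ :=
    hC.2.1 (fun i => ⟨a i, haV i⟩) (fun i1 i2 h => ha (congrArg Subtype.val h)) hpt
  set c0 : Fin (n - 1 + 1) → U := Fin.snoc (fun k => (b k : U)) y with hc0
  have hmem : ∀ j, c0 j ∈ W ∧ S.ln (c0 j) ∧ ∀ i, S.inc (a i) (c0 j) := by
    intro j
    induction j using Fin.lastCases with
    | last =>
      refine ⟨?_, ?_, ?_⟩ <;> simp only [c0, Fin.snoc_last]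
      · exact hyW
      · exact hyln
      · exact hyinc
    | cast k =>
      refine ⟨?_, ?_, ?_⟩ <;> simp only [c0, Fin.snoc_castSucc]
      · exact hVW (b k).2
      · exact hbln k
      · exact fun i => hbinc i k
  have hne : ∀ k : Fin (n - 1), (b k : U) ≠ y := fun k h => hyV (h ▸ (b k).2)
  have hcinj : Function.Injective c0 := by
    intro j1 j2 h
    induction j1 using Fin.lastCases with
    | last =>
      induction j2 using Fin.lastCases with
      | last => rfl
      | cast k =>
        have : y = (b k : U) := by simpa only [c0, Fin.snoc_last, Fin.snoc_castSucc] using h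
        exact absurd this.symm (hne k)
    | cast k1 =>
      induction j2 using Fin.lastCases with
      | last =>
        have : (b k1 : U) = y := by simpa only [c0, Fin.snoc_last, Fin.snoc_castSucc] using h
        exact absurd this (hne k1)
      | cast k2 =>
        have : (b k1 : U) = (b k2 : U) := by
          simpa only [c0, Fin.snoc_castSucc] using h
        rw [hbinj (Subtype.ext this)]
  have hn1 : n - 1 + 1 = n := Nat.succ_pred_eq_of_pos hn
  exact hK ⟨fun i => ⟨a i, hVW (haV i)⟩,
    fun j => ⟨c0 (Fin.cast hn1.symm j), (hmem _).1⟩,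
    fun i1 i2 h => ha (congrArg Subtype.val h),
    fun j1 j2 h => Fin.cast_injective _ (hcinj (congrArg Subtype.val h)),
    hpt, fun j => (hmem _).2.1, fun i j => (hmem _).2.2 i⟩

/-- Dual of `push`: if all `n` lines lie in `V`, any point of `W` incident to all of
them lies in `V`. -/
lemma push' {U : Type u} (m n : ℕ) (hm : 1 ≤ m) (S : IncidenceData U)
    (V W : Set U) (hVW : V ⊆ W)
    (hC : Complete m n (S.restrict V)) (hK : KFree m n (S.restrict W))
    (b : Fin n → U) (hb : Function.Injective b) (hbV : ∀ j, b j ∈ V)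
    (hln : ∀ j, S.ln (b j))
    (x : U) (hxW : x ∈ W) (hxpt : S.pt x) (hxinc : ∀ j, S.inc x (b j)) :
    x ∈ V := by
  by_contra hxV
  obtain ⟨c, hcinj, hcpt, hcinc, -⟩ :=
    hC.2.2 (fun j => ⟨b j, hbV j⟩) (fun j1 j2 h => hb (congrArg Subtype.val h)) hln
  set c0 : Fin (m - 1 + 1) → U := Fin.snoc (fun k => (c k : U)) x with hc0
  have hmem : ∀ i, c0 i ∈ W ∧ S.pt (c0 i) ∧ ∀ j, S.inc (c0 i) (b j) := by
    intro i
    induction i using Fin.lastCases with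
    | last =>
      refine ⟨?_, ?_, ?_⟩ <;> simp only [c0, Fin.snoc_last]
      · exact hxW
      · exact hxpt
      · exact hxinc
    | cast k =>
      refine ⟨?_, ?_, ?_⟩ <;> simp only [c0, Fin.snoc_castSucc]
      · exact hVW (c k).2
      · exact hcpt k
      · exact fun j => hcinc k j
  have hne : ∀ k : Fin (m - 1), (c k : U) ≠ x := fun k h => hxV (h ▸ (c k).2)
  have hcinj0 : Function.Injective c0 := by
    intro j1 j2 h
    induction j1 using Fin.lastCases with
    | last =>
      induction j2 using Fin.lastCases with
      | last => rfl
      | cast k =>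
        have : x = (c k : U) := by simpa only [c0, Fin.snoc_last, Fin.snoc_castSucc] using h
        exact absurd this.symm (hne k)
    | cast k1 =>
      induction j2 using Fin.lastCases with
      | last =>
        have : (c k1 : U) = x := by simpa only [c0, Fin.snoc_last, Fin.snoc_castSucc] using h
        exact absurd this (hne k1)
      | cast k2 =>
        have : (c k1 : U) = (c k2 : U) := by
          simpa only [c0, Fin.snoc_castSucc] using h
        rw [hcinj (Subtype.ext this)]
  have hm1 : m - 1 + 1 = m := Nat.succ_pred_eq_of_pos hm
  exact hK ⟨fun i => ⟨c0 (Fin.cast hm1.symm i), (hmem _).1⟩,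
    fun j => ⟨b j, hVW (hbV j)⟩,
    fun i1 i2 h => Fin.cast_injective _ (hcinj0 (congrArg Subtype.val h)),
    fun j1 j2 h => hb (congrArg Subtype.val h),
    fun i => (hmem _).2.1, hln, fun i j => (hmem _).2.2 j⟩

/-- If all the points of a complete configuration lie in a small set `V` (where
`V = W1 ∩ W2`, with a companion small set `V' ⊆ W1 ∩ W3`), we get a contradiction. -/
lemma allPointsSmall {U : Type u} (m n : ℕ) (hm : 1 ≤ m) (hn : 1 ≤ n)
    (S : IncidenceData U) (V V' W1 W2 W3 : Set U)
    (hVW1 : V ⊆ W1) (hVW2 : V ⊆ W2) (hV'W1 : V' ⊆ W1) (hV'W3 : V' ⊆ W3)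
    (hVW3 : ∀ x, x ∈ V → x ∈ W3 → x ∈ V')
    (hC : Complete m n (S.restrict V)) (hC' : Complete m n (S.restrict V'))
    (hK1 : KFree m n (S.restrict W1)) (hK2 : KFree m n (S.restrict W2))
    (hK3 : KFree m n (S.restrict W3))
    (hIncW : ∀ x y, S.inc x y →
      (x ∈ W1 ∧ y ∈ W1) ∨ (x ∈ W2 ∧ y ∈ W2) ∨ (x ∈ W3 ∧ y ∈ W3))
    (a : Fin m → U) (b : Fin n → U)
    (ha : Function.Injective a) (hb : Function.Injective b)
    (hpt : ∀ i, S.pt (a i)) (hln : ∀ j, S.ln (b j))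
    (hinc : ∀ i j, S.inc (a i) (b j)) (haV : ∀ i, a i ∈ V) : False := by
  by_cases hallD : ∀ i, a i ∈ V'
  · have hbW1 : ∀ j, b j ∈ W1 := by
      intro j
      rcases hIncW (a ⟨0, hm⟩) (b j) (hinc _ j) with h | h | h
      · exact h.2
      · exact hVW1 (push m n hn S V W2 hVW2 hC hK2 a ha haV hpt (b j) h.2 (hln j)
          (fun i => hinc i j))
      · exact hV'W1 (push m n hn S V' W3 hV'W3 hC' hK3 a ha hallD hpt (b j) h.2 (hln j)
          (fun i => hinc i j))
    exact inPart S W1 hK1 a b ha hb hpt hln hinc (fun i => hVW1 (haV i)) hbW1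
  · push_neg at hallD
    obtain ⟨i0, hi0⟩ := hallD
    have hi0W3 : a i0 ∉ W3 := fun h => hi0 (hVW3 _ (haV i0) h)
    have hbV : ∀ j, b j ∈ V := by
      intro j
      rcases hIncW (a i0) (b j) (hinc i0 j) with h | h | h
      · exact push m n hn S V W1 hVW1 hC hK1 a ha haV hpt (b j) h.2 (hln j)
          (fun i => hinc i j)
      · exact push m n hn S V W2 hVW2 hC hK2 a ha haV hpt (b j) h.2 (hln j)
          (fun i => hinc i j)
      · exact absurd h.1 hi0W3
    exact inPart S V hC.1 a b ha hb hpt hln hinc haV hbV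

/-- Dual of `allPointsSmall`: all lines in the small set `V`. -/
lemma allLinesSmall {U : Type u} (m n : ℕ) (hm : 1 ≤ m) (hn : 1 ≤ n)
    (S : IncidenceData U) (V V' W1 W2 W3 : Set U)
    (hVW1 : V ⊆ W1) (hVW2 : V ⊆ W2) (hV'W1 : V' ⊆ W1) (hV'W3 : V' ⊆ W3)
    (hVW3 : ∀ x, x ∈ V → x ∈ W3 → x ∈ V')
    (hC : Complete m n (S.restrict V)) (hC' : Complete m n (S.restrict V'))
    (hK1 : KFree m n (S.restrict W1)) (hK2 : KFree m n (S.restrict W2))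
    (hK3 : KFree m n (S.restrict W3))
    (hIncW : ∀ x y, S.inc x y →
      (x ∈ W1 ∧ y ∈ W1) ∨ (x ∈ W2 ∧ y ∈ W2) ∨ (x ∈ W3 ∧ y ∈ W3))
    (a : Fin m → U) (b : Fin n → U)
    (ha : Function.Injective a) (hb : Function.Injective b)
    (hpt : ∀ i, S.pt (a i)) (hln : ∀ j, S.ln (b j))
    (hinc : ∀ i j, S.inc (a i) (b j)) (hbV : ∀ j, b j ∈ V) : False := by
  by_cases hallD : ∀ j, b j ∈ V'
  · have haW1 : ∀ i, a i ∈ W1 := by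
      intro i
      rcases hIncW (a i) (b ⟨0, hn⟩) (hinc i _) with h | h | h
      · exact h.1
      · exact hVW1 (push' m n hm S V W2 hVW2 hC hK2 b hb hbV hln (a i) h.1 (hpt i)
          (fun j => hinc i j))
      · exact hV'W1 (push' m n hm S V' W3 hV'W3 hC' hK3 b hb hallD hln (a i) h.1 (hpt i)
          (fun j => hinc i j))
    exact inPart S W1 hK1 a b ha hb hpt hln hinc haW1 (fun j => hVW1 (hbV j))
  · push_neg at hallD
    obtain ⟨j0, hj0⟩ := hallD
    have hj0W3 : b j0 ∉ W3 := fun h => hj0 (hVW3 _ (hbV j0) h)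
    have haV : ∀ i, a i ∈ V := by
      intro i
      rcases hIncW (a i) (b j0) (hinc i j0) with h | h | h
      · exact push' m n hm S V W1 hVW1 hC hK1 b hb hbV hln (a i) h.1 (hpt i)
          (fun j => hinc i j)
      · exact push' m n hm S V W2 hVW2 hC hK2 b hb hbV hln (a i) h.1 (hpt i)
          (fun j => hinc i j)
      · exact absurd h.2 hj0W3
    exact inPart S V hC.1 a b ha hb hpt hln hinc haV hbV

/-- Triple free amalgamation: if `X_ab`, `X_ac`, `X_bc` are `K_{m,n}`-free with
pairwise intersections `X_a`, `X_b`, `X_c` which belong to `T^c_{m,n}` and pairwise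
intersect in `D`, and there are no incidences between `X_a∖D` and `X_b∖D` nor between
`X_a∖D` and `X_c∖D`, then the union structure (whose incidences are exactly those of
`X_ab`, `X_ac` and `X_bc`) is `K_{m,n}`-free. -/
theorem statement_15 (m n : ℕ) (hm : 1 ≤ m) (hn : 1 ≤ n)
    {U : Type u} (S : IncidenceData U)
    (Xab Xac Xbc Xa Xb Xc D : Set U)
    (hUnion : Xab ∪ Xac ∪ Xbc = Set.univ)
    (hXa : Xab ∩ Xac = Xa) (hXb : Xab ∩ Xbc = Xb) (hXc : Xac ∩ Xbc = Xc)
    (hD1 : Xa ∩ Xb = D) (hD2 : Xa ∩ Xc = D) (hD3 : Xb ∩ Xc = D)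
    (hKab : KFree m n (S.restrict Xab)) (hKac : KFree m n (S.restrict Xac))
    (hKbc : KFree m n (S.restrict Xbc))
    (hCa : Complete m n (S.restrict Xa)) (hCb : Complete m n (S.restrict Xb))
    (hCc : Complete m n (S.restrict Xc))
    (hIncWithin : ∀ x y, S.inc x y →
      (x ∈ Xab ∧ y ∈ Xab) ∨ (x ∈ Xac ∧ y ∈ Xac) ∨ (x ∈ Xbc ∧ y ∈ Xbc))
    (hab : ∀ x ∈ Xa, x ∉ D → ∀ y ∈ Xb, y ∉ D → ¬S.inc x y ∧ ¬S.inc y x)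
    (hac : ∀ x ∈ Xa, x ∉ D → ∀ y ∈ Xc, y ∉ D → ¬S.inc x y ∧ ¬S.inc y x) :
    KFree m n S := by
  rintro ⟨a, b, ha, hb, hpt, hln, hinc⟩
  -- basic subset facts
  have sAab : Xa ⊆ Xab := by rw [← hXa]; exact Set.inter_subset_left
  have sAac : Xa ⊆ Xac := by rw [← hXa]; exact Set.inter_subset_right
  have sBab : Xb ⊆ Xab := by rw [← hXb]; exact Set.inter_subset_left
  have sBbc : Xb ⊆ Xbc := by rw [← hXb]; exact Set.inter_subset_right
  have sCac : Xc ⊆ Xac := by rw [← hXc]; exact Set.inter_subset_left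
  have sCbc : Xc ⊆ Xbc := by rw [← hXc]; exact Set.inter_subset_right
  have sDA : D ⊆ Xa := by rw [← hD1]; exact Set.inter_subset_left
  have sDB : D ⊆ Xb := by rw [← hD1]; exact Set.inter_subset_right
  have sDC : D ⊆ Xc := by rw [← hD2]; exact Set.inter_subset_right
  have memA : ∀ {x}, x ∈ Xab → x ∈ Xac → x ∈ Xa := fun h1 h2 => by
    rw [← hXa]; exact ⟨h1, h2⟩
  have memB : ∀ {x}, x ∈ Xab → x ∈ Xbc → x ∈ Xb := fun h1 h2 => by
    rw [← hXb]; exact ⟨h1, h2⟩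
  have memC : ∀ {x}, x ∈ Xac → x ∈ Xbc → x ∈ Xc := fun h1 h2 => by
    rw [← hXc]; exact ⟨h1, h2⟩
  have memDab : ∀ {x}, x ∈ Xa → x ∈ Xb → x ∈ D := fun h1 h2 => by
    rw [← hD1]; exact ⟨h1, h2⟩
  have memDac : ∀ {x}, x ∈ Xa → x ∈ Xc → x ∈ D := fun h1 h2 => by
    rw [← hD2]; exact ⟨h1, h2⟩
  have memDbc : ∀ {x}, x ∈ Xb → x ∈ Xc → x ∈ D := fun h1 h2 => by
    rw [← hD3]; exact ⟨h1, h2⟩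
  have aBC : ∀ {x}, x ∈ Xa → x ∈ Xbc → x ∈ D := fun h1 h2 =>
    memDab h1 (memB (sAab h1) h2)
  have bAC : ∀ {x}, x ∈ Xb → x ∈ Xac → x ∈ D := fun h1 h2 =>
    memDab (memA (sBab h1) h2) h1
  have cAB : ∀ {x}, x ∈ Xc → x ∈ Xab → x ∈ D := fun h1 h2 =>
    memDac (memA h2 (sCac h1)) h1
  -- permuted versions of hIncWithin
  have hIncW2 : ∀ x y, S.inc x y →
      (x ∈ Xab ∧ y ∈ Xab) ∨ (x ∈ Xbc ∧ y ∈ Xbc) ∨ (x ∈ Xac ∧ y ∈ Xac) :=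
    fun x y h => by rcases hIncWithin x y h with h | h | h <;> tauto
  have hIncW3 : ∀ x y, S.inc x y →
      (x ∈ Xac ∧ y ∈ Xac) ∨ (x ∈ Xbc ∧ y ∈ Xbc) ∨ (x ∈ Xab ∧ y ∈ Xab) :=
    fun x y h => by rcases hIncWithin x y h with h | h | h <;> tauto
  -- the three "all points in a small set" contradictions
  have SA : (∀ i, a i ∈ Xa) → False := fun h =>
    allPointsSmall m n hm hn S Xa Xb Xab Xac Xbc sAab sAac sBab sBbc
      (fun x h1 h2 => memB (sAab h1) h2) hCa hCb hKab hKac hKbc hIncWithin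
      a b ha hb hpt hln hinc h
  have SB : (∀ i, a i ∈ Xb) → False := fun h =>
    allPointsSmall m n hm hn S Xb Xa Xab Xbc Xac sBab sBbc sAab sAac
      (fun x h1 h2 => memA (sBab h1) h2) hCb hCa hKab hKbc hKac hIncW2
      a b ha hb hpt hln hinc h
  have SC : (∀ i, a i ∈ Xc) → False := fun h =>
    allPointsSmall m n hm hn S Xc Xa Xac Xbc Xab sCac sCbc sAac sAab
      (fun x h1 h2 => memA h2 (sCac h1)) hCc hCa hKac hKbc hKab hIncW3
      a b ha hb hpt hln hinc h
  -- the three "all lines in a small set" contradictions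
  have DA : (∀ j, b j ∈ Xa) → False := fun h =>
    allLinesSmall m n hm hn S Xa Xb Xab Xac Xbc sAab sAac sBab sBbc
      (fun x h1 h2 => memB (sAab h1) h2) hCa hCb hKab hKac hKbc hIncWithin
      a b ha hb hpt hln hinc h
  have DB : (∀ j, b j ∈ Xb) → False := fun h =>
    allLinesSmall m n hm hn S Xb Xa Xab Xbc Xac sBab sBbc sAab sAac
      (fun x h1 h2 => memA (sBab h1) h2) hCb hCa hKab hKbc hKac hIncW2
      a b ha hb hpt hln hinc h
  have DC : (∀ j, b j ∈ Xc) → False := fun h =>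
    allLinesSmall m n hm hn S Xc Xa Xac Xbc Xab sCac sCbc sAac sAab
      (fun x h1 h2 => memA h2 (sCac h1)) hCc hCa hKac hKbc hKab hIncW3
      a b ha hb hpt hln hinc h
  by_cases hA : ∀ i, a i ∈ Xab
  · -- Case I: all points in Xab
    by_cases hL : ∀ j, b j ∈ Xab
    · exact inPart S Xab hKab a b ha hb hpt hln hinc hA hL
    push_neg at hL
    obtain ⟨j0, hj0⟩ := hL
    have hAB : ∀ i, a i ∈ Xa ∨ a i ∈ Xb := by
      intro i
      rcases hIncWithin (a i) (b j0) (hinc i j0) with h | h | h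
      · exact absurd h.2 hj0
      · exact Or.inl (memA (hA i) h.1)
      · exact Or.inr (memB (hA i) h.1)
    by_cases hAllA : ∀ i, a i ∈ Xa
    · exact SA hAllA
    push_neg at hAllA
    obtain ⟨i1, hi1⟩ := hAllA
    have hi1B : a i1 ∈ Xb := (hAB i1).resolve_left hi1
    by_cases hAllB : ∀ i, a i ∈ Xb
    · exact SB hAllB
    push_neg at hAllB
    obtain ⟨i2, hi2⟩ := hAllB
    have hi2A : a i2 ∈ Xa := (hAB i2).resolve_right hi2
    -- mixed: all lines are in Xab
    have hLab : ∀ j, b j ∈ Xab := by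
      intro j
      have f1 : b j ∈ Xab ∨ b j ∈ Xac := by
        rcases hIncWithin (a i2) (b j) (hinc i2 j) with h | h | h
        · exact Or.inl h.2
        · exact Or.inr h.2
        · exact absurd (sDB (aBC hi2A h.1)) hi2
      have f2 : b j ∈ Xab ∨ b j ∈ Xbc := by
        rcases hIncWithin (a i1) (b j) (hinc i1 j) with h | h | h
        · exact Or.inl h.2
        · exact absurd (sDA (bAC hi1B h.1)) hi1
        · exact Or.inr h.2
      rcases f1 with h1 | h1
      · exact h1
      rcases f2 with h2 | h2
      · exact h2
      have hC : b j ∈ Xc := memC h1 h2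
      by_cases hD : b j ∈ D
      · exact sAab (sDA hD)
      · have hi2D : a i2 ∉ D := fun h => hi2 (sDB h)
        exact absurd (hinc i2 j) (hac (a i2) hi2A hi2D (b j) hC hD).1
    exact inPart S Xab hKab a b ha hb hpt hln hinc hA hLab
  by_cases hA2 : ∀ i, a i ∈ Xac
  · -- Case II: all points in Xac
    by_cases hL : ∀ j, b j ∈ Xac
    · exact inPart S Xac hKac a b ha hb hpt hln hinc hA2 hL
    push_neg at hL
    obtain ⟨j0, hj0⟩ := hL
    have hAC : ∀ i, a i ∈ Xa ∨ a i ∈ Xc := by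
      intro i
      rcases hIncWithin (a i) (b j0) (hinc i j0) with h | h | h
      · exact Or.inl (memA h.1 (hA2 i))
      · exact absurd h.2 hj0
      · exact Or.inr (memC (hA2 i) h.1)
    by_cases hAllA : ∀ i, a i ∈ Xa
    · exact SA hAllA
    push_neg at hAllA
    obtain ⟨i1, hi1⟩ := hAllA
    have hi1C : a i1 ∈ Xc := (hAC i1).resolve_left hi1
    by_cases hAllC : ∀ i, a i ∈ Xc
    · exact SC hAllC
    push_neg at hAllC
    obtain ⟨i2, hi2⟩ := hAllC
    have hi2A : a i2 ∈ Xa := (hAC i2).resolve_right hi2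
    have hLac : ∀ j, b j ∈ Xac := by
      intro j
      have f1 : b j ∈ Xac ∨ b j ∈ Xab := by
        rcases hIncWithin (a i2) (b j) (hinc i2 j) with h | h | h
        · exact Or.inr h.2
        · exact Or.inl h.2
        · exact absurd (sDC (aBC hi2A h.1)) hi2
      have f2 : b j ∈ Xac ∨ b j ∈ Xbc := by
        rcases hIncWithin (a i1) (b j) (hinc i1 j) with h | h | h
        · exact absurd (sDA (cAB hi1C h.1)) hi1
        · exact Or.inl h.2
        · exact Or.inr h.2
      rcases f1 with h1 | h1
      · exact h1
      rcases f2 with h2 | h2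
      · exact h2
      have hBj : b j ∈ Xb := memB h1 h2
      by_cases hD : b j ∈ D
      · exact sAac (sDA hD)
      · have hi2D : a i2 ∉ D := fun h => hi2 (sDC h)
        exact absurd (hinc i2 j) (hab (a i2) hi2A hi2D (b j) hBj hD).1
    exact inPart S Xac hKac a b ha hb hpt hln hinc hA2 hLac
  by_cases hA3 : ∀ i, a i ∈ Xbc
  · -- Case III: all points in Xbc
    by_cases hL : ∀ j, b j ∈ Xbc
    · exact inPart S Xbc hKbc a b ha hb hpt hln hinc hA3 hL
    push_neg at hL
    obtain ⟨j0, hj0⟩ := hL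
    have hBC : ∀ i, a i ∈ Xb ∨ a i ∈ Xc := by
      intro i
      rcases hIncWithin (a i) (b j0) (hinc i j0) with h | h | h
      · exact Or.inl (memB h.1 (hA3 i))
      · exact Or.inr (memC h.1 (hA3 i))
      · exact absurd h.2 hj0
    by_cases hAllB : ∀ i, a i ∈ Xb
    · exact SB hAllB
    push_neg at hAllB
    obtain ⟨i1, hi1⟩ := hAllB
    have hi1C : a i1 ∈ Xc := (hBC i1).resolve_left hi1
    by_cases hAllC : ∀ i, a i ∈ Xc
    · exact SC hAllC
    push_neg at hAllC
    obtain ⟨i2, hi2⟩ := hAllC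
    have hi2B : a i2 ∈ Xb := (hBC i2).resolve_right hi2
    have hLbc : ∀ j, b j ∈ Xbc := by
      intro j
      have f1 : b j ∈ Xbc ∨ b j ∈ Xab := by
        rcases hIncWithin (a i2) (b j) (hinc i2 j) with h | h | h
        · exact Or.inr h.2
        · exact absurd (sDC (bAC hi2B h.1)) hi2
        · exact Or.inl h.2
      have f2 : b j ∈ Xbc ∨ b j ∈ Xac := by
        rcases hIncWithin (a i1) (b j) (hinc i1 j) with h | h | h
        · exact absurd (sDB (cAB hi1C h.1)) hi1
        · exact Or.inr h.2
        · exact Or.inl h.2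
      rcases f1 with h1 | h1
      · exact h1
      rcases f2 with h2 | h2
      · exact h2
      have hAj : b j ∈ Xa := memA h1 h2
      by_cases hD : b j ∈ D
      · exact sBbc (sDB hD)
      · have hi2D : a i2 ∉ D := fun h => hi2 (sDC h)
        exact absurd (hinc i2 j) (hab (b j) hAj hD (a i2) hi2B hi2D).2
    exact inPart S Xbc hKbc a b ha hb hpt hln hinc hA3 hLbc
  -- Case IV: points are in no single big part
  push_neg at hA hA2 hA3
  obtain ⟨i1, hp1⟩ := hA
  obtain ⟨i2, hp2⟩ := hA2
  obtain ⟨i3, hp3⟩ := hA3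
  -- every line is in Xa ∪ Xb ∪ Xc
  have classify : ∀ j, b j ∈ Xa ∨ b j ∈ Xb ∨ b j ∈ Xc := by
    intro j
    have f1 : b j ∈ Xac ∨ b j ∈ Xbc := by
      rcases hIncWithin (a i1) (b j) (hinc i1 j) with h | h | h
      · exact absurd h.1 hp1
      · exact Or.inl h.2
      · exact Or.inr h.2
    have f2 : b j ∈ Xab ∨ b j ∈ Xbc := by
      rcases hIncWithin (a i2) (b j) (hinc i2 j) with h | h | h
      · exact Or.inl h.2
      · exact absurd h.1 hp2
      · exact Or.inr h.2
    have f3 : b j ∈ Xab ∨ b j ∈ Xac := by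
      rcases hIncWithin (a i3) (b j) (hinc i3 j) with h | h | h
      · exact Or.inl h.2
      · exact Or.inr h.2
      · exact absurd h.1 hp3
    by_cases hab' : b j ∈ Xab
    · by_cases hac' : b j ∈ Xac
      · exact Or.inl (memA hab' hac')
      · exact Or.inr (Or.inl (memB hab' (f1.resolve_left hac')))
    · exact Or.inr (Or.inr (memC (f3.resolve_left hab') (f2.resolve_left hab')))
  -- pair eliminations
  have pairAB : ∀ la, la ∈ Xa → la ∉ D → (∀ i, S.inc (a i) la) →
      ∀ lb, lb ∈ Xb → lb ∉ D → (∀ i, S.inc (a i) lb) → ∀ i, a i ∈ Xab := by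
    intro la hlaA hlaD hlaI lb hlbB hlbD hlbI i
    have g1 : a i ∈ Xab ∨ a i ∈ Xac := by
      rcases hIncWithin (a i) la (hlaI i) with h | h | h
      · exact Or.inl h.1
      · exact Or.inr h.1
      · exact absurd (aBC hlaA h.2) hlaD
    have g2 : a i ∈ Xab ∨ a i ∈ Xbc := by
      rcases hIncWithin (a i) lb (hlbI i) with h | h | h
      · exact Or.inl h.1
      · exact absurd (bAC hlbB h.2) hlbD
      · exact Or.inr h.1
    rcases g1 with h1 | h1
    · exact h1
    rcases g2 with h2 | h2
    · exact h2
    have hCc' : a i ∈ Xc := memC h1 h2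
    by_cases hD : a i ∈ D
    · exact sAab (sDA hD)
    · exact absurd (hlaI i) (hac la hlaA hlaD (a i) hCc' hD).2
  have pairAC : ∀ la, la ∈ Xa → la ∉ D → (∀ i, S.inc (a i) la) →
      ∀ lc, lc ∈ Xc → lc ∉ D → (∀ i, S.inc (a i) lc) → ∀ i, a i ∈ Xac := by
    intro la hlaA hlaD hlaI lc hlcC hlcD hlcI i
    have g1 : a i ∈ Xac ∨ a i ∈ Xab := by
      rcases hIncWithin (a i) la (hlaI i) with h | h | h
      · exact Or.inr h.1
      · exact Or.inl h.1
      · exact absurd (aBC hlaA h.2) hlaD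
    have g2 : a i ∈ Xac ∨ a i ∈ Xbc := by
      rcases hIncWithin (a i) lc (hlcI i) with h | h | h
      · exact absurd (cAB hlcC h.2) hlcD
      · exact Or.inl h.1
      · exact Or.inr h.1
    rcases g1 with h1 | h1
    · exact h1
    rcases g2 with h2 | h2
    · exact h2
    have hBb : a i ∈ Xb := memB h1 h2
    by_cases hD : a i ∈ D
    · exact sAac (sDA hD)
    · exact absurd (hlaI i) (hab la hlaA hlaD (a i) hBb hD).2
  have pairBC : ∀ lb, lb ∈ Xb → lb ∉ D → (∀ i, S.inc (a i) lb) →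
      ∀ lc, lc ∈ Xc → lc ∉ D → (∀ i, S.inc (a i) lc) → ∀ i, a i ∈ Xbc := by
    intro lb hlbB hlbD hlbI lc hlcC hlcD hlcI i
    have g1 : a i ∈ Xbc ∨ a i ∈ Xab := by
      rcases hIncWithin (a i) lb (hlbI i) with h | h | h
      · exact Or.inr h.1
      · exact absurd (bAC hlbB h.2) hlbD
      · exact Or.inl h.1
    have g2 : a i ∈ Xbc ∨ a i ∈ Xac := by
      rcases hIncWithin (a i) lc (hlcI i) with h | h | h
      · exact absurd (cAB hlcC h.2) hlcD
      · exact Or.inr h.1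
      · exact Or.inl h.1
    rcases g1 with h1 | h1
    · exact h1
    rcases g2 with h2 | h2
    · exact h2
    have hAa : a i ∈ Xa := memA h1 h2
    by_cases hD : a i ∈ D
    · exact sBbc (sDB hD)
    · exact absurd (hlbI i) (hab (a i) hAa hD lb hlbB hlbD).1
  by_cases hLA : ∀ j, b j ∈ Xa
  · exact DA hLA
  push_neg at hLA
  obtain ⟨j1, hj1⟩ := hLA
  by_cases hLB : ∀ j, b j ∈ Xb
  · exact DB hLB
  push_neg at hLB
  obtain ⟨j2, hj2⟩ := hLB
  by_cases hLC : ∀ j, b j ∈ Xc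
  · exact DC hLC
  push_neg at hLC
  obtain ⟨j3, hj3⟩ := hLC
  -- j1 : not in Xa, so in Xb\D or Xc\D; similarly j2, j3
  have hj1' : b j1 ∈ Xb ∨ b j1 ∈ Xc := (classify j1).resolve_left hj1
  have hj2' : b j2 ∈ Xa ∨ b j2 ∈ Xc := by
    rcases classify j2 with h | h | h
    · exact Or.inl h
    · exact absurd h hj2
    · exact Or.inr h
  have hj3' : b j3 ∈ Xa ∨ b j3 ∈ Xb := by
    rcases classify j3 with h | h | h
    · exact Or.inl h
    · exact Or.inr h
    · exact absurd h hj3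
  have hj1D : b j1 ∉ D := fun h => hj1 (sDA h)
  have hj2D : b j2 ∉ D := fun h => hj2 (sDB h)
  have hj3D : b j3 ∉ D := fun h => hj3 (sDC h)
  rcases hj1' with h1b | h1c
  · -- b j1 ∈ Xb \ D
    rcases hj3' with h3a | h3b
    · exact hp1 (pairAB (b j3) h3a hj3D (fun i => hinc i j3)
        (b j1) h1b hj1D (fun i => hinc i j1) i1)
    · rcases hj2' with h2a | h2c
      · exact hp1 (pairAB (b j2) h2a hj2D (fun i => hinc i j2)
          (b j1) h1b hj1D (fun i => hinc i j1) i1)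
      · exact hp3 (pairBC (b j1) h1b hj1D (fun i => hinc i j1)
          (b j2) h2c hj2D (fun i => hinc i j2) i3)
  · -- b j1 ∈ Xc \ D
    rcases hj2' with h2a | h2c
    · exact hp2 (pairAC (b j2) h2a hj2D (fun i => hinc i j2)
        (b j1) h1c hj1D (fun i => hinc i j1) i2)
    · rcases hj3' with h3a | h3b
      · exact hp2 (pairAC (b j3) h3a hj3D (fun i => hinc i j3)
          (b j1) h1c hj1D (fun i => hinc i j1) i2)
      · exact hp3 (pairBC (b j3) h3b hj3D (fun i => hinc i j3)
          (b j1) h1c hj1D (fun i => hinc i j1) i3)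
end

section
/- Let m, n ≥ 1 and let N be a member of T^c_{m,n}. For subsets A, B, C ⊆ N, write A ⫝^I_C B if cl_N(A∪C) ∩ cl_N(B∪C) = cl_N(C) and no element of cl_N(A∪C)∖cl_N(C) is incident with or equal to any element of cl_N(B∪C)∖cl_N(C). Then ⫝^I is transitive: for all A ⊆ N and D ⊆ C ⊆ B ⊆ N, if A ⫝^I_D C and A ⫝^I_C B, then A ⫝^I_D B. -/
universe u v

/-- The independence relation `A ⫝^I_C B`: the `I`-closures of `A ∪ C` and `B ∪ C`
intersect in the `I`-closure of `C`, and no element of `cl(A ∪ C) ∖ cl(C)` is incident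
with or equal to any element of `cl(B ∪ C) ∖ cl(C)`. -/
def IndepI (m n : ℕ) {M : Type u} (S : IncidenceData M) (A B C : Set M) : Prop :=
  iclD m n S (A ∪ C) ∩ iclD m n S (B ∪ C) = iclD m n S C ∧
    ∀ x ∈ iclD m n S (A ∪ C), x ∉ iclD m n S C →
      ∀ y ∈ iclD m n S (B ∪ C), y ∉ iclD m n S C →
        ¬S.inc x y ∧ ¬S.inc y x ∧ x ≠ y

/-- Transitivity of `⫝^I` in a member of `T^c_{m,n}`: for `D ⊆ C ⊆ B`, if `A ⫝^I_D C`
and `A ⫝^I_C B`, then `A ⫝^I_D B`. -/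
theorem statement_16 (m n : ℕ) (hm : 1 ≤ m) (hn : 1 ≤ n)
    {M : Type u} (S : IncidenceData M) (hS : Complete m n S)
    (A B C D : Set M) (hDC : D ⊆ C) (hCB : C ⊆ B)
    (h1 : IndepI m n S A C D) (h2 : IndepI m n S A B C) :
    IndepI m n S A B D := by
  have mono : ∀ X Y : Set M, X ⊆ Y → iclD m n S X ⊆ iclD m n S Y := by
    intro X Y h z hz
    simp only [iclD, Set.mem_sInter, Set.mem_setOf_eq] at hz ⊢
    intro W hW
    exact hz W ⟨hW.1, h.trans hW.2⟩
  have hCD : C ∪ D = C := Set.union_eq_self_of_subset_right hDC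
  have hBC : B ∪ C = B := Set.union_eq_self_of_subset_right hCB
  have hBD : B ∪ D = B := Set.union_eq_self_of_subset_right (hDC.trans hCB)
  obtain ⟨e1, f1⟩ := h1
  obtain ⟨e2, f2⟩ := h2
  rw [hCD] at e1 f1
  rw [hBC] at e2 f2
  constructor
  · rw [hBD]
    apply Set.Subset.antisymm
    · intro x hx
      have hxAC : x ∈ iclD m n S (A ∪ C) :=
        mono _ _ (Set.union_subset_union_right A hDC) hx.1
      have hxC : x ∈ iclD m n S C := e2 ▸ Set.mem_inter hxAC hx.2
      exact e1 ▸ Set.mem_inter hx.1 hxC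
    · intro x hx
      exact ⟨mono _ _ Set.subset_union_right hx, mono _ _ (hDC.trans hCB) hx⟩
  · rw [hBD]
    intro x hxA hxD y hyB hyD
    by_cases hyC : y ∈ iclD m n S C
    · exact f1 x hxA hxD y hyC hyD
    · have hxC : x ∉ iclD m n S C := fun hc =>
        hxD (e1 ▸ Set.mem_inter hxA hc)
      exact f2 x (mono _ _ (Set.union_subset_union_right A hDC) hxA) hxC y hyB hyC
end

section
/- Let m, n ≥ 1 and let N be a member of T^c_{m,n}. For subsets A, B, C ⊆ N, write A ⫝^I_C B if cl_N(A∪C) ∩ cl_N(B∪C) = cl_N(C) and no element of cl_N(A∪C)∖cl_N(C) is incident with or equal to any element of cl_N(B∪C)∖cl_N(C). Then ⫝^I satisfies local character: for all A, B ⊆ N there exists C ⊆ B with |C| ≤ |A| + ℵ₀ such that A ⫝^I_C B. -/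
universe u v

/-!
In `T^c_{m,n}` any `m` points have only finitely many common lines and any `n` lines only
finitely many common points, so for infinite `κ` a closure step, and hence the whole closure,
maps sets of size at most `κ` to sets of size at most `κ`. If `x ∉ cl B`, then `x` is incident
to only finitely many elements of `cl B`, since `m` (or `n`) of them would force `x` into
`cl B`. So the trace of `x` on `cl B` (`x` itself if `x ∈ cl B`, the elements of `cl B`
incident with `x` otherwise) is finite, and as `cl` is finitary it lies in the closure of a
finite subset of `B`. Closing `C ⊆ B` under adding these finite supports for all
`x ∈ cl (A ∪ C)`, in `ω` steps, keeps `|C| ≤ |A| + ℵ₀`; since `cl` commutes with directed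
unions, every trace of an element of `cl (A ∪ C)` then lies in `cl C`, which is exactly
`A ⫝^I_C B`.
-/

open Cardinal

section CardinalArith

variable {α : Type u} {κ : Cardinal.{u}}

lemma mk_iUnion_le_of_le {ι : Type u} (hκ : ℵ₀ ≤ κ) {f : ι → Set α} (hι : #ι ≤ κ)
    (hf : ∀ i, #(f i) ≤ κ) : #(⋃ i, f i) ≤ κ :=
  (mk_iUnion_le f).trans <| (mul_le_mul' hι (ciSup_le' hf)).trans (mul_eq_self hκ).le

lemma mk_iUnion_iterate_le (hκ : ℵ₀ ≤ κ) {f : Set α → Set α}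
    (hf : ∀ s : Set α, #s ≤ κ → #(f s) ≤ κ) {s : Set α} (hs : #s ≤ κ) :
    #(⋃ k, f^[k] s) ≤ κ := by
  have hiter : ∀ k, #(f^[k] s) ≤ κ :=
    Function.Iterate.rec (fun t : Set α => #t ≤ κ) hs hf
  have := mk_iUnion_le_lift.{u, 0} fun k => f^[k] s
  simp only [lift_uzero, mk_nat, lift_aleph0] at this
  exact this.trans <| (mul_le_mul' hκ (ciSup_le' hiter)).trans (mul_eq_self hκ).le

lemma monotone_iterate_apply_of_subset {f : Set α → Set α} (hf : ∀ s, s ⊆ f s)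
    (s : Set α) :
    Monotone (f^[·] s) :=
  fun _ _ h => Function.monotone_iterate_of_id_le hf h s

lemma mk_embedding_fin_le (hκ : ℵ₀ ≤ κ) {Y : Type u} (hY : #Y ≤ κ) (m : ℕ) :
    #(Fin m ↪ Y) ≤ κ := by
  refine (mk_embedding_le_arrow _ _).trans ?_
  rw [mk_arrow]
  simp only [lift_uzero, mk_fin, lift_natCast, power_natCast]
  exact (pow_le_pow_left₀ zero_le hY m).trans (power_nat_le hκ)

end CardinalArith

def iStep (m n : ℕ) {M : Type u} (S : IncidenceData M) (Y : Set M) : Set M :=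
  {y | ∃ a : Fin m ↪ M, (∀ i, a i ∈ Y) ∧ ∀ i, S.inc (a i) y} ∪
    {x | ∃ b : Fin n ↪ M, (∀ j, b j ∈ Y) ∧ ∀ j, S.inc x (b j)}

section Closure

variable {m n : ℕ} {M : Type u} {S : IncidenceData M}

lemma iClosedD_iff_iStep_subset {Y : Set M} : IClosedD m n S Y ↔ iStep m n S Y ⊆ Y := by
  constructor
  · rintro ⟨hpt, hln⟩ z (⟨a, hmem, hinc⟩ | ⟨b, hmem, hinc⟩)
    · exact hpt a z a.injective (fun i => (S.inc_pt_ln _ _ (hinc i)).1) hmem hinc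
    · exact hln b z b.injective (fun j => (S.inc_pt_ln _ _ (hinc j)).2) hmem hinc
  · intro h
    exact ⟨fun a y ha _ hmem hinc => h (Or.inl ⟨⟨a, ha⟩, hmem, hinc⟩),
      fun b x hb _ hmem hinc => h (Or.inr ⟨⟨b, hb⟩, hmem, hinc⟩)⟩

lemma subset_iclD (A : Set M) : A ⊆ iclD m n S A := fun _ hx _ hY => hY.2 hx

lemma iclD_minimal {A Y : Set M} (hY : IClosedD m n S Y) (hAY : A ⊆ Y) :
    iclD m n S A ⊆ Y :=
  fun _ hx => hx Y ⟨hY, hAY⟩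

lemma iClosedD_iclD (A : Set M) : IClosedD m n S (iclD m n S A) :=
  ⟨fun a y ha hpt hmem hinc _ hY => hY.1.1 a y ha hpt (fun i => hmem i _ hY) hinc,
    fun b x hb hln hmem hinc _ hY => hY.1.2 b x hb hln (fun j => hmem j _ hY) hinc⟩

lemma iclD_mono {A B : Set M} (h : A ⊆ B) : iclD m n S A ⊆ iclD m n S B :=
  iclD_minimal (iClosedD_iclD B) (h.trans (subset_iclD B))

lemma iStep_iUnion_subset {ι : Type*} [Nonempty ι] {D : ι → Set M}
    (hD : Directed (· ⊆ ·) D) : iStep m n S (⋃ i, D i) ⊆ ⋃ i, iStep m n S (D i) := by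
  classical
  rintro z (⟨a, hmem, hinc⟩ | ⟨b, hmem, hinc⟩)
  · obtain ⟨i, hi⟩ := hD.exists_mem_subset_of_finset_subset_biUnion
      (s := Finset.univ.image a) (by simpa [Set.subset_def] using hmem)
    exact Set.mem_iUnion.2 ⟨i, Or.inl ⟨a, fun k => hi (by simp), hinc⟩⟩
  · obtain ⟨i, hi⟩ := hD.exists_mem_subset_of_finset_subset_biUnion
      (s := Finset.univ.image b) (by simpa [Set.subset_def] using hmem)
    exact Set.mem_iUnion.2 ⟨i, Or.inr ⟨b, fun k => hi (by simp), hinc⟩⟩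

lemma iclD_iUnion_subset {ι : Type*} [Nonempty ι] {D : ι → Set M}
    (hD : Directed (· ⊆ ·) D) : iclD m n S (⋃ i, D i) ⊆ ⋃ i, iclD m n S (D i) := by
  have hclosed : IClosedD m n S (⋃ i, iclD m n S (D i)) := by
    rw [iClosedD_iff_iStep_subset]
    calc iStep m n S (⋃ i, iclD m n S (D i)) ⊆ ⋃ i, iStep m n S (iclD m n S (D i)) :=
          iStep_iUnion_subset (hD.mono_comp (g := iclD m n S) _ fun _ _ => iclD_mono)
      _ ⊆ ⋃ i, iclD m n S (D i) :=
          Set.iUnion_mono fun _ => iClosedD_iff_iStep_subset.1 (iClosedD_iclD _)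
  exact iclD_minimal hclosed (Set.iUnion_mono fun _ => subset_iclD _)

lemma exists_finite_subset_of_subset_iclD {B Y : Set M} (hY : Y.Finite)
    (hYB : Y ⊆ iclD m n S B) : ∃ G ⊆ B, G.Finite ∧ Y ⊆ iclD m n S G := by
  have hdir : Directed (· ⊆ ·) fun s : Finset M => (s : Set M) ∩ B :=
    Monotone.directed_le fun s t hst => Set.inter_subset_inter_left _ (Finset.coe_subset.2 hst)
  have hB : B = ⋃ s : Finset M, (s : Set M) ∩ B := by
    ext x; simpa using fun _ => ⟨{x}, by simp⟩
  have hYU : Y ⊆ ⋃ s : Finset M, iclD m n S ((s : Set M) ∩ B) :=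
    hYB.trans ((iclD_mono hB.le).trans (iclD_iUnion_subset hdir))
  obtain ⟨s, hs⟩ := (hdir.mono_comp (g := iclD m n S) _ fun _ _ => iclD_mono)
    |>.exists_mem_subset_of_finset_subset_biUnion (s := hY.toFinset) (by simpa using hYU)
  exact ⟨(s : Set M) ∩ B, Set.inter_subset_right, s.finite_toSet.inter_of_left B,
    by simpa using hs⟩

end Closure

section Complete

variable {m n : ℕ} {M : Type u} {S : IncidenceData M}

lemma Complete.finite_common_lines (hS : Complete m n S) (hm : 1 ≤ m) (a : Fin m ↪ M) :
    {y | ∀ i, S.inc (a i) y}.Finite := by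
  by_cases hpt : ∀ i, S.pt (a i)
  · obtain ⟨b, -, -, -, hb⟩ := hS.2.1 a a.injective hpt
    refine (Set.finite_range b).subset fun y hy => ?_
    obtain ⟨j, rfl⟩ := hb y (S.inc_pt_ln _ _ (hy ⟨0, hm⟩)).2 hy
    exact ⟨j, rfl⟩
  · obtain ⟨i, hi⟩ := not_forall.1 hpt
    exact Set.finite_empty.subset fun y hy => hi (S.inc_pt_ln _ _ (hy i)).1

lemma Complete.finite_common_points (hS : Complete m n S) (hn : 1 ≤ n) (b : Fin n ↪ M) :
    {x | ∀ j, S.inc x (b j)}.Finite := by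
  by_cases hln : ∀ j, S.ln (b j)
  · obtain ⟨a, -, -, -, ha⟩ := hS.2.2 b b.injective hln
    refine (Set.finite_range a).subset fun x hx => ?_
    obtain ⟨i, rfl⟩ := ha x (S.inc_pt_ln _ _ (hx ⟨0, hn⟩)).1 hx
    exact ⟨i, rfl⟩
  · obtain ⟨j, hj⟩ := not_forall.1 hln
    exact Set.finite_empty.subset fun x hx => hj (S.inc_pt_ln _ _ (hx j)).2

variable {κ : Cardinal.{u}}

lemma Complete.mk_iStep_le (hS : Complete m n S) (hm : 1 ≤ m) (hn : 1 ≤ n) (hκ : ℵ₀ ≤ κ)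
    {Y : Set M} (hY : #Y ≤ κ) : #(iStep m n S Y) ≤ κ := by
  let emb {p : ℕ} (a : Fin p ↪ Y) : Fin p ↪ M := a.trans (Function.Embedding.subtype _)
  have hsub : iStep m n S Y ⊆ (⋃ a : Fin m ↪ Y, {y | ∀ i, S.inc (emb a i) y}) ∪
      ⋃ b : Fin n ↪ Y, {x | ∀ j, S.inc x (emb b j)} := by
    rintro z (⟨a, hmem, hinc⟩ | ⟨b, hmem, hinc⟩)
    · exact Or.inl (Set.mem_iUnion.2 ⟨⟨fun i => ⟨a i, hmem i⟩, fun i j h => a.injective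
        (congrArg Subtype.val h)⟩, hinc⟩)
    · exact Or.inr (Set.mem_iUnion.2 ⟨⟨fun j => ⟨b j, hmem j⟩, fun i j h => b.injective
        (congrArg Subtype.val h)⟩, hinc⟩)
  refine (mk_le_mk_of_subset hsub).trans <| (mk_union_le _ _).trans <|
    (add_le_add ?_ ?_).trans (add_eq_self hκ).le
  · exact mk_iUnion_le_of_le hκ (mk_embedding_fin_le hκ hY m)
      fun a => (hS.finite_common_lines hm (emb a)).lt_aleph0.le.trans hκ
  · exact mk_iUnion_le_of_le hκ (mk_embedding_fin_le hκ hY n)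
      fun b => (hS.finite_common_points hn (emb b)).lt_aleph0.le.trans hκ

lemma Complete.mk_iclD_le (hS : Complete m n S) (hm : 1 ≤ m) (hn : 1 ≤ n) (hκ : ℵ₀ ≤ κ)
    {A : Set M} (hA : #A ≤ κ) : #(iclD m n S A) ≤ κ := by
  set f : Set M → Set M := fun Y => Y ∪ iStep m n S Y
  have hmono := monotone_iterate_apply_of_subset (fun Y => Set.subset_union_left) A (f := f)
  have hclosed : IClosedD m n S (⋃ k, f^[k] A) := by
    rw [iClosedD_iff_iStep_subset]
    refine (iStep_iUnion_subset hmono.directed_le).trans (Set.iUnion_subset fun k => ?_)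
    exact (Set.subset_union_right (s := f^[k] A)).trans
      (Set.subset_iUnion_of_subset (k + 1) (Function.iterate_succ_apply' f k A).ge)
  refine (mk_le_mk_of_subset (iclD_minimal hclosed (Set.subset_iUnion (f^[·] A) 0))).trans ?_
  exact mk_iUnion_iterate_le hκ (fun Y hY => (mk_union_le _ _).trans <|
    (add_le_add hY (hS.mk_iStep_le hm hn hκ hY)).trans (add_eq_self hκ).le) hA

end Complete

section Trace

variable {m n : ℕ} {M : Type u} {S : IncidenceData M}

lemma IClosedD.mem_of_infinite_lines_through {Y : Set M} (hY : IClosedD m n S Y) {x : M}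
    (h : {y ∈ Y | S.inc x y}.Infinite) : x ∈ Y := by
  let e : Fin n ↪ _ := Fin.valEmbedding.trans h.natEmbedding
  exact iClosedD_iff_iStep_subset.1 hY (Or.inr ⟨e.trans (Function.Embedding.subtype _),
    fun j => (e j).2.1, fun j => (e j).2.2⟩)

lemma IClosedD.mem_of_infinite_points_on {Y : Set M} (hY : IClosedD m n S Y) {x : M}
    (h : {y ∈ Y | S.inc y x}.Infinite) : x ∈ Y := by
  let e : Fin m ↪ _ := Fin.valEmbedding.trans h.natEmbedding
  exact iClosedD_iff_iStep_subset.1 hY (Or.inl ⟨e.trans (Function.Embedding.subtype _),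
    fun i => (e i).2.1, fun i => (e i).2.2⟩)

variable (m n S) in
/-- The elements of `cl B` that `A ⫝^I_C B` forces into `cl C` once `x ∈ cl (A ∪ C)`. -/
def iTrace (B : Set M) (x : M) : Set M :=
  {y ∈ iclD m n S B | y = x ∨ x ∉ iclD m n S B ∧ (S.inc x y ∨ S.inc y x)}

lemma finite_iTrace (B : Set M) (x : M) : (iTrace m n S B x).Finite := by
  by_cases hx : x ∈ iclD m n S B
  · exact (Set.finite_singleton x).subset fun y hy => hy.2.resolve_right fun h => h.1 hx
  have hlines : {y ∈ iclD m n S B | S.inc x y}.Finite :=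
    Set.not_infinite.1 fun h => hx ((iClosedD_iclD B).mem_of_infinite_lines_through h)
  have hpoints : {y ∈ iclD m n S B | S.inc y x}.Finite :=
    Set.not_infinite.1 fun h => hx ((iClosedD_iclD B).mem_of_infinite_points_on h)
  refine ((hlines.union hpoints).insert x).subset ?_
  rintro y ⟨hy, rfl | ⟨-, hxy | hyx⟩⟩
  · exact Set.mem_insert _ _
  · exact Or.inr (Or.inl ⟨hy, hxy⟩)
  · exact Or.inr (Or.inr ⟨hy, hyx⟩)

lemma indepI_of_iTrace_subset {A B C : Set M} (hCB : C ⊆ B)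
    (h : ∀ x ∈ iclD m n S (A ∪ C), iTrace m n S B x ⊆ iclD m n S C) :
    IndepI m n S A B C := by
  rw [IndepI, Set.union_eq_self_of_subset_right hCB]
  have hcl : ∀ x ∈ iclD m n S (A ∪ C), x ∈ iclD m n S B → x ∈ iclD m n S C :=
    fun x hx hxB => h x hx ⟨hxB, Or.inl rfl⟩
  refine ⟨Set.Subset.antisymm (fun x hx => hcl x hx.1 hx.2)
    (Set.subset_inter (iclD_mono Set.subset_union_right) (iclD_mono hCB)), ?_⟩
  intro x hx hxC y hy hyC
  have hxB : x ∉ iclD m n S B := fun hxB => hxC (hcl x hx hxB)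
  refine ⟨fun hxy => hyC (h x hx ⟨hy, Or.inr ⟨hxB, Or.inl hxy⟩⟩),
    fun hyx => hyC (h x hx ⟨hy, Or.inr ⟨hxB, Or.inr hyx⟩⟩), ?_⟩
  rintro rfl
  exact hxB hy

end Trace

lemma Complete.exists_subset_mk_le_iTrace_subset {m n : ℕ} {M : Type u} {S : IncidenceData M}
    {κ : Cardinal.{u}} (hS : Complete m n S) (hm : 1 ≤ m) (hn : 1 ≤ n) (hκ : ℵ₀ ≤ κ)
    {A : Set M} (hA : #A ≤ κ) (B : Set M) :
    ∃ C ⊆ B, #C ≤ κ ∧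
      ∀ x ∈ iclD m n S (A ∪ C), iTrace m n S B x ⊆ iclD m n S C := by
  choose G hGB hGfin hG using fun x =>
    exists_finite_subset_of_subset_iclD (finite_iTrace (m := m) (n := n) (S := S) B x)
      fun y hy => hy.1
  set f : Set M → Set M := fun C => C ∪ ⋃ x ∈ iclD m n S (A ∪ C), G x
  have hmono := monotone_iterate_apply_of_subset (fun _ => Set.subset_union_left) ∅ (f := f)
  have hfB : ∀ C ⊆ B, f C ⊆ B :=
    fun C h => Set.union_subset h (Set.iUnion₂_subset fun x _ => hGB x)
  refine ⟨⋃ k, f^[k] ∅, Set.iUnion_subset fun k =>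
    Function.Iterate.rec (· ⊆ B) (Set.empty_subset B) hfB k, ?_, ?_⟩
  · refine mk_iUnion_iterate_le hκ (fun C hC => ?_) (by simp)
    have hcl : #(iclD m n S (A ∪ C)) ≤ κ := hS.mk_iclD_le hm hn hκ
      ((mk_union_le _ _).trans ((add_le_add hA hC).trans (add_eq_self hκ).le))
    refine (mk_union_le _ _).trans ((add_le_add hC ?_).trans (add_eq_self hκ).le)
    rw [Set.biUnion_eq_iUnion]
    exact mk_iUnion_le_of_le hκ hcl fun x => (hGfin x).lt_aleph0.le.trans hκ
  · -- `x` already lies in the closure of some stage, whose successor contains the support `G x`.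
    intro x hx
    have hdir : Directed (· ⊆ ·) fun k => A ∪ f^[k] ∅ :=
      Monotone.directed_le fun k l h => Set.union_subset_union_right A (hmono h)
    rw [Set.union_iUnion] at hx
    obtain ⟨k, hk⟩ := Set.mem_iUnion.1 (iclD_iUnion_subset hdir hx)
    have hGk : G x ⊆ f^[k + 1] ∅ := by
      rw [Function.iterate_succ_apply']
      exact (Set.subset_biUnion_of_mem hk).trans Set.subset_union_right
    exact (hG x).trans (iclD_mono (hGk.trans (Set.subset_iUnion (f^[·] ∅) (k + 1))))

/-- Local character of `⫝^I` in a member of `T^c_{m,n}`: for all `A, B` there is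
`C ⊆ B` with `|C| ≤ |A| + ℵ₀` such that `A ⫝^I_C B`. -/
theorem statement_17 (m n : ℕ) (hm : 1 ≤ m) (hn : 1 ≤ n)
    {M : Type u} (S : IncidenceData M) (hS : Complete m n S) (A B : Set M) :
    ∃ C : Set M, C ⊆ B ∧
      Cardinal.mk C ≤ Cardinal.mk A + Cardinal.aleph0 ∧
      IndepI m n S A B C := by
  obtain ⟨C, hCB, hCcard, hC⟩ := hS.exists_subset_mk_le_iTrace_subset hm hn
    (le_add_self : ℵ₀ ≤ #A + ℵ₀) le_self_add B
  exact ⟨C, hCB, hCcard, indepI_of_iTrace_subset hCB hC⟩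
end

section
/- Let m, n ≥ 2. Then the relation ⫝^I fails base monotonicity: there exist a member N of T^c_{m,n}, subsets A, B ⊆ N, and a subset C ⊆ cl_N(B), such that A ⫝^I_∅ B but not A ⫝^I_C B. Indeed, one may take A = {a₁, a₂} with a₁ a point and a₂ a line, and B = {b, c₁, …, c_{n−1}} with b a point and c₁, …, c_{n−1} pairwise distinct lines, C = {c₁, …, c_{n−1}}. -/
universe u v

namespace Statement18Aux

/-- The model: points are `Fin (m+1)` (`inl`), lines are `Fin (2*n-1)` (`inr`).
Lines with index `< n-1` are incident to every point ("full" lines), and points with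
index `< m-1` are incident to every line ("universal" points); there is no other
incidence. -/
def S (m n : ℕ) : IncidenceData (Fin (m+1) ⊕ Fin (2*n-1)) where
  pt z := ∃ i, z = Sum.inl i
  ln z := ∃ j, z = Sum.inr j
  inc x y := ∃ i j, x = Sum.inl i ∧ y = Sum.inr j ∧ ((j : ℕ) < n - 1 ∨ (i : ℕ) < m - 1)
  pt_or_ln z := by
    cases z with
    | inl i => exact Or.inl ⟨i, rfl⟩
    | inr j => exact Or.inr ⟨j, rfl⟩
  not_pt_and_ln z := by rintro ⟨⟨i, rfl⟩, ⟨j, hj⟩⟩; simp at hj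
  inc_pt_ln x y := by rintro ⟨i, j, rfl, rfl, -⟩; exact ⟨⟨i, rfl⟩, ⟨j, rfl⟩⟩

lemma card_le {α : Type} {k l : ℕ} (c : Fin k → α) (t : Fin l → α)
    (ht : Function.Injective t) (h : ∀ j, ∃ i, t j = c i) : l ≤ k := by
  choose g hg using h
  have hginj : Function.Injective g := fun a b hab => ht (by rw [hg, hg, hab])
  simpa using Fintype.card_le_of_injective g hginj

lemma pigeon {k r N : ℕ} (p : Fin k → Fin N) (hp : Function.Injective p) (hk : r < k) :
    ∃ i, r ≤ (p i : ℕ) := by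
  by_contra h
  push_neg at h
  have := Fintype.card_le_of_injective (fun i => (⟨(p i : ℕ), h i⟩ : Fin r))
    (fun a b hab => hp (Fin.ext (by simpa using congrArg Fin.val hab)))
  simp at this
  omega

lemma subset_iclD {M : Type} (m n : ℕ) (T : IncidenceData M) (A : Set M) :
    A ⊆ iclD m n T A := fun x hx => Set.mem_sInter.2 fun _ hY => hY.2 hx

lemma iclD_eq_of_closed {M : Type} (m n : ℕ) (T : IncidenceData M) (A : Set M)
    (h : IClosedD m n T A) : iclD m n T A = A :=
  Set.Subset.antisymm (Set.sInter_subset_of_mem ⟨h, Set.Subset.refl A⟩)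
    (subset_iclD m n T A)

end Statement18Aux

open Statement18Aux

/-- For `m, n ≥ 2` the relation `⫝^I` fails base monotonicity: there are a member `N`
of `T^c_{m,n}`, sets `A = {a₁, a₂}` (`a₁` a point, `a₂` a line) and
`B = {b, c₁, …, c_{n-1}}` (`b` a point, the `cⱼ` pairwise distinct lines), and a subset
`C = {c₁, …, c_{n-1}} ⊆ cl_N(B)` such that `A ⫝^I_∅ B` but not `A ⫝^I_C B`. -/
theorem statement_18 (m n : ℕ) (hm : 2 ≤ m) (hn : 2 ≤ n) :
    ∃ (N : Type) (S : IncidenceData N), Complete m n S ∧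
      ∃ (a₁ a₂ b : N) (c : Fin (n - 1) → N),
        S.pt a₁ ∧ S.ln a₂ ∧ S.pt b ∧ (∀ j, S.ln (c j)) ∧ Function.Injective c ∧
        Set.range c ⊆ iclD m n S (insert b (Set.range c)) ∧
        IndepI m n S {a₁, a₂} (insert b (Set.range c)) ∅ ∧
        ¬IndepI m n S {a₁, a₂} (insert b (Set.range c)) (Set.range c) := by
  classical
  refine ⟨Fin (m+1) ⊕ Fin (2*n-1), S m n, ⟨?_, ?_, ?_⟩, ?_⟩
  · -- KFree
    rintro ⟨a, b, ha, hb, hpa, hlb, hinc⟩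
    choose p hp using hpa
    choose q hq using hlb
    have hpinj : Function.Injective p := fun i j hij => ha (by rw [hp, hp, hij])
    have hqinj : Function.Injective q := fun i j hij => hb (by rw [hq, hq, hij])
    obtain ⟨i0, hi0⟩ := pigeon p hpinj (show m - 1 < m by omega)
    obtain ⟨j0, hj0⟩ := pigeon q hqinj (show n - 1 < n by omega)
    obtain ⟨i', j', h1, h2, hor⟩ := hinc i0 j0
    rw [hp i0] at h1
    rw [hq j0] at h2
    have e1 := Sum.inl_injective h1
    have e2 := Sum.inr_injective h2
    rw [← e1, ← e2] at hor
    omega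
  · -- every m points have exactly the n-1 full lines as common lines
    intro a ha hpa
    choose p hp using hpa
    have hpinj : Function.Injective p := fun i j hij => ha (by rw [hp, hp, hij])
    refine ⟨fun j => Sum.inr ⟨(j : ℕ), by omega⟩, ?_, fun j => ⟨_, rfl⟩, ?_, ?_⟩
    · intro j1 j2 h
      have h' := Sum.inr_injective h
      exact Fin.ext (by simpa using congrArg Fin.val h')
    · intro i j
      exact ⟨p i, ⟨(j : ℕ), by omega⟩, hp i, rfl, Or.inl (by simpa using j.isLt)⟩
    · rintro y ⟨q, rfl⟩ hy
      by_cases hq : (q : ℕ) < n - 1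
      · exact ⟨⟨(q : ℕ), hq⟩, congrArg Sum.inr (Fin.ext rfl)⟩
      · exfalso
        have hall : ∀ i, (p i : ℕ) < m - 1 := by
          intro i
          obtain ⟨i', j', h1, h2, hor⟩ := hy i
          rw [hp i] at h1
          have e1 := Sum.inl_injective h1
          have e2 := Sum.inr_injective h2
          rw [← e1] at hor
          rw [← e2] at hor
          omega
        obtain ⟨i0, hi0⟩ := pigeon p hpinj (show m - 1 < m by omega)
        exact absurd (hall i0) (by omega)
  · -- every n lines have exactly the m-1 universal points as common points
    intro b hb hlb
    choose q hq using hlb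
    have hqinj : Function.Injective q := fun i j hij => hb (by rw [hq, hq, hij])
    refine ⟨fun i => Sum.inl ⟨(i : ℕ), by omega⟩, ?_, fun i => ⟨_, rfl⟩, ?_, ?_⟩
    · intro i1 i2 h
      have h' := Sum.inl_injective h
      exact Fin.ext (by simpa using congrArg Fin.val h')
    · intro i j
      exact ⟨⟨(i : ℕ), by omega⟩, q j, rfl, hq j, Or.inr (by simpa using i.isLt)⟩
    · rintro x ⟨p, rfl⟩ hx
      obtain ⟨j0, hj0⟩ := pigeon q hqinj (show n - 1 < n by omega)
      obtain ⟨i', j', h1, h2, hor⟩ := hx j0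
      rw [hq j0] at h2
      have e1 := Sum.inl_injective h1
      have e2 := Sum.inr_injective h2
      rw [← e1] at hor
      rw [← e2] at hor
      have hp' : (p : ℕ) < m - 1 := by omega
      exact ⟨⟨(p : ℕ), hp'⟩, congrArg Sum.inl (Fin.ext rfl)⟩
  · -- the witnesses
    refine ⟨Sum.inl ⟨m-1, by omega⟩, Sum.inr ⟨2*n-2, by omega⟩, Sum.inl ⟨m, by omega⟩,
      fun j => Sum.inr ⟨n-1+(j : ℕ), by have := j.isLt; omega⟩,
      ⟨_, rfl⟩, ⟨_, rfl⟩, ⟨_, rfl⟩, fun j => ⟨_, rfl⟩, ?_, ?_, ?_, ?_⟩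
    · -- c injective
      intro j1 j2 h
      have h' := congrArg Fin.val (Sum.inr_injective h)
      simp only [Fin.val_mk] at h'
      exact Fin.ext (by omega)
    · -- range c ⊆ icl (insert b (range c))
      intro x hx
      exact subset_iclD m n (S m n) _ (Set.mem_insert_of_mem _ hx)
    · -- IndepI over ∅
      have hclE : IClosedD m n (S m n) ∅ := by
        constructor
        · intro a y _ _ hmem _
          exact absurd (hmem ⟨0, by omega⟩) (Set.notMem_empty _)
        · intro b x _ _ hmem _
          exact absurd (hmem ⟨0, by omega⟩) (Set.notMem_empty _)
      have hclA : IClosedD m n (S m n)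
          {Sum.inl ⟨m-1, by omega⟩, Sum.inr ⟨2*n-2, by omega⟩} := by
        constructor
        · intro a y ha hpa hmem _
          exfalso
          have key : ∀ i : Fin m, a i = Sum.inl ⟨m-1, by omega⟩ := by
            intro i
            rcases hmem i with h | h
            · exact h
            · obtain ⟨i', hi'⟩ := hpa i
              rw [Set.mem_singleton_iff] at h
              rw [h] at hi'
              simp at hi'
          have h01 : (⟨0, by omega⟩ : Fin m) = ⟨1, by omega⟩ := ha (by simp only [key])
          simp [Fin.ext_iff] at h01
        · intro b x hb hlb hmem _
          exfalso
          have key : ∀ j : Fin n, b j = Sum.inr ⟨2*n-2, by omega⟩ := by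
            intro j
            rcases hmem j with h | h
            · obtain ⟨j', hj'⟩ := hlb j
              rw [h] at hj'
              simp at hj'
            · exact h
          have h01 : (⟨0, by omega⟩ : Fin n) = ⟨1, by omega⟩ := hb (by simp only [key])
          simp [Fin.ext_iff] at h01
      have hclB : IClosedD m n (S m n)
          (insert (Sum.inl ⟨m, by omega⟩)
            (Set.range (fun j : Fin (n-1) =>
              (Sum.inr ⟨n-1+(j : ℕ), by have := j.isLt; omega⟩ :
                Fin (m+1) ⊕ Fin (2*n-1))))) := by
        constructor
        · intro a y ha hpa hmem _
          exfalso
          have key : ∀ i : Fin m, a i = Sum.inl ⟨m, by omega⟩ := by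
            intro i
            rcases hmem i with h | h
            · exact h
            · obtain ⟨j, hj⟩ := h
              obtain ⟨i', hi'⟩ := hpa i
              rw [← hj] at hi'
              simp at hi'
          have h01 : (⟨0, by omega⟩ : Fin m) = ⟨1, by omega⟩ := ha (by simp only [key])
          simp [Fin.ext_iff] at h01
        · intro b x hb hlb hmem _
          have key : ∀ j : Fin n, ∃ i : Fin (n-1),
              b j = Sum.inr ⟨n-1+(i : ℕ), by have := i.isLt; omega⟩ := by
            intro j
            rcases hmem j with h | h
            · obtain ⟨j', hj'⟩ := hlb j
              rw [h] at hj'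
              simp at hj'
            · exact (Set.mem_range.mp h).imp fun i hi => hi.symm
          have := card_le _ _ hb key
          omega
      have hclC : IClosedD m n (S m n)
          (Set.range (fun j : Fin (n-1) =>
            (Sum.inr ⟨n-1+(j : ℕ), by have := j.isLt; omega⟩ :
              Fin (m+1) ⊕ Fin (2*n-1)))) := by
        constructor
        · intro a y ha hpa hmem _
          exfalso
          obtain ⟨j, hj⟩ := hmem ⟨0, by omega⟩
          obtain ⟨i', hi'⟩ := hpa ⟨0, by omega⟩
          rw [← hj] at hi'
          simp at hi'
        · intro b x hb hlb hmem _
          exfalso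
          have := card_le _ _ hb
            (fun j => (Set.mem_range.mp (hmem j)).imp fun i hi => hi.symm)
          omega
      constructor
      · rw [Set.union_empty, Set.union_empty, iclD_eq_of_closed _ _ _ _ hclA,
          iclD_eq_of_closed _ _ _ _ hclB, iclD_eq_of_closed _ _ _ _ hclE]
        ext z
        simp only [Set.mem_inter_iff, Set.mem_insert_iff, Set.mem_singleton_iff,
          Set.mem_range, Set.mem_empty_iff_false, iff_false, not_and]
        rintro (h1 | h1) (h2 | ⟨j, h2⟩)
        · rw [h1] at h2
          simp [Fin.ext_iff] at h2
          omega
        · rw [h1] at h2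
          simp at h2
        · rw [h1] at h2
          simp at h2
        · rw [h1] at h2
          have := congrArg Fin.val (Sum.inr_injective h2)
          simp only [Fin.val_mk] at this
          have := j.isLt
          omega
      · intro x hx hx0 y hy hy0
        rw [Set.union_empty, iclD_eq_of_closed _ _ _ _ hclA] at hx
        rw [Set.union_empty, iclD_eq_of_closed _ _ _ _ hclB] at hy
        clear hx0 hy0
        simp only [Set.mem_insert_iff, Set.mem_singleton_iff, Set.mem_range] at hx hy
        rcases hx with rfl | rfl <;> rcases hy with rfl | ⟨j, rfl⟩
        · refine ⟨?_, ?_, ?_⟩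
          · rintro ⟨i', j', -, h, -⟩; simp at h
          · rintro ⟨i', j', -, h, -⟩; simp at h
          · intro h
            have := congrArg Fin.val (Sum.inl_injective h)
            simp only [Fin.val_mk] at this
            omega
        · refine ⟨?_, ?_, ?_⟩
          · rintro ⟨i', j', hx', hy', hor⟩
            have e1 := congrArg Fin.val (Sum.inl_injective hx')
            have e2 := congrArg Fin.val (Sum.inr_injective hy')
            simp only [Fin.val_mk] at e1 e2
            have := j.isLt
            omega
          · rintro ⟨i', j', h, -, -⟩; simp at h
          · intro h; simp at h
        · refine ⟨?_, ?_, ?_⟩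
          · rintro ⟨i', j', h, -, -⟩; simp at h
          · rintro ⟨i', j', hx', hy', hor⟩
            have e1 := congrArg Fin.val (Sum.inl_injective hx')
            have e2 := congrArg Fin.val (Sum.inr_injective hy')
            simp only [Fin.val_mk] at e1 e2
            omega
          · intro h; simp at h
        · refine ⟨?_, ?_, ?_⟩
          · rintro ⟨i', j', h, -, -⟩; simp at h
          · rintro ⟨i', j', h, -, -⟩; simp at h
          · intro h
            have := congrArg Fin.val (Sum.inr_injective h)
            simp only [Fin.val_mk] at this
            have := j.isLt
            omega
    · -- not IndepI over C
      have hclC : IClosedD m n (S m n)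
          (Set.range (fun j : Fin (n-1) =>
            (Sum.inr ⟨n-1+(j : ℕ), by have := j.isLt; omega⟩ :
              Fin (m+1) ⊕ Fin (2*n-1)))) := by
        constructor
        · intro a y ha hpa hmem _
          exfalso
          obtain ⟨j, hj⟩ := hmem ⟨0, by omega⟩
          obtain ⟨i', hi'⟩ := hpa ⟨0, by omega⟩
          rw [← hj] at hi'
          simp at hi'
        · intro b x hb hlb hmem _
          exfalso
          have := card_le _ _ hb
            (fun j => (Set.mem_range.mp (hmem j)).imp fun i hi => hi.symm)
          omega
      rintro ⟨-, h2⟩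
      refine (h2 (Sum.inr ⟨0, by omega⟩) ?_ ?_ (Sum.inl ⟨m, by omega⟩) ?_ ?_).2.1
        ⟨⟨m, by omega⟩, ⟨0, by omega⟩, rfl, rfl, Or.inl (by simp only [Fin.val_mk]; omega)⟩
      · -- the full line 0 lies in the closure of A ∪ C
        refine Set.mem_sInter.2 ?_
        rintro Y ⟨⟨hY1, hY2⟩, hYsub⟩
        have hW : ∀ w : Fin (m+1), (w : ℕ) < m - 1 → Sum.inl w ∈ Y := by
          intro w hw
          refine hY2 (fun j : Fin n => Sum.inr ⟨n-1+(j : ℕ), by have := j.isLt; omega⟩)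
            (Sum.inl w) ?_ (fun j => ⟨_, rfl⟩) ?_ ?_
          · intro j1 j2 h
            have h' := congrArg Fin.val (Sum.inr_injective h)
            simp only [Fin.val_mk] at h'
            exact Fin.ext (by omega)
          · intro j
            by_cases hj : (j : ℕ) < n - 1
            · refine hYsub (Or.inr ⟨⟨(j : ℕ), hj⟩, ?_⟩)
              exact congrArg Sum.inr (Fin.ext rfl)
            · refine hYsub (Or.inl (Or.inr ?_))
              exact congrArg Sum.inr (Fin.ext (by
                simp only [Fin.val_mk]
                have := j.isLt
                omega))
          · intro j
            exact ⟨w, ⟨n-1+(j : ℕ), by have := j.isLt; omega⟩, rfl, rfl, Or.inr hw⟩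
        refine hY1 (fun i : Fin m => Sum.inl ⟨(i : ℕ), by have := i.isLt; omega⟩)
          (Sum.inr ⟨0, by omega⟩) ?_ (fun i => ⟨_, rfl⟩) ?_ ?_
        · intro i1 i2 h
          have h' := congrArg Fin.val (Sum.inl_injective h)
          simp only [Fin.val_mk] at h'
          exact Fin.ext (by omega)
        · intro i
          by_cases hi : (i : ℕ) < m - 1
          · exact hW ⟨(i : ℕ), by have := i.isLt; omega⟩ hi
          · refine hYsub (Or.inl (Or.inl ?_))
            exact congrArg Sum.inl (Fin.ext (by
              simp only [Fin.val_mk]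
              have := i.isLt
              omega))
        · intro i
          exact ⟨⟨(i : ℕ), by have := i.isLt; omega⟩, ⟨0, by omega⟩, rfl, rfl,
            Or.inl (by simp only [Fin.val_mk]; omega)⟩
      · -- the full line 0 is not in the closure of C
        rw [iclD_eq_of_closed _ _ _ _ hclC]
        rintro ⟨j, hj⟩
        have := congrArg Fin.val (Sum.inr_injective hj)
        simp only [Fin.val_mk] at this
        omega
      · -- b lies in the closure of B ∪ C
        exact subset_iclD m n (S m n) _ (Or.inl (Or.inl rfl))
      · -- b is not in the closure of C
        rw [iclD_eq_of_closed _ _ _ _ hclC]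
        rintro ⟨j, hj⟩
        simp at hj
end

section
/- Let m ≥ 1. Any two countably infinite existentially closed K_{m,1}-free incidence structures are isomorphic. -/
/-! Write `m = n + 1`. In an existentially closed `K_{m,1}`-free incidence structure there are
infinitely many points, every line carries exactly `n` points, and every `n`-set of points is the
point set of infinitely many lines: each fact is witnessed by adjoining one new point or line,
which keeps the structure `K_{m,1}`-free. So lines are classified by their point sets, with
countably infinite fibres over the `n`-sets and empty fibres elsewhere. Hence, for countable
structures, an arbitrary bijection of points extends fibrewise to a bijection of lines, and the
two together preserve incidence. -/

open FirstOrder FirstOrder.Language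

universe u v

open Set Function

lemma vecCons_eta_one {α : Type*} (x : Fin 1 → α) : ![x 0] = x := by
  funext i; fin_cases i; rfl

lemma vecCons_eta_two {α : Type*} (x : Fin 2 → α) : ![x 0, x 1] = x := by
  funext i; fin_cases i <;> rfl

lemma infinite_of_forall_exists_notMem_finset {α : Type*} (h : ∀ s : Finset α, ∃ x, x ∉ s) :
    Infinite α := by
  refine ⟨fun hfin => ?_⟩
  have := Fintype.ofFinite α
  obtain ⟨x, hx⟩ := h Finset.univ
  exact hx (Finset.mem_univ x)

lemma exists_injective_fin_mapsTo_iff {α : Type*} (s : Set α) (n : ℕ) :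
    (∃ a : Fin n → α, Injective a ∧ ∀ i, a i ∈ s) ↔ (n : ℕ∞) ≤ s.encard := by
  constructor
  · rintro ⟨a, ha, has⟩
    simpa using ha.encard_range.trans (encard_le_encard (range_subset_iff.2 has))
  · intro h
    obtain ⟨y, -⟩ := Fin.Embedding.exists_embedding_disjoint_range_of_add_le_ENat_card
      (α := s) (s := ∅) (n := n) (by simpa using h)
    exact ⟨fun i => y i, Subtype.val_injective.comp y.injective, fun i => (y i).2⟩

namespace FirstOrder.Language.BoundedFormula

lemma IsQF.iInf {L : Language} {α β : Type*} {n : ℕ} [Finite β] {f : β → L.BoundedFormula α n}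
    (h : ∀ b, (f b).IsQF) : (BoundedFormula.iInf f).IsQF := by
  let _ := Fintype.ofFinite β
  simp only [BoundedFormula.iInf]
  induction (Finset.univ : Finset β).toList with
  | nil => exact IsQF.top
  | cons b l ih => exact (h b).inf ih

end FirstOrder.Language.BoundedFormula

section Incidence
variable {M : Type u} [IncLang.Structure M]

def pointsOn (l : M) : Set M := {p | incL p l}

@[simp] lemma mem_pointsOn {p l : M} : p ∈ pointsOn l ↔ incL p l := Iff.rfl

lemma IsIncidenceL.lnL_iff_not_ptL (hM : IsIncidenceL M) (x : M) : lnL x ↔ ¬ptL x :=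
  ⟨fun hl hp => hM.2.1 x ⟨hp, hl⟩, (hM.1 x).resolve_left⟩

theorem kFreeL_succ_one_iff {n : ℕ} (hM : IsIncidenceL M) :
    KFreeL (n + 1) 1 M ↔ ∀ l : M, lnL l → (pointsOn l).encard ≤ n := by
  simp only [KFreeL, ← ENat.lt_add_one_iff (ENat.natCast_ne_top n)]
  constructor
  · intro hK l hl
    by_contra! hle
    obtain ⟨a, ha, hal⟩ := (exists_injective_fin_mapsTo_iff _ _).2 (by exact_mod_cast hle)
    exact hK ⟨a, fun _ => l, ha, fun i j _ => Subsingleton.elim i j,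
      fun i => (hM.2.2 _ _ (hal i)).1, fun _ => hl, fun i _ => hal i⟩
  · rintro h ⟨a, l, ha, -, -, hl, hal⟩
    refine (h (l 0) (hl 0)).not_ge ?_
    exact_mod_cast (exists_injective_fin_mapsTo_iff _ _).1 ⟨a, ha, fun i => hal i 0⟩

end Incidence

section Adjoin
variable {M : Type u} [IncLang.Structure M]

/-- `Option M` with `none` a new point (if `b`) or a new line (if `!b`), incident exactly to the
elements of `T`. -/
@[reducible] def adjoin (b : Bool) (T : Set M) : IncLang.Structure (Option M) where
  funMap f := Empty.elim f
  RelMap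
    | IncRel.pt, v => (v 0).elim (b = true) ptL
    | IncRel.lin, v => (v 0).elim (b = false) lnL
    | IncRel.inc, v => match v 0, v 1 with
        | some a, some c => incL a c
        | none, some c => b = true ∧ c ∈ T
        | some a, none => b = false ∧ a ∈ T
        | none, none => False

variable (b : Bool) (T : Set M) (a c : M)

@[simp] lemma adjoin_ptL_none : letI := adjoin b T; ptL (none : Option M) ↔ b = true := Iff.rfl
@[simp] lemma adjoin_ptL_some : letI := adjoin b T; ptL (some a) ↔ ptL a := Iff.rfl
@[simp] lemma adjoin_lnL_none : letI := adjoin b T; lnL (none : Option M) ↔ b = false := Iff.rfl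
@[simp] lemma adjoin_lnL_some : letI := adjoin b T; lnL (some a) ↔ lnL a := Iff.rfl
@[simp] lemma adjoin_incL_some_some : letI := adjoin b T; incL (some a) (some c) ↔ incL a c :=
  Iff.rfl
@[simp] lemma adjoin_incL_none_some :
    letI := adjoin b T; incL none (some c) ↔ b = true ∧ c ∈ T := Iff.rfl
@[simp] lemma adjoin_incL_some_none :
    letI := adjoin b T; incL (some a) none ↔ b = false ∧ a ∈ T := Iff.rfl
@[simp] lemma adjoin_incL_none_none : letI := adjoin b T; ¬incL (none : Option M) none := id

def adjoinEmbedding : letI := adjoin b T; M ↪[IncLang] Option M :=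
  letI := adjoin b T
  { toFun := some
    inj' := Option.some_injective M
    map_fun' := fun f => Empty.elim f
    map_rel' := fun r x => by
      cases r with
      | pt | lin => rw [← vecCons_eta_one x]; rfl
      | inc => rw [← vecCons_eta_two x]; rfl }

@[simp] lemma coe_adjoinEmbedding : ⇑(adjoinEmbedding b T) = some := rfl

lemma isIncidenceL_adjoin (hM : IsIncidenceL M)
    (hT : ∀ t ∈ T, if b then lnL t else ptL t) : letI := adjoin b T; IsIncidenceL (Option M) := by
  let _ := adjoin b T
  refine ⟨?_, ?_, ?_⟩
  · rintro (_ | x)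
    · cases b <;> simp
    · simpa using hM.1 x
  · rintro (_ | x)
    · cases b <;> simp
    · simpa using hM.2.1 x
  · rintro (_ | x) (_ | y) h
    · simp at h
    · obtain ⟨rfl, hy⟩ := (adjoin_incL_none_some _ _ _).1 h
      simpa using hT y hy
    · obtain ⟨rfl, hx⟩ := (adjoin_incL_some_none _ _ _).1 h
      simpa using hT x hx
    · simpa using hM.2.2 x y h

variable {n : ℕ} {b T}

lemma encard_pointsOn_some_le (c : M) :
    letI := adjoin b T; (pointsOn (some c)).encard ≤ (pointsOn c).encard + 1 := by
  let _ := adjoin b T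
  calc (pointsOn (some c)).encard ≤ (insert none (some '' pointsOn c)).encard := by
        refine encard_le_encard fun | none, _ => mem_insert _ _ | some p, h => ?_
        exact mem_insert_of_mem _ (mem_image_of_mem _ ((adjoin_incL_some_some b T p c).1 h))
    _ ≤ (pointsOn c).encard + 1 := by
        rw [← (Option.some_injective M).encard_image]
        exact encard_insert_le _ _

lemma pointsOn_some_eq_image {c : M} (hc : ¬(b = true ∧ c ∈ T)) :
    letI := adjoin b T; pointsOn (some c) = some '' pointsOn c := by
  let _ := adjoin b T
  ext (_ | p) <;> simp [hc]

lemma kFreeL_adjoin_true (hM : IsIncidenceL M) (hK : KFreeL (n + 1) 1 M)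
    (hT : ∀ t ∈ T, lnL t ∧ (pointsOn t).encard < n) :
    letI := adjoin true T; KFreeL (n + 1) 1 (Option M) := by
  let _ := adjoin true T
  have hI := isIncidenceL_adjoin true T hM fun t ht => (hT t ht).1
  rw [kFreeL_succ_one_iff hM] at hK
  rw [kFreeL_succ_one_iff hI]
  rintro (_ | c) hc
  · simp at hc
  · rw [adjoin_lnL_some] at hc
    by_cases hcT : c ∈ T
    · exact (encard_pointsOn_some_le c).trans (Order.add_one_le_of_lt (hT c hcT).2)
    · rw [pointsOn_some_eq_image (by simp [hcT]), (Option.some_injective M).encard_image]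
      exact hK c hc

lemma kFreeL_adjoin_false (hM : IsIncidenceL M) (hK : KFreeL (n + 1) 1 M)
    (hT : ∀ t ∈ T, ptL t) (hTn : T.encard ≤ n) :
    letI := adjoin false T; KFreeL (n + 1) 1 (Option M) := by
  let _ := adjoin false T
  have hI := isIncidenceL_adjoin false T hM hT
  rw [kFreeL_succ_one_iff hM] at hK
  rw [kFreeL_succ_one_iff hI]
  rintro (_ | c) hc
  · have hpts : pointsOn (none : Option M) = some '' T := by
      ext (_ | p) <;> simp
    rwa [hpts, (Option.some_injective M).encard_image]
  · rw [pointsOn_some_eq_image (by simp), (Option.some_injective M).encard_image]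
    exact hK c hc

end Adjoin

section Formulas

-- `simp` cannot use `BoundedFormula.realize_rel₁` here: `IncRel 1` is not reducibly
-- `IncLang.Relations 1`, so the relation symbols need their own realization lemmas.
section Realize
variable {α N : Type*} [IncLang.Structure N] {n : ℕ} (t t' : IncLang.Term (α ⊕ Fin n))
  (v : α → N) (xs : Fin n → N)

@[simp] lemma realize_boundedFormula₁_pt :
    (Relations.boundedFormula₁ IncRel.pt t).Realize v xs ↔ ptL (t.realize (Sum.elim v xs)) :=
  BoundedFormula.realize_rel₁

@[simp] lemma realize_boundedFormula₁_lin :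
    (Relations.boundedFormula₁ IncRel.lin t).Realize v xs ↔ lnL (t.realize (Sum.elim v xs)) :=
  BoundedFormula.realize_rel₁

@[simp] lemma realize_boundedFormula₂_inc :
    (Relations.boundedFormula₂ IncRel.inc t t').Realize v xs ↔
      incL (t.realize (Sum.elim v xs)) (t'.realize (Sum.elim v xs)) :=
  BoundedFormula.realize_rel₂

end Realize

variable {M : Type u}

noncomputable def adjoinedFormula (b : Bool) (T s : Finset M) : IncLang.BoundedFormula M 1 :=
  let x : IncLang.Term (M ⊕ Fin 1) := Term.var (Sum.inr 0)
  let c (a : M) : IncLang.Term (M ⊕ Fin 1) := Term.var (Sum.inl a)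
  ((if b then Relations.boundedFormula₁ IncRel.pt x else Relations.boundedFormula₁ IncRel.lin x) ⊓
    BoundedFormula.iInf fun t : T =>
      if b then Relations.boundedFormula₂ IncRel.inc x (c t)
      else Relations.boundedFormula₂ IncRel.inc (c t) x) ⊓
    BoundedFormula.iInf fun a : s => (x.bdEqual (c a)).not

lemma isQF_adjoinedFormula (b : Bool) (T s : Finset M) : (adjoinedFormula b T s).IsQF := by
  refine (BoundedFormula.IsQF.inf ?_ (.iInf fun t => ?_)).inf (.iInf fun a => ?_)
  · cases b <;> exact (BoundedFormula.IsAtomic.rel _ _).isQF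
  · cases b <;> exact (BoundedFormula.IsAtomic.rel _ _).isQF
  · exact (BoundedFormula.IsAtomic.equal _ _).isQF.not

lemma realize_adjoinedFormula {N : Type*} [IncLang.Structure N] (b : Bool) (T s : Finset M)
    (v : M → N) (xs : Fin 1 → N) :
    (adjoinedFormula b T s).Realize v xs ↔ (if b then ptL (xs 0) else lnL (xs 0)) ∧
      (∀ t ∈ T, if b then incL (xs 0) (v t) else incL (v t) (xs 0)) ∧ ∀ a ∈ s, xs 0 ≠ v a := by
  cases b <;> simp [adjoinedFormula, BoundedFormula.realize_iInf, and_assoc]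

end Formulas

section ExistentiallyClosed
variable {M : Type u} [IncLang.Structure M]

theorem IsECL.exists_adjoined {m : ℕ} (hM : IsECL m 1 M) {b : Bool} {T : Finset M}
    (hT : ∀ t ∈ T, if b then lnL t else ptL t)
    (hK : letI := adjoin b (T : Set M); KFreeL m 1 (Option M)) (s : Finset M) :
    ∃ x ∉ s, (if b then ptL x else lnL x) ∧ ∀ t ∈ T, if b then incL x t else incL t x := by
  let _ := adjoin b (T : Set M)
  have hnone : (adjoinedFormula b T s).Realize (adjoinEmbedding b (T : Set M)) ![none] := by
    rw [realize_adjoinedFormula]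
    cases b <;> simp
  obtain ⟨xs, hxs⟩ := hM.2.2 (Option M) (isIncidenceL_adjoin b T hM.1 hT) hK
    (adjoinEmbedding b (T : Set M)) 1 (adjoinedFormula b T s) (isQF_adjoinedFormula b T s)
    ⟨_, hnone⟩
  rw [realize_adjoinedFormula] at hxs
  exact ⟨xs 0, fun h => hxs.2.2 _ h rfl, hxs.1, hxs.2.1⟩

variable {n : ℕ} (hM : IsECL (n + 1) 1 M)
include hM

theorem IsECL.exists_ptL_notMem (s : Finset M) : ∃ p ∉ s, ptL p := by
  obtain ⟨p, hps, hp, -⟩ := hM.exists_adjoined (b := true) (T := ∅) (by simp)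
    (kFreeL_adjoin_true hM.1 hM.2.1 (by simp)) s
  exact ⟨p, hps, hp⟩

theorem IsECL.encard_pointsOn {l : M} (hl : lnL l) : (pointsOn l).encard = n := by
  refine le_antisymm ((kFreeL_succ_one_iff hM.1).1 hM.2.1 l hl) (not_lt.1 fun hlt => ?_)
  have hfin : (pointsOn l).Finite := finite_of_encard_le_coe hlt.le
  obtain ⟨p, hp, -, hpl⟩ := hM.exists_adjoined (b := true) (T := {l}) (by simpa)
    (kFreeL_adjoin_true hM.1 hM.2.1 (by simpa using ⟨hl, hlt⟩)) hfin.toFinset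
  exact hp (hfin.mem_toFinset.2 (by simpa using hpl))

theorem IsECL.exists_lnL_pointsOn_eq {S : Finset M} (hS : ∀ p ∈ S, ptL p) (hcard : S.card = n)
    (s : Finset M) : ∃ l ∉ s, lnL l ∧ pointsOn l = S := by
  obtain ⟨l, hls, hl, hSl⟩ := hM.exists_adjoined (b := false) (T := S) (by simpa)
    (kFreeL_adjoin_false hM.1 hM.2.1 hS (by simp [hcard])) s
  refine ⟨l, hls, hl, ((S.finite_toSet).eq_of_subset_of_encard_le (fun p hp => ?_) ?_).symm⟩
  · simpa using hSl p hp
  · simp [hM.encard_pointsOn hl, hcard]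

end ExistentiallyClosed

section Classification
variable {M : Type u} {N : Type v} [IncLang.Structure M] [IncLang.Structure N]

abbrev Pts (M : Type u) [IncLang.Structure M] : Type u := {x : M // ptL x}

abbrev Lns (M : Type u) [IncLang.Structure M] : Type u := {x : M // lnL x}

def Lns.pointSet (l : Lns M) : Set (Pts M) := {p | incL p.1 l.1}

@[simp] lemma Lns.mem_pointSet {p : Pts M} {l : Lns M} : p ∈ l.pointSet ↔ incL p.1 l.1 := Iff.rfl

open scoped Classical in
noncomputable def IsIncidenceL.equivSum (hM : IsIncidenceL M) : M ≃ Pts M ⊕ Lns M :=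
  (Equiv.sumCompl ptL).symm.trans
    (Equiv.sumCongr (Equiv.refl _) (Equiv.subtypeEquivRight fun x => (hM.lnL_iff_not_ptL x).symm))

@[simp] lemma IsIncidenceL.equivSum_symm_inl (hM : IsIncidenceL M) (p : Pts M) :
    hM.equivSum.symm (.inl p) = p.1 := rfl

@[simp] lemma IsIncidenceL.equivSum_symm_inr (hM : IsIncidenceL M) (l : Lns M) :
    hM.equivSum.symm (.inr l) = l.1 := rfl

lemma IsIncidenceL.equivSum_val_pt (hM : IsIncidenceL M) (p : Pts M) : hM.equivSum p.1 = .inl p :=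
  hM.equivSum.eq_symm_apply.1 (hM.equivSum_symm_inl p).symm

lemma IsIncidenceL.equivSum_val_ln (hM : IsIncidenceL M) (l : Lns M) : hM.equivSum l.1 = .inr l :=
  hM.equivSum.eq_symm_apply.1 (hM.equivSum_symm_inr l).symm

lemma IsIncidenceL.nonempty_equiv_of_equiv (hM : IsIncidenceL M) (hN : IsIncidenceL N)
    (e : M ≃ N) (hpt : ∀ x, ptL (e x) ↔ ptL x)
    (hinc : ∀ x y, ptL x → lnL y → (incL (e x) (e y) ↔ incL x y)) :
    Nonempty (M ≃[IncLang] N) := by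
  have hln (x : M) : lnL (e x) ↔ lnL x := by
    rw [hM.lnL_iff_not_ptL, hN.lnL_iff_not_ptL, hpt]
  have hinc' (x y : M) : incL (e x) (e y) ↔ incL x y := by
    by_cases hxy : ptL x ∧ lnL y
    · exact hinc x y hxy.1 hxy.2
    · refine iff_of_false (fun h => hxy ?_) (fun h => hxy (hM.2.2 x y h))
      rw [← hpt, ← hln]
      exact hN.2.2 _ _ h
  refine ⟨{ toEquiv := e, map_fun' := fun f => Empty.elim f, map_rel' := fun r x => ?_ }⟩
  cases r with
  | pt => rw [← vecCons_eta_one (e.toFun ∘ x), ← vecCons_eta_one x]; exact hpt (x 0)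
  | lin => rw [← vecCons_eta_one (e.toFun ∘ x), ← vecCons_eta_one x]; exact hln (x 0)
  | inc => rw [← vecCons_eta_two (e.toFun ∘ x), ← vecCons_eta_two x]; exact hinc' (x 0) (x 1)

theorem IsIncidenceL.nonempty_equiv_of_pts_lns (hM : IsIncidenceL M) (hN : IsIncidenceL N)
    (eP : Pts M ≃ Pts N) (eL : Lns M ≃ Lns N)
    (h : ∀ p l, incL (eP p).1 (eL l).1 ↔ incL p.1 l.1) : Nonempty (M ≃[IncLang] N) := by
  let e : M ≃ N := hM.equivSum.trans ((eP.sumCongr eL).trans hN.equivSum.symm)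
  have he_pt (p : Pts M) : e p.1 = eP p := by simp [e, hM.equivSum_val_pt]
  have he_ln (l : Lns M) : e l.1 = eL l := by simp [e, hM.equivSum_val_ln]
  refine hM.nonempty_equiv_of_equiv hN e (fun x => ?_) fun x y hx hy => ?_
  · rcases hM.1 x with hx | hx
    · have hex : ptL (e x) := he_pt ⟨x, hx⟩ ▸ (eP _).2
      exact iff_of_true hex hx
    · have hex : lnL (e x) := he_ln ⟨x, hx⟩ ▸ (eL _).2
      exact iff_of_false ((hN.lnL_iff_not_ptL _).1 hex) ((hM.lnL_iff_not_ptL x).1 hx)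
  · exact he_pt ⟨x, hx⟩ ▸ he_ln ⟨y, hy⟩ ▸ h ⟨x, hx⟩ ⟨y, hy⟩

section ExistentiallyClosed
variable {n : ℕ}

lemma IsECL.infinite_pts (hM : IsECL (n + 1) 1 M) : Infinite (Pts M) :=
  infinite_of_forall_exists_notMem_finset fun s =>
    let ⟨p, hps, hp⟩ := hM.exists_ptL_notMem (s.map (Embedding.subtype _))
    ⟨⟨p, hp⟩, fun h => hps (Finset.mem_map_of_mem _ h)⟩

lemma IsECL.encard_pointSet (hM : IsECL (n + 1) 1 M) (l : Lns M) : l.pointSet.encard = n := by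
  have himage : Subtype.val '' l.pointSet = pointsOn l.1 := by
    ext x
    exact ⟨fun ⟨p, hp, hpx⟩ => hpx ▸ hp, fun hx => ⟨⟨x, (hM.1.2.2 x l.1 hx).1⟩, hx, rfl⟩⟩
  rw [← Subtype.val_injective.encard_image, himage, hM.encard_pointsOn l.2]

lemma IsECL.infinite_fiber_pointSet (hM : IsECL (n + 1) 1 M) {S : Set (Pts M)}
    (hS : S.encard = n) : Infinite {l : Lns M // l.pointSet = S} := by
  have hSf : S.Finite := finite_of_encard_eq_coe hS
  let S' : Finset M := hSf.toFinset.map (Embedding.subtype _)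
  have hS'card : S'.card = n := by
    rw [Finset.card_map, ← Nat.cast_inj (R := ℕ∞), ← hS, hSf.encard_eq_coe_toFinset_card]
  refine infinite_of_forall_exists_notMem_finset fun s => ?_
  obtain ⟨l, hls, hl, hlS⟩ := hM.exists_lnL_pointsOn_eq (S := S') (by simp +contextual [S'])
    hS'card (s.map ((Embedding.subtype _).trans (Embedding.subtype _)))
  refine ⟨⟨⟨l, hl⟩, ?_⟩, fun h => hls (Finset.mem_map_of_mem _ h)⟩
  ext p
  simpa [S', Subtype.ext_iff, p.2] using congrArg (p.1 ∈ ·) hlS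

theorem IsECL.exists_lnsEquiv [Countable M] [Countable N] (hM : IsECL (n + 1) 1 M)
    (hN : IsECL (n + 1) 1 N) (eP : Pts M ≃ Pts N) :
    ∃ eL : Lns M ≃ Lns N, ∀ l, (eL l).pointSet = eP '' l.pointSet := by
  suffices ∀ S, Nonempty ({l : Lns M // eP '' l.pointSet = S} ≃ {l : Lns N // l.pointSet = S}) by
    exact ⟨Equiv.ofFiberEquiv fun S => (this S).some, Equiv.ofFiberEquiv_map _⟩
  intro S
  by_cases hS : S.encard = n
  · have := hM.infinite_fiber_pointSet (S := eP.symm '' S) (by rwa [eP.symm.injective.encard_image])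
    have : Infinite {l : Lns M // eP '' l.pointSet = S} :=
      Infinite.of_injective (β := {l : Lns M // l.pointSet = eP.symm '' S})
        (fun l => ⟨l.1, by rw [l.2, eP.image_symm_image]⟩)
        fun a b h => Subtype.ext (congrArg (·.1) h)
    have := hN.infinite_fiber_pointSet hS
    exact nonempty_equiv_of_countable
  · have : IsEmpty {l : Lns M // eP '' l.pointSet = S} :=
      ⟨fun l => hS (by rw [← l.2, eP.injective.encard_image, hM.encard_pointSet])⟩
    have : IsEmpty {l : Lns N // l.pointSet = S} := ⟨fun l => hS (l.2 ▸ hN.encard_pointSet l.1)⟩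
    exact ⟨Equiv.equivOfIsEmpty _ _⟩

end ExistentiallyClosed

end Classification

theorem statement_19_general (m : ℕ) (hm : 1 ≤ m)
    {M : Type u} {N : Type v} [IncLang.Structure M] [IncLang.Structure N]
    (hMc : Countable M) (hNc : Countable N)
    (hM : IsECL m 1 M) (hN : IsECL m 1 N) :
    Nonempty (M ≃[IncLang] N) := by
  obtain ⟨n, rfl⟩ : ∃ n, m = n + 1 := ⟨m - 1, by omega⟩
  have := hM.infinite_pts
  have := hN.infinite_pts
  obtain ⟨eP⟩ : Nonempty (Pts M ≃ Pts N) := nonempty_equiv_of_countable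
  obtain ⟨eL, heL⟩ := hM.exists_lnsEquiv hN eP
  refine hM.1.nonempty_equiv_of_pts_lns hN.1 eP eL fun p l => ?_
  rw [← Lns.mem_pointSet, heL, eP.injective.mem_set_image, Lns.mem_pointSet]

/-- Any two countably infinite existentially closed `K_{m,1}`-free incidence
structures are isomorphic. -/
theorem statement_19 (m : ℕ) (hm : 1 ≤ m)
    {M : Type u} {N : Type v} [IncLang.Structure M] [IncLang.Structure N]
    (hMc : Countable M) (hMi : Infinite M) (hNc : Countable N) (hNi : Infinite N)
    (hM : IsECL m 1 M) (hN : IsECL m 1 N) :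
    Nonempty (M ≃[IncLang] N) :=
  statement_19_general m hm hMc hNc hM hN
end
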